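/- arXiv:1207.5699 — 7 statements merged into one kernel-verified Lean document; each statement's English description precedes it below -/
import Mathlib

section
/- Let J be an N×N Hermitian complex matrix (N ≥ 1) of rank N−1. Then J has exactly N−1 negative eigenvalues (counted with multiplicity) if and only if there exists an ordering s_1, …, s_N of the indices {1, …, N} such that for every q = 1, …, N−1 the principal minor D_q = det((J_{s_i s_k})_{1≤i,k≤q}) satisfies (−1)^q · D_q > 0. -/
open scoped Classical

section JacobiAux

open Matrix
open scoped ComplexOrder

private lemma aux_pos_iff (z : ℂ) : 0 < z ↔ 0 < z.re ∧ z.im = 0 := by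
  rw [Complex.lt_def]; simp [eq_comm]

private lemma aux_pos_cancel (a b : ℂ) (ha : 0 < a) (hab : 0 < a * b) : 0 < b := by
  rw [aux_pos_iff] at *
  obtain ⟨h1, h2⟩ := ha
  obtain ⟨h3, h4⟩ := hab
  simp only [Complex.mul_re, Complex.mul_im, h2, zero_mul, mul_zero, sub_zero, zero_add,
    add_zero] at h3 h4
  constructor
  · nlinarith
  · exact (mul_eq_zero.mp h4).resolve_left h1.ne'

private lemma aux_posDef_of_psd_det {n : Type*} [Fintype n] [DecidableEq n] {M : Matrix n n ℂ}
    (hM : M.PosSemidef) (hdet : M.det ≠ 0) : M.PosDef := by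
  refine Matrix.posDef_iff_dotProduct_mulVec.mpr ⟨hM.1, fun x hx => (hM.dotProduct_mulVec_nonneg x).lt_of_ne' fun h => hx ?_⟩
  exact Matrix.eq_zero_of_mulVec_eq_zero hdet ((hM.dotProduct_mulVec_zero_iff x).mp h)

/-- Sylvester's criterion for complex Hermitian matrices. -/
private lemma aux_sylvester : ∀ (n : ℕ) (M : Matrix (Fin n) (Fin n) ℂ), M.IsHermitian →
    (∀ q : ℕ, ∀ h : q ≤ n, 0 < (M.submatrix (Fin.castLE h) (Fin.castLE h)).det) →
    M.PosDef := by
  intro n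
  induction n with
  | zero => intro M hM _; exact ⟨hM, fun x hx => absurd (Subsingleton.elim x 0) hx⟩
  | succ n ih =>
    intro M hM hmin
    set A : Matrix (Fin n) (Fin n) ℂ :=
      M.submatrix (Fin.castLE n.le_succ) (Fin.castLE n.le_succ) with hA
    have hAH : A.IsHermitian := hM.submatrix _
    have hApd : A.PosDef := by
      apply ih _ hAH
      intro q h
      have h2 : q ≤ n + 1 := h.trans n.le_succ
      have : A.submatrix (Fin.castLE h) (Fin.castLE h)
          = M.submatrix (Fin.castLE h2) (Fin.castLE h2) := by
        ext i j; simp [hA, Matrix.submatrix_apply]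
      rw [this]; exact hmin q h2
    set B : Matrix (Fin n) (Fin 1) ℂ :=
      Matrix.of fun i _ => M (Fin.castLE n.le_succ i) (Fin.last n) with hB
    set D : Matrix (Fin 1) (Fin 1) ℂ := Matrix.of fun _ _ => M (Fin.last n) (Fin.last n) with hD
    have hblock : M.submatrix (finSumFinEquiv (m := n) (n := 1)) finSumFinEquiv
        = Matrix.fromBlocks A B Bᴴ D := by
      ext i j
      have hlast : ∀ k : Fin 1, (finSumFinEquiv (m := n) (n := 1)) (Sum.inr k) = Fin.last n := by
        intro k; apply Fin.ext; simp [Fin.ext_iff, Subsingleton.elim k 0]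
      have hcast : ∀ k : Fin n,
          (finSumFinEquiv (m := n) (n := 1)) (Sum.inl k) = Fin.castLE n.le_succ k := by
        intro k; apply Fin.ext; simp
      cases i with
      | inl i => cases j with
        | inl j => simp [hcast, hA]
        | inr j => simp [hcast, hlast, hB]
      | inr i => cases j with
        | inl j =>
          simp only [Matrix.submatrix_apply, hcast, hlast, Matrix.fromBlocks_apply₂₁,
            Matrix.conjTranspose_apply, hB, Matrix.of_apply]
          rw [← hM.apply]
        | inr j => simp [hlast, hD]
    haveI : Invertible A := hApd.isUnit.invertible
    have hdetA : 0 < A.det := hApd.det_pos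
    have hdetM : 0 < M.det := by simpa using hmin (n+1) le_rfl
    have hdetblock : M.det = A.det * (D - Bᴴ * A⁻¹ * B).det := by
      rw [← Matrix.det_submatrix_equiv_self (finSumFinEquiv (m := n) (n := 1)), hblock,
        Matrix.det_fromBlocks₁₁, Matrix.invOf_eq_nonsing_inv]
    set S := D - Bᴴ * A⁻¹ * B with hS
    have hdetS : 0 < S.det := aux_pos_cancel _ _ hdetA (hdetblock ▸ hdetM)
    have hS00 : 0 < S 0 0 := by rwa [Matrix.det_fin_one] at hdetS
    have hSpsd : S.PosSemidef := by
      refine Matrix.posSemidef_iff_dotProduct_mulVec.mpr ⟨?_, ?_⟩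
      · ext i j
        simp only [Matrix.conjTranspose_apply, Subsingleton.elim i 0, Subsingleton.elim j 0]
        rw [aux_pos_iff] at hS00
        rw [Complex.ext_iff]
        simp [hS00.2]
      · intro x
        have : star x ⬝ᵥ S *ᵥ x = S 0 0 * (star (x 0) * x 0) := by
          simp [dotProduct, Matrix.mulVec, Fin.sum_univ_one]
          ring
        rw [this]
        exact mul_nonneg hS00.le (star_mul_self_nonneg (x 0))
    have hMpsd : M.PosSemidef := by
      rw [← Matrix.posSemidef_submatrix_equiv (finSumFinEquiv (m := n) (n := 1)), hblock,
        Matrix.PosDef.fromBlocks₁₁ _ _ hApd]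
      exact hSpsd
    exact aux_posDef_of_psd_det hMpsd hdetM.ne'

/-- Gram-type lemma: principal submatrices of `Bᴴ * B` on linearly independent columns
are positive definite. -/
private lemma aux_gram {N q : ℕ} (B : Matrix (Fin N) (Fin N) ℂ) (f : Fin q → Fin N)
    (hli : LinearIndependent ℂ (fun i => Bᵀ (f i))) :
    ((Bᴴ * B).submatrix f f).PosDef := by
  set C : Matrix (Fin N) (Fin q) ℂ := B.submatrix id f with hC
  have key : (Bᴴ * B).submatrix f f = Cᴴ * C := by
    ext i j
    simp [Matrix.mul_apply, hC, Matrix.conjTranspose_apply]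
  rw [key]
  refine Matrix.posDef_iff_dotProduct_mulVec.mpr ⟨(Matrix.posSemidef_conjTranspose_mul_self C).1, fun x hx => ?_⟩
  have hy : C *ᵥ x ≠ 0 := by
    intro h
    apply hx
    have hsum : ∑ i, x i • (fun k => Bᵀ (f i) k) = (0 : Fin N → ℂ) := by
      rw [← h]
      funext k
      simp [Matrix.mulVec, dotProduct, hC, Finset.sum_apply, mul_comm]
    exact funext fun i => Fintype.linearIndependent_iff.mp hli x hsum i
  have hform : star x ⬝ᵥ (Cᴴ * C) *ᵥ x = star (C *ᵥ x) ⬝ᵥ (C *ᵥ x) := by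
    rw [← Matrix.mulVec_mulVec, Matrix.dotProduct_mulVec, ← star_mulVec]
  rw [hform]
  set y := C *ᵥ x with hyy
  have hsum : star y ⬝ᵥ y = ((∑ k, Complex.normSq (y k) : ℝ) : ℂ) := by
    push_cast
    simp [dotProduct, Complex.normSq_eq_conj_mul_self]
  rw [hsum, aux_pos_iff]
  obtain ⟨k, hk⟩ := Function.ne_iff.mp hy
  constructor
  · simp only [Complex.ofReal_re]
    exact Finset.sum_pos' (fun i _ => Complex.normSq_nonneg _)
      ⟨k, Finset.mem_univ k, Complex.normSq_pos.mpr hk⟩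
  · simp

private lemma aux_rank_neg {n : Type*} [Fintype n] [DecidableEq n] (M : Matrix n n ℂ) :
    (-M).rank = M.rank := by
  have h : (-M).mulVecLin = -M.mulVecLin := by
    ext v
    simp [Matrix.neg_mulVec]
  unfold Matrix.rank
  rw [h, LinearMap.range_neg]

/-- The quadratic form of a Hermitian matrix in terms of its eigenvalues. -/
private lemma aux_quadform {N : ℕ} {J : Matrix (Fin N) (Fin N) ℂ} (hJ : J.IsHermitian)
    (x : Fin N → ℂ) :
    star x ⬝ᵥ J *ᵥ x
      = ∑ i, (hJ.eigenvalues i : ℂ)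
          * ((Complex.normSq (((hJ.eigenvectorUnitary : Matrix (Fin N) (Fin N) ℂ)ᴴ *ᵥ x) i) : ℝ)
            : ℂ) := by
  set U : Matrix (Fin N) (Fin N) ℂ := (hJ.eigenvectorUnitary : Matrix (Fin N) (Fin N) ℂ) with hU
  set y := Uᴴ *ᵥ x with hy
  conv_lhs => rw [hJ.spectral_theorem, Unitary.conjStarAlgAut_apply]
  rw [Matrix.star_eq_conjTranspose, ← Matrix.mulVec_mulVec, ← Matrix.mulVec_mulVec,
    Matrix.dotProduct_mulVec (star x) U]
  have hsy : star x ᵥ* U = star y := by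
    rw [hy, star_mulVec, Matrix.conjTranspose_conjTranspose]
  rw [hsy, ← hy]
  simp only [dotProduct, Matrix.mulVec_diagonal, Pi.star_apply]
  refine Finset.sum_congr rfl fun i _ => ?_
  rw [Complex.normSq_eq_conj_mul_self]
  have hco : (RCLike.ofReal (hJ.eigenvalues i) : ℂ) = ((hJ.eigenvalues i : ℝ) : ℂ) := rfl
  simp only [Function.comp_apply, hco, Complex.star_def]
  ring

private def auxE {N q : ℕ} (f : Fin q → Fin N) : Matrix (Fin N) (Fin q) ℂ :=
  Matrix.of fun k i => if f i = k then 1 else 0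

private lemma auxE_conj {N q : ℕ} (M : Matrix (Fin N) (Fin N) ℂ) (f : Fin q → Fin N) :
    (auxE f)ᴴ * M * (auxE f) = M.submatrix f f := by
  ext i j
  simp only [Matrix.mul_apply, Matrix.conjTranspose_apply, auxE, Matrix.of_apply,
    Matrix.submatrix_apply]
  rw [Finset.sum_eq_single (f j)]
  · rw [Finset.sum_eq_single (f i)] <;> simp +contextual [eq_comm]
  · intro l _ hl
    have : ¬ f j = l := fun h => hl h.symm
    simp [this]
  · simp

private lemma auxE_mulVec {N q : ℕ} (f : Fin q → Fin N) (hf : Function.Injective f)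
    (x' : Fin q → ℂ) (j : Fin q) : ((auxE f) *ᵥ x') (f j) = x' j := by
  simp only [Matrix.mulVec, dotProduct, auxE, Matrix.of_apply]
  rw [Finset.sum_eq_single j] <;> simp +contextual [hf.eq_iff]

private lemma auxE_dot {N q : ℕ} (M : Matrix (Fin N) (Fin N) ℂ) (f : Fin q → Fin N)
    (x' : Fin q → ℂ) :
    star ((auxE f) *ᵥ x') ⬝ᵥ M *ᵥ ((auxE f) *ᵥ x') = star x' ⬝ᵥ (M.submatrix f f) *ᵥ x' := by
  rw [star_mulVec, ← auxE_conj M f, Matrix.mulVec_mulVec, Matrix.dotProduct_mulVec,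
    Matrix.vecMul_vecMul, ← Matrix.dotProduct_mulVec, Matrix.mul_assoc]

private lemma aux_perm {N n : ℕ} (h : n ≤ N) (g : Fin n → Fin N) (hg : Function.Injective g) :
    ∃ σ : Equiv.Perm (Fin N), ∀ i : Fin n, σ (Fin.castLE h i) = g i := by
  have hc : Function.Injective (Fin.castLE h) := Fin.castLE_injective h
  set e : {x : Fin N // x ∈ Set.range (Fin.castLE h)} ≃ {x : Fin N // x ∈ Set.range g} :=
    ((Equiv.ofInjective _ hc).symm.trans (Equiv.ofInjective g hg)) with he
  refine ⟨e.extendSubtype, fun i => ?_⟩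
  rw [Equiv.extendSubtype_apply_of_mem e _ ⟨i, rfl⟩]
  simp [he, Equiv.ofInjective_symm_apply]

/-- Number of nonzero eigenvalues equals the rank. -/
private lemma aux_count {N : ℕ} {J : Matrix (Fin N) (Fin N) ℂ} (hJ : J.IsHermitian) :
    (Finset.univ.filter fun i => hJ.eigenvalues i ≠ 0).card = J.rank := by
  rw [hJ.rank_eq_card_non_zero_eigs, Fintype.card_subtype]

end JacobiAux

section JacobiMain

open Matrix
open scoped ComplexOrder

private lemma aux_neg_psd {N : ℕ} {J : Matrix (Fin N) (Fin N) ℂ} (hJ : J.IsHermitian)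
    (hle : ∀ i, hJ.eigenvalues i ≤ 0) : (-J).PosSemidef := by
  refine Matrix.posSemidef_iff_dotProduct_mulVec.mpr ⟨hJ.neg, fun x => ?_⟩
  have h1 : star x ⬝ᵥ (-J) *ᵥ x
      = ((∑ i, (-(hJ.eigenvalues i))
          * Complex.normSq (((hJ.eigenvectorUnitary : Matrix (Fin N) (Fin N) ℂ)ᴴ *ᵥ x) i) : ℝ)
        : ℂ) := by
    rw [Matrix.neg_mulVec, dotProduct_neg, aux_quadform hJ x]
    push_cast
    rw [← Finset.sum_neg_distrib]
    exact Finset.sum_congr rfl fun i _ => by ring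
  rw [h1]
  rw [Complex.zero_le_real]
  exact Finset.sum_nonneg fun i _ =>
    mul_nonneg (neg_nonneg.2 (hle i)) (Complex.normSq_nonneg _)

/-- All eigenvalues nonpositive: forward construction of the ordering. -/
private lemma aux_forward {N : ℕ} {J : Matrix (Fin N) (Fin N) ℂ} (hJ : J.IsHermitian)
    (hrank : J.rank = N - 1) (hle : ∀ i, hJ.eigenvalues i ≤ 0) :
    ∃ s : Equiv.Perm (Fin N), ∀ q : ℕ, 1 ≤ q → ∀ hq : q ≤ N - 1,
      let D : ℂ := (J.submatrix (fun i : Fin q => s (Fin.castLE (le_trans hq (N.sub_le 1)) i))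
        (fun i : Fin q => s (Fin.castLE (le_trans hq (N.sub_le 1)) i))).det
      0 < ((-1 : ℂ) ^ q * D).re ∧ ((-1 : ℂ) ^ q * D).im = 0 := by
  have hKpsd : (-J).PosSemidef := aux_neg_psd hJ hle
  obtain ⟨B, hB⟩ : ∃ B : Matrix (Fin N) (Fin N) ℂ, -J = Bᴴ * B := by
    open scoped MatrixOrder in
    exact CStarAlgebra.nonneg_iff_eq_star_mul_self.mp hKpsd.nonneg
  have hrkB : B.rank = N - 1 := by
    rw [← Matrix.rank_conjTranspose_mul_self, ← hB, aux_rank_neg, hrank]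
  have hspan : Module.finrank ℂ (Submodule.span ℂ (Set.range Bᵀ)) = N - 1 := by
    rw [← hrkB, Matrix.rank_eq_finrank_span_cols]
    rfl
  obtain ⟨b, hbsub, hbspan, hbind⟩ := exists_linearIndependent ℂ (Set.range Bᵀ)
  have hbfin : b.Finite := hbind.finite
  haveI : Fintype b := hbfin.fintype
  have hcardb : Fintype.card b = N - 1 := by
    have := finrank_span_set_eq_card hbind
    rw [hbspan, hspan] at this
    rw [← Set.toFinset_card]
    exact this.symm
  have hgex : ∀ v : b, ∃ j : Fin N, Bᵀ j = (v : Fin N → ℂ) := fun v => hbsub v.2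
  choose g0 hg0 using hgex
  set eqv : Fin (N - 1) ≃ b := (Fintype.equivFinOfCardEq hcardb).symm with heqv
  set g : Fin (N - 1) → Fin N := fun i => g0 (eqv i) with hg
  have hgB : ∀ i, Bᵀ (g i) = ((eqv i : b) : Fin N → ℂ) := fun i => hg0 (eqv i)
  have hli : LinearIndependent ℂ (fun i => Bᵀ (g i)) := by
    have : (fun i => Bᵀ (g i)) = (fun v : b => (v : Fin N → ℂ)) ∘ eqv := funext fun i => hgB i
    rw [this]
    exact hbind.comp eqv eqv.injective
  have hginj : Function.Injective g := by
    intro i i' hii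
    have : Bᵀ (g i) = Bᵀ (g i') := by rw [hii]
    rw [hgB, hgB] at this
    exact eqv.injective (Subtype.val_injective this)
  obtain ⟨σ, hσ⟩ := aux_perm (N.sub_le 1) g hginj
  refine ⟨σ, fun q hq1 hq => ?_⟩
  intro D
  have hfs : (fun i : Fin q => σ (Fin.castLE (le_trans hq (N.sub_le 1)) i))
      = fun i : Fin q => g (Fin.castLE hq i) := by
    funext i
    exact hσ (Fin.castLE hq i)
  have hDval : (-1 : ℂ) ^ q * D
      = (((-J)).submatrix (fun i : Fin q => g (Fin.castLE hq i))
          (fun i : Fin q => g (Fin.castLE hq i))).det := by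
    have hsub : ((-J)).submatrix (fun i : Fin q => g (Fin.castLE hq i))
        (fun i : Fin q => g (Fin.castLE hq i))
        = -(J.submatrix (fun i : Fin q => g (Fin.castLE hq i))
            (fun i : Fin q => g (Fin.castLE hq i))) := rfl
    rw [hsub, Matrix.det_neg, Fintype.card_fin]
    show (-1 : ℂ) ^ q * D = _
    unfold D
    rw [hfs]
  have hpd : ((Bᴴ * B).submatrix (fun i : Fin q => g (Fin.castLE hq i))
      (fun i : Fin q => g (Fin.castLE hq i))).PosDef := by
    apply aux_gram
    have : (fun i : Fin q => Bᵀ (g (Fin.castLE hq i)))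
        = (fun i => Bᵀ (g i)) ∘ (Fin.castLE hq) := rfl
    rw [this]
    exact hli.comp _ (Fin.castLE_injective hq)
  have hdet : 0 < ((-1 : ℂ) ^ q * D) := by
    rw [hDval, hB]
    exact hpd.det_pos
  rw [aux_pos_iff] at hdet
  exact hdet

/-- Backward direction: the ordering forces all eigenvalues nonpositive. -/
private lemma aux_backward {N : ℕ} {J : Matrix (Fin N) (Fin N) ℂ} (hJ : J.IsHermitian)
    (hrank : J.rank = N - 1) (σ : Equiv.Perm (Fin N))
    (hσ : ∀ q : ℕ, 1 ≤ q → ∀ hq : q ≤ N - 1,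
      let D : ℂ := (J.submatrix (fun i : Fin q => σ (Fin.castLE (le_trans hq (N.sub_le 1)) i))
        (fun i : Fin q => σ (Fin.castLE (le_trans hq (N.sub_le 1)) i))).det
      0 < ((-1 : ℂ) ^ q * D).re ∧ ((-1 : ℂ) ^ q * D).im = 0) :
    ∀ i, hJ.eigenvalues i ≤ 0 := by
  intro i0
  by_contra hpos0
  push_neg at hpos0
  set n := N - 1 with hn
  have hnN : n ≤ N := N.sub_le 1
  set f : Fin n → Fin N := fun i => σ (Fin.castLE hnN i) with hf
  have hfinj : Function.Injective f :=
    σ.injective.comp (Fin.castLE_injective hnN)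
  -- the (N-1) × (N-1) principal submatrix of -J is positive definite by Sylvester
  have hApd : ((-J).submatrix f f).PosDef := by
    apply aux_sylvester n _ ((hJ.neg).submatrix f)
    intro q hq
    rcases Nat.eq_zero_or_pos q with hq0 | hq1
    · subst hq0
      have : (((-J).submatrix f f).submatrix (Fin.castLE hq) (Fin.castLE hq)).det = 1 :=
        Matrix.det_fin_zero
      rw [this]
      exact zero_lt_one
    · have hcond := hσ q hq1 hq
      set u : Fin q → Fin N := fun i : Fin q => σ (Fin.castLE (le_trans hq (N.sub_le 1)) i)
        with hu
      have hsub : ((-J).submatrix f f).submatrix (Fin.castLE hq) (Fin.castLE hq)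
          = -(J.submatrix u u) := rfl
      rw [hsub, Matrix.det_neg, Fintype.card_fin, aux_pos_iff]
      exact hcond
  -- counting eigenvalues
  have hcount : (Finset.univ.filter fun i => hJ.eigenvalues i ≠ 0).card = n := by
    rw [aux_count hJ, hrank]
  have hsubset : (Finset.univ.filter fun i => hJ.eigenvalues i < 0)
      ⊂ (Finset.univ.filter fun i => hJ.eigenvalues i ≠ 0) := by
    constructor
    · intro i hi
      simp only [Finset.mem_filter, Finset.mem_univ, true_and] at hi ⊢
      exact hi.ne
    · intro hcontra
      have hi0 : i0 ∈ (Finset.univ.filter fun i => hJ.eigenvalues i ≠ 0) := by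
        simp only [Finset.mem_filter, Finset.mem_univ, true_and]
        exact hpos0.ne'
      have := hcontra hi0
      simp only [Finset.mem_filter, Finset.mem_univ, true_and] at this
      exact absurd this (asymm hpos0)
  have hcardNeg : Fintype.card {i : Fin N // hJ.eigenvalues i < 0} < n := by
    rw [Fintype.card_subtype]
    calc (Finset.univ.filter fun i => hJ.eigenvalues i < 0).card
        < (Finset.univ.filter fun i => hJ.eigenvalues i ≠ 0).card :=
          Finset.card_lt_card hsubset
      _ = n := hcount
  -- find a vector supported on the chosen indices, orthogonal to negative eigenvectors
  set U : Matrix (Fin N) (Fin N) ℂ := (hJ.eigenvectorUnitary : Matrix (Fin N) (Fin N) ℂ) with hU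
  set G : Matrix {i : Fin N // hJ.eigenvalues i < 0} (Fin n) ℂ :=
    (Uᴴ * auxE f).submatrix Subtype.val id with hG
  have hnotinj : ¬ Function.Injective G.mulVecLin := by
    intro hinj
    have := LinearMap.finrank_le_finrank_of_injective hinj
    simp only [Module.finrank_pi, Fintype.card_fin] at this
    omega
  have hker : LinearMap.ker G.mulVecLin ≠ ⊥ := by
    intro h
    exact hnotinj (LinearMap.ker_eq_bot.mp h)
  obtain ⟨x', hx'mem, hx'ne⟩ := Submodule.exists_mem_ne_zero_of_ne_bot hker
  have hGx' : G *ᵥ x' = 0 := hx'mem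
  set x : Fin N → ℂ := (auxE f) *ᵥ x' with hx
  -- first evaluation: positive
  have heval1 : 0 < star x ⬝ᵥ (-J) *ᵥ x := by
    rw [hx, auxE_dot]
    exact hApd.dotProduct_mulVec_pos hx'ne
  -- second evaluation: nonpositive
  set y := Uᴴ *ᵥ x with hy
  have hyzero : ∀ i, hJ.eigenvalues i < 0 → y i = 0 := by
    intro i hi
    have : (G *ᵥ x') ⟨i, hi⟩ = 0 := by rw [hGx']; rfl
    rw [← this]
    rw [hy, hx, Matrix.mulVec_mulVec]
    simp [hG, Matrix.mulVec, dotProduct, Matrix.submatrix_apply]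
  have heval2 : star x ⬝ᵥ (-J) *ᵥ x
      = ((∑ i, (-(hJ.eigenvalues i)) * Complex.normSq (y i) : ℝ) : ℂ) := by
    rw [Matrix.neg_mulVec, dotProduct_neg, aux_quadform hJ x]
    push_cast
    rw [← Finset.sum_neg_distrib]
    exact Finset.sum_congr rfl fun i _ => by ring
  rw [heval2, aux_pos_iff] at heval1
  have hsumle : (∑ i, (-(hJ.eigenvalues i)) * Complex.normSq (y i) : ℝ) ≤ 0 := by
    apply Finset.sum_nonpos
    intro i _
    rcases lt_or_ge (hJ.eigenvalues i) 0 with hi | hi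
    · rw [hyzero i hi]
      simp
    · exact mul_nonpos_of_nonpos_of_nonneg (by linarith) (Complex.normSq_nonneg _)
  have := heval1.1
  simp only [Complex.ofReal_re] at this
  linarith

end JacobiMain

/-- **Jacobi's signature criterion for Hermitian matrices of rank `N - 1`.**
A Hermitian `N × N` matrix `J` (`N ≥ 1`) of rank `N - 1` has exactly `N - 1` negative
eigenvalues (with multiplicity) iff there is an ordering `s` of the indices such that for
every `q = 1, …, N - 1` the leading principal minor `D_q` of order `q` (with respect to
that ordering) satisfies `(-1)^q · D_q > 0` (i.e. it is a positive real number). -/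
theorem jacobi_signature_criterion (N : ℕ) (hN : 1 ≤ N)
    (J : Matrix (Fin N) (Fin N) ℂ) (hJ : J.IsHermitian) (hrank : J.rank = N - 1) :
    (Finset.univ.filter fun i => hJ.eigenvalues i < 0).card = N - 1 ↔
      ∃ s : Equiv.Perm (Fin N), ∀ q : ℕ, 1 ≤ q → ∀ hq : q ≤ N - 1,
        let D : ℂ := (J.submatrix (fun i : Fin q => s (Fin.castLE (by omega) i))
          (fun i : Fin q => s (Fin.castLE (by omega) i))).det
        0 < ((-1 : ℂ) ^ q * D).re ∧ ((-1 : ℂ) ^ q * D).im = 0 := by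
  have hcount : (Finset.univ.filter fun i => hJ.eigenvalues i ≠ 0).card = N - 1 := by
    rw [aux_count hJ, hrank]
  constructor
  · intro hcard
    have hle : ∀ i, hJ.eigenvalues i ≤ 0 := by
      have hsub : (Finset.univ.filter fun i => hJ.eigenvalues i < 0)
          ⊆ (Finset.univ.filter fun i => hJ.eigenvalues i ≠ 0) := by
        intro i hi
        simp only [Finset.mem_filter, Finset.mem_univ, true_and] at hi ⊢
        exact hi.ne
      have heq : (Finset.univ.filter fun i => hJ.eigenvalues i < 0)
          = (Finset.univ.filter fun i => hJ.eigenvalues i ≠ 0) :=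
        Finset.eq_of_subset_of_card_le hsub (by rw [hcard, hcount])
      intro i
      by_contra hi
      push_neg at hi
      have hine : i ∈ (Finset.univ.filter fun i => hJ.eigenvalues i ≠ 0) := by
        simp only [Finset.mem_filter, Finset.mem_univ, true_and]
        exact hi.ne'
      rw [← heq] at hine
      simp only [Finset.mem_filter, Finset.mem_univ, true_and] at hine
      exact absurd hine (asymm hi)
    exact aux_forward hJ hrank hle
  · rintro ⟨σ, hσ⟩
    have hle : ∀ i, hJ.eigenvalues i ≤ 0 := aux_backward hJ hrank σ hσ
    have heq : (Finset.univ.filter fun i => hJ.eigenvalues i < 0)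
        = (Finset.univ.filter fun i => hJ.eigenvalues i ≠ 0) := by
      apply Finset.filter_congr
      intro i _
      exact ⟨fun h => h.ne, fun h => (hle i).lt_of_ne h⟩
    rw [heq, hcount]
end

section
/- Let J be an N×N Hermitian complex negative semidefinite matrix whose kernel is the one-dimensional span of a vector u ∈ ℂ^N with u_i ≠ 0 for every i. Then for every nonempty proper subset S of {1, …, N}, the principal submatrix J[S] = (J_{ik})_{i,k∈S} is negative definite; in particular (−1)^{|S|} · det J[S] > 0. -/
open scoped Classical ComplexOrder
open Matrix

/-- If `J` is Hermitian, negative semidefinite, and its kernel is the span of a vector `u`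
with all coordinates nonzero, then every proper nonempty principal submatrix `J[S]` is
negative definite; in particular `(-1)^{|S|} · det J[S] > 0`. -/
theorem principal_submatrices_negDef (N : ℕ) (J : Matrix (Fin N) (Fin N) ℂ)
    (hJ : J.IsHermitian) (hnsd : (-J).PosSemidef)
    (u : Fin N → ℂ) (hu : ∀ i, u i ≠ 0)
    (hker : LinearMap.ker J.mulVecLin = Submodule.span ℂ {u}) :
    ∀ S : Finset (Fin N), S.Nonempty → S ≠ Finset.univ →
      (-(J.submatrix (fun i : ↥S => (i : Fin N)) (fun i : ↥S => (i : Fin N)))).PosDef ∧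
      (0 < ((-1 : ℂ) ^ S.card *
          (J.submatrix (fun i : ↥S => (i : Fin N)) (fun i : ↥S => (i : Fin N))).det).re ∧
        ((-1 : ℂ) ^ S.card *
          (J.submatrix (fun i : ↥S => (i : Fin N)) (fun i : ↥S => (i : Fin N))).det).im = 0) := by
  intro S hS hSne
  set f : ↥S → Fin N := fun i => (i : Fin N) with hf
  set M : Matrix ↥S ↥S ℂ := (-J).submatrix f f with hM
  have hMpsd : M.PosSemidef := hnsd.submatrix f
  have hMeq : M = -(J.submatrix f f) := by
    ext i k; simp [hM, Matrix.submatrix_apply]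
  -- key: M is positive definite
  have hMpd : M.PosDef := by
    refine ⟨hMpsd.1, fun x hx => ?_⟩
    rcases lt_or_eq_of_le (hMpsd.2 x) with h | h
    · exact h
    exfalso
    -- extend x by zero
    set y : Fin N → ℂ := fun i => if h : i ∈ S then x ⟨i, h⟩ else 0 with hy
    have hyS : ∀ i : ↥S, y (i : Fin N) = x i := by
      intro i; simp [hy, i.2]
    have hy0 : ∀ i : Fin N, i ∉ S → y i = 0 := by
      intro i hi; simp [hy, hi]
    have hsum : star y ⬝ᵥ (-J) *ᵥ y = star x ⬝ᵥ M *ᵥ x := by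
      have inner : ∀ i : Fin N, ((-J) *ᵥ y) i = ∑ k ∈ S, (-J) i k * y k := by
        intro i
        rw [Matrix.mulVec, dotProduct]
        rw [← Finset.sum_subset (Finset.subset_univ S)
          (fun k _ hk => by rw [hy0 k hk, mul_zero])]
      rw [dotProduct]
      rw [← Finset.sum_subset (Finset.subset_univ S)
        (fun i _ hi => by rw [Pi.star_apply, hy0 i hi, star_zero, zero_mul])]
      rw [← Finset.sum_coe_sort S]
      rw [dotProduct]
      refine Finset.sum_congr rfl fun i _ => ?_
      rw [Pi.star_apply, Pi.star_apply, hyS, inner, ← Finset.sum_coe_sort S,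
        Matrix.mulVec, dotProduct]
      congr 1
      refine Finset.sum_congr rfl fun k _ => ?_
      rw [hyS]
      rfl
    have hzero : (-J) *ᵥ y = 0 := by
      rw [← hnsd.dotProduct_mulVec_zero_iff y, hsum]
      convert h.symm using 1
      simp [dotProduct, mulVec, Finsupp.sum_fintype, Finset.mul_sum, mul_assoc]
    have hJy : J *ᵥ y = 0 := by
      have := hzero
      rw [Matrix.neg_mulVec, neg_eq_zero] at this
      exact this
    have hmem : y ∈ Submodule.span ℂ {u} := by
      rw [← hker]
      simpa [Matrix.mulVecLin] using hJy
    obtain ⟨c, hc⟩ := Submodule.mem_span_singleton.mp hmem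
    obtain ⟨j, hj⟩ : ∃ j : Fin N, j ∉ S := by
      by_contra hcon
      push_neg at hcon
      exact hSne (Finset.eq_univ_iff_forall.mpr hcon)
    have hcj : c * u j = 0 := by
      have := congrFun hc j
      simp only [Pi.smul_apply, smul_eq_mul] at this
      rw [this, hy0 j hj]
    have hc0 : c = 0 := by
      rcases mul_eq_zero.mp hcj with h' | h'
      · exact h'
      · exact absurd h' (hu j)
    apply hx
    ext i
    have := congrFun hc i
    simp only [Pi.smul_apply, smul_eq_mul, hc0, zero_mul] at this
    rw [← hyS i, ← this]
    simp
  have hMpd' : (-(J.submatrix f f)).PosDef := hMeq ▸ hMpd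
  refine ⟨hMpd', ?_⟩
  have hdet : 0 < (-(J.submatrix f f)).det := hMpd'.det_pos
  have hdeteq : (-(J.submatrix f f)).det = (-1 : ℂ) ^ S.card * (J.submatrix f f).det := by
    rw [Matrix.det_neg, Fintype.card_coe]
  rw [hdeteq] at hdet
  rw [Complex.lt_def] at hdet
  refine ⟨by simpa using hdet.1, by simpa using hdet.2.symm⟩
end

section
/- Let J be an N×N real symmetric matrix with zero row sums. Then for every nonempty proper subset S of {1, …, N}, det J[S] = (−1)^{|S|} · Φ_S, where J[S] = (J_{ik})_{i,k∈S} is the principal submatrix of J with rows and columns indexed by S. -/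
open scoped Classical

/-- The weight assigned to an unordered pair `e = {i,j}`: `J (min i j) (max i j)`.
For symmetric `J` this is the common value `J i j = J j i`. -/
noncomputable def edgeWeight {N : ℕ} (J : Matrix (Fin N) (Fin N) ℝ) (e : Sym2 (Fin N)) : ℝ :=
  J e.inf e.sup

/-- `F` is a spanning forest (on all of `Fin N`, isolated vertices allowed) each of whose
connected components contains exactly one vertex not in `S`. -/
def IsPhiForest {N : ℕ} (S : Finset (Fin N)) (F : Finset (Sym2 (Fin N))) : Prop :=
  (∀ e ∈ F, ¬ e.IsDiag) ∧
  (SimpleGraph.fromEdgeSet (↑F : Set (Sym2 (Fin N)))).IsAcyclic ∧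
  ∀ c : (SimpleGraph.fromEdgeSet (↑F : Set (Sym2 (Fin N)))).ConnectedComponent,
    ∃! v : Fin N, v ∈ c.supp ∧ v ∉ S

/-- `Φ_S`: the sum over all spanning forests `F` each of whose components contains exactly
one vertex not in `S`, of the product of the weights `J_{ij}` of the edges of `F`. -/
noncomputable def Phi {N : ℕ} (J : Matrix (Fin N) (Fin N) ℝ) (S : Finset (Fin N)) : ℝ :=
  ∑ F ∈ Finset.univ.filter (fun F : Finset (Sym2 (Fin N)) => IsPhiForest S F),
    ∏ e ∈ F, edgeWeight J e

noncomputable def binc {N : ℕ} (v : Fin N) (e : Sym2 (Fin N)) : ℝ :=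
  (if v = e.inf then 1 else 0) - (if v = e.sup then 1 else 0)

lemma Sym2.mk_inf_sup {α} [LinearOrder α] (e : Sym2 α) : s(e.inf, e.sup) = e := by
  induction e using Sym2.ind with
  | _ x y =>
    rcases le_total x y with h | h
    · simp [min_eq_left h, max_eq_right h]
    · simp [min_eq_right h, max_eq_left h, Sym2.eq_swap]

lemma binc_of_not_mem {N : ℕ} {v : Fin N} {e : Sym2 (Fin N)} (h : v ≠ e.inf) (h' : v ≠ e.sup) :
    binc v e = 0 := by simp [binc, h, h']

lemma binc_diag {N : ℕ} (v : Fin N) {e : Sym2 (Fin N)} (h : e.IsDiag) : binc v e = 0 := by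
  induction e using Sym2.ind with
  | _ x y =>
    rw [Sym2.mk_isDiag_iff] at h
    subst h
    simp [binc]

lemma Lentry {N : ℕ} (J : Matrix (Fin N) (Fin N) ℝ) (hsym : J.IsSymm)
    (hrow : ∀ i, ∑ j, J i j = 0) (i k : Fin N) :
    ∑ e : Sym2 (Fin N), edgeWeight J e * (binc i e * binc k e) = -(J i k) := by
  by_cases hik : i = k
  · subst hik
    have hsub : ∑ e : Sym2 (Fin N), edgeWeight J e * (binc i e * binc i e)
        = ∑ e ∈ Finset.univ.image (fun j : Fin N => s(i, j)),
            edgeWeight J e * (binc i e * binc i e) := by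
      refine (Finset.sum_subset (Finset.subset_univ _) ?_).symm
      intro e _ he
      have hne : i ≠ e.inf ∧ i ≠ e.sup := by
        constructor <;> intro hh
        · exact he (Finset.mem_image.2 ⟨e.sup, Finset.mem_univ _, by rw [hh, Sym2.mk_inf_sup]⟩)
        · exact he (Finset.mem_image.2 ⟨e.inf, Finset.mem_univ _, by
            rw [hh, Sym2.eq_swap, Sym2.mk_inf_sup]⟩)
      rw [binc_of_not_mem hne.1 hne.2]
      ring
    rw [hsub, Finset.sum_image (by
      intro a _ b _ hab
      exact Sym2.congr_right.mp hab)]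
    have hterm : ∀ j : Fin N, edgeWeight J s(i, j) * (binc i s(i, j) * binc i s(i, j))
        = J i j - (if j = i then J i j else 0) := by
      intro j
      by_cases hj : j = i
      · subst hj
        simp [binc, edgeWeight]
      · have : binc i s(i, j) * binc i s(i, j) = 1 := by
          rcases le_total i j with h | h
          · have h' : i < j := lt_of_le_of_ne h (Ne.symm hj)
            simp [binc, min_eq_left h, max_eq_right h, h'.ne, hj]
          · have h' : j < i := lt_of_le_of_ne h hj
            simp [binc, min_eq_right h, max_eq_left h, h'.ne']
        rw [this, mul_one]
        have hw : edgeWeight J s(i, j) = J i j := by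
          rcases le_total i j with h | h
          · simp [edgeWeight, min_eq_left h, max_eq_right h]
          · simp [edgeWeight, min_eq_right h, max_eq_left h,
              hsym.apply i j]
        simp [hw, hj]
    rw [Finset.sum_congr rfl (fun j _ => hterm j), Finset.sum_sub_distrib, hrow i,
      Finset.sum_ite_eq' Finset.univ i (fun j => J i j)]
    simp
  · refine Finset.sum_eq_single s(i, k) ?_ (by simp)  |>.trans ?_
    · intro e _ hne
      by_cases h1 : i = e.inf ∨ i = e.sup
      · by_cases h2 : k = e.inf ∨ k = e.sup
        · exfalso
          apply hne
          rcases h1 with h1 | h1 <;> rcases h2 with h2 | h2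
          · exact absurd (h1.trans h2.symm) hik
          · rw [h1, h2, Sym2.mk_inf_sup]
          · rw [h1, h2, Sym2.eq_swap, Sym2.mk_inf_sup]
          · exact absurd (h1.trans h2.symm) hik
        · push_neg at h2
          rw [binc_of_not_mem h2.1 h2.2]
          ring
      · push_neg at h1
        rw [binc_of_not_mem h1.1 h1.2]
        ring
    · rcases lt_or_gt_of_ne hik with h | h
      · have hw : edgeWeight J s(i, k) = J i k := by
          simp [edgeWeight, min_eq_left h.le, max_eq_right h.le]
        have hb : binc i s(i, k) = 1 := by
          simp [binc, min_eq_left h.le, max_eq_right h.le, h.ne]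
        have hb' : binc k s(i, k) = -1 := by
          simp [binc, min_eq_left h.le, max_eq_right h.le, h.ne']
        rw [hw, hb, hb']; ring
      · have hw : edgeWeight J s(i, k) = J i k := by
          simp [edgeWeight, min_eq_right h.le, max_eq_left h.le,
            hsym.apply i k]
        have hb : binc i s(i, k) = -1 := by
          simp [binc, min_eq_right h.le, max_eq_left h.le, h.ne']
        have hb' : binc k s(i, k) = 1 := by
          simp [binc, min_eq_right h.le, max_eq_left h.le, h.ne]
        rw [hw, hb, hb']; ring

open SimpleGraph in
noncomputable def dartSign {N : ℕ} {G : SimpleGraph (Fin N)} (d : G.Dart) : ℝ :=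
  if d.fst ≤ d.snd then 1 else -1

open SimpleGraph in
lemma dart_vec {N : ℕ} {G : SimpleGraph (Fin N)} (d : G.Dart) (x : Fin N) :
    (if x = d.fst then (1:ℝ) else 0) - (if x = d.snd then 1 else 0)
      = dartSign d * binc x d.edge := by
  obtain ⟨⟨a, b⟩, hadj⟩ := d
  have hne : a ≠ b := hadj.ne
  rcases le_or_gt a b with h | h
  · rw [dartSign, if_pos h, one_mul, binc]
    show _ = (if x = s(a,b).inf then (1:ℝ) else 0) - (if x = s(a,b).sup then 1 else 0)
    simp [min_eq_left h, max_eq_right h]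
  · rw [dartSign, if_neg (not_le.mpr h), binc]
    show _ = -1 * ((if x = s(a,b).inf then (1:ℝ) else 0) - (if x = s(a,b).sup then 1 else 0))
    simp only [Sym2.inf_mk, Sym2.sup_mk, min_eq_right h.le,
      max_eq_left h.le]
    ring

open SimpleGraph in
lemma walk_dart_sum {N : ℕ} {G : SimpleGraph (Fin N)} {u v : Fin N} (p : G.Walk u v)
    (x : Fin N) :
    (p.darts.map (fun d => dartSign d * binc x d.edge)).sum
      = (if x = u then (1:ℝ) else 0) - (if x = v then 1 else 0) := by
  induction p with
  | nil => simp
  | cons h q ih =>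
    rw [SimpleGraph.Walk.darts_cons, List.map_cons, List.sum_cons, ih, ← dart_vec]
    ring

/-- Coefficient of an edge in the signed indicator vector of a walk. -/
noncomputable def walkCoeff {N : ℕ} {G : SimpleGraph (Fin N)} {u v : Fin N}
    (p : G.Walk u v) (e : Sym2 (Fin N)) : ℝ :=
  (p.darts.map (fun d => if d.edge = e then dartSign d else 0)).sum

open SimpleGraph in
lemma walkCoeff_sum {N : ℕ} {G : SimpleGraph (Fin N)} {F : Finset (Sym2 (Fin N))}
    (hG : G.edgeSet ⊆ (↑F : Set (Sym2 (Fin N)))) {u v : Fin N} (p : G.Walk u v) (x : Fin N) :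
    ∑ e ∈ F, walkCoeff p e * binc x e
      = (if x = u then (1:ℝ) else 0) - (if x = v then 1 else 0) := by
  rw [← walk_dart_sum p x]
  unfold walkCoeff
  induction p with
  | nil => simp
  | cons h q ih =>
    rw [SimpleGraph.Walk.darts_cons]
    simp only [List.map_cons, List.sum_cons]
    have : ∀ e ∈ F,
        ((if (SimpleGraph.Dart.mk (_, _) h).edge = e then dartSign (SimpleGraph.Dart.mk (_, _) h) else 0)
          + (q.darts.map (fun d => if d.edge = e then dartSign d else 0)).sum) * binc x e
        = (if (SimpleGraph.Dart.mk (_, _) h).edge = e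
            then dartSign (SimpleGraph.Dart.mk (_, _) h) * binc x e else 0)
          + (q.darts.map (fun d => if d.edge = e then dartSign d else 0)).sum * binc x e := by
      intro e _
      by_cases hde : (SimpleGraph.Dart.mk (_, _) h).edge = e <;> simp only [hde, ↓reduceIte, add_mul, zero_mul]
    rw [Finset.sum_congr rfl this, Finset.sum_add_distrib, ih]
    congr 1
    rw [Finset.sum_ite_eq F _ (fun e => dartSign (SimpleGraph.Dart.mk (_, _) h) * binc x e)]
    have hmem : (SimpleGraph.Dart.mk (_, _) h).edge ∈ F := hG (SimpleGraph.Dart.edge_mem _)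
    rw [if_pos hmem]

lemma ne_inf_sup_of_not_isDiag {N : ℕ} {e : Sym2 (Fin N)} (h : ¬ e.IsDiag) :
    e.inf ≠ e.sup := by
  intro hh
  apply h
  rw [← Sym2.mk_inf_sup e, hh]
  exact Sym2.mk_isDiag_iff.mpr rfl

lemma binc_inf {N : ℕ} {e : Sym2 (Fin N)} (h : ¬ e.IsDiag) : binc e.inf e = 1 := by
  simp [binc, (ne_inf_sup_of_not_isDiag h)]

lemma binc_sup {N : ℕ} {e : Sym2 (Fin N)} (h : ¬ e.IsDiag) : binc e.sup e = -1 := by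
  simp [binc, (ne_inf_sup_of_not_isDiag h).symm]

open SimpleGraph in
lemma det_eq_zero_of_walk {N : ℕ} {S : Finset (Fin N)} {F : Finset (Sym2 (Fin N))}
    (ψ : ↥S ≃ ↥F) {u v : Fin N}
    (p : (SimpleGraph.fromEdgeSet (↑F : Set (Sym2 (Fin N)))).Walk u v)
    (hnodup : p.edges.Nodup) (hnil : ¬ p.Nil)
    (hS : ∀ k : Fin N, k ∈ S → ((if k = u then (1:ℝ) else 0) - (if k = v then 1 else 0)) = 0) :
    (Matrix.of fun (i k : ↥S) => binc (↑k) (↑(ψ i) : Sym2 (Fin N))).det = 0 := by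
  set G := SimpleGraph.fromEdgeSet (↑F : Set (Sym2 (Fin N))) with hGdef
  have hG : G.edgeSet ⊆ (↑F : Set (Sym2 (Fin N))) := by
    rw [hGdef, SimpleGraph.edgeSet_fromEdgeSet]
    exact Set.diff_subset
  rw [SimpleGraph.Walk.not_nil_iff] at hnil
  obtain ⟨w, hadj, q, rfl⟩ := hnil
  set p := SimpleGraph.Walk.cons hadj q with hpdef
  set x : ↥S → ℝ := fun i => walkCoeff p (↑(ψ i) : Sym2 (Fin N)) with hxdef
  have hvm : ∀ k : ↥S, ∑ i : ↥S, x i * binc (↑k) (↑(ψ i) : Sym2 (Fin N)) = 0 := by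
    intro k
    have h1 : ∑ i : ↥S, walkCoeff p (↑(ψ i) : Sym2 (Fin N)) * binc (↑k : Fin N) (↑(ψ i) : Sym2 (Fin N))
        = ∑ e : ↥F, walkCoeff p (↑e : Sym2 (Fin N)) * binc (↑k : Fin N) (↑e : Sym2 (Fin N)) :=
      Equiv.sum_comp ψ (fun e : ↥F => walkCoeff p (↑e : Sym2 (Fin N)) * binc (↑k : Fin N) (↑e : Sym2 (Fin N)))
    rw [hxdef]
    rw [h1, Finset.sum_coe_sort F (fun e => walkCoeff p e * binc (↑k) e),
      walkCoeff_sum hG p ↑k, hS ↑k k.2]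
  -- nonzero coordinate
  set d0 : G.Dart := SimpleGraph.Dart.mk (u, w) hadj with hd0
  have hmemF : d0.edge ∈ F := hG d0.edge_mem
  set i0 : ↥S := ψ.symm ⟨d0.edge, hmemF⟩ with hi0
  have hx : x i0 = dartSign d0 := by
    rw [hxdef]
    simp only [hi0, Equiv.apply_symm_apply]
    show walkCoeff p d0.edge = dartSign d0
    rw [hpdef, walkCoeff, SimpleGraph.Walk.darts_cons, List.map_cons, List.sum_cons, if_pos rfl]
    have hne : ∀ d ∈ q.darts, d.edge ≠ d0.edge := by
      intro d hd hde
      have hmem : d0.edge ∉ q.edges := by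
        have h2 := hnodup
        rw [hpdef, SimpleGraph.Walk.edges_cons, List.nodup_cons] at h2
        exact h2.1
      exact hmem (hde ▸ List.mem_map_of_mem (f := SimpleGraph.Dart.edge) hd)
    have hz : (q.darts.map (fun d => if d.edge = d0.edge then dartSign d else 0)).sum = 0 := by
      apply List.sum_eq_zero
      intro r hr
      rw [List.mem_map] at hr
      obtain ⟨d, hd, rfl⟩ := hr
      rw [if_neg (hne d hd)]
    rw [hz, add_zero]
  have hxne : x i0 ≠ 0 := by
    rw [hx, dartSign]
    split <;> norm_num
  haveI : Nonempty ↥S := ⟨i0⟩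
  apply Matrix.exists_vecMul_eq_zero_iff.mp
  refine ⟨x, fun hc => hxne (by rw [hc]; rfl), ?_⟩
  funext k
  simpa [Matrix.vecMul, dotProduct] using hvm k

open SimpleGraph in
lemma det_eq_zero_of_comp_subset {N : ℕ} {S : Finset (Fin N)} {F : Finset (Sym2 (Fin N))}
    (ψ : ↥S ≃ ↥F) (hnd : ∀ e ∈ F, ¬ e.IsDiag)
    (c : (SimpleGraph.fromEdgeSet (↑F : Set (Sym2 (Fin N)))).ConnectedComponent)
    (hc : ∀ w, w ∈ c.supp → w ∈ S) :
    (Matrix.of fun (i k : ↥S) => binc (↑k) (↑(ψ i) : Sym2 (Fin N))).det = 0 := by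
  obtain ⟨w0, hw0⟩ := c.exists_rep
  have hw0' : w0 ∈ c.supp := by
    rw [SimpleGraph.ConnectedComponent.mem_supp_iff]
    exact hw0
  set y : ↥S → ℝ := fun k => if (↑k : Fin N) ∈ c.supp then 1 else 0 with hydef
  set k0 : ↥S := ⟨w0, hc w0 hw0'⟩ with hk0
  have hy : y k0 = 1 := by rw [hydef]; simp [hk0, hw0']
  have hmv : ∀ i : ↥S, ∑ k : ↥S, binc (↑k) (↑(ψ i) : Sym2 (Fin N)) * y k = 0 := by
    intro i
    set e : Sym2 (Fin N) := (↑(ψ i) : Sym2 (Fin N)) with hedef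
    have heF : e ∈ F := (ψ i).2
    have hnde : ¬ e.IsDiag := hnd e heF
    have hab : e.inf ≠ e.sup := ne_inf_sup_of_not_isDiag hnde
    have hadj : (SimpleGraph.fromEdgeSet (↑F : Set (Sym2 (Fin N)))).Adj e.inf e.sup := by
      rw [SimpleGraph.fromEdgeSet_adj]
      exact ⟨by rw [Sym2.mk_inf_sup]; exact heF, hab⟩
    by_cases hsupp : e.inf ∈ c.supp
    · have hbsupp : e.sup ∈ c.supp := by
        rw [SimpleGraph.ConnectedComponent.mem_supp_iff] at hsupp ⊢
        rw [← hsupp]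
        exact (SimpleGraph.ConnectedComponent.sound hadj.reachable).symm
      have ha' : e.inf ∈ S := hc _ hsupp
      have hb' : e.sup ∈ S := hc _ hbsupp
      have hterm : ∀ k : ↥S, binc (↑k) e * y k
          = (if k = (⟨e.inf, ha'⟩ : ↥S) then (1:ℝ) else 0)
            - (if k = (⟨e.sup, hb'⟩ : ↥S) then 1 else 0) := by
        intro k
        by_cases hka : k = (⟨e.inf, ha'⟩ : ↥S)
        · have : (↑k : Fin N) = e.inf := by rw [hka]
          rw [hka, if_pos rfl, if_neg (by intro hh; exact hab (congrArg Subtype.val hh))]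
          show binc e.inf e * y ⟨e.inf, ha'⟩ = 1 - 0
          rw [binc_inf hnde, hydef]
          simp [hsupp]
        · by_cases hkb : k = (⟨e.sup, hb'⟩ : ↥S)
          · rw [hkb, if_neg (by intro hh; exact hab (congrArg Subtype.val hh).symm), if_pos rfl]
            show binc e.sup e * y ⟨e.sup, hb'⟩ = 0 - 1
            rw [binc_sup hnde, hydef]
            simp [hbsupp]
          · rw [if_neg hka, if_neg hkb]
            have h1 : (↑k : Fin N) ≠ e.inf := fun hh => hka (Subtype.ext hh)
            have h2 : (↑k : Fin N) ≠ e.sup := fun hh => hkb (Subtype.ext hh)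
            rw [binc_of_not_mem h1 h2]
            ring
      rw [Finset.sum_congr rfl (fun k _ => hterm k), Finset.sum_sub_distrib]
      rw [Finset.sum_ite_eq' Finset.univ (⟨e.inf, ha'⟩ : ↥S) (fun _ => (1:ℝ)),
        Finset.sum_ite_eq' Finset.univ (⟨e.sup, hb'⟩ : ↥S) (fun _ => (1:ℝ))]
      simp
    · have hbsupp : e.sup ∉ c.supp := by
        intro hh
        apply hsupp
        rw [SimpleGraph.ConnectedComponent.mem_supp_iff] at hh ⊢
        rw [← hh]
        exact SimpleGraph.ConnectedComponent.sound hadj.reachable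
      apply Finset.sum_eq_zero
      intro k _
      by_cases hk : (↑k : Fin N) ∈ c.supp
      · have h1 : (↑k : Fin N) ≠ e.inf := fun hh => hsupp (hh ▸ hk)
        have h2 : (↑k : Fin N) ≠ e.sup := fun hh => hbsupp (hh ▸ hk)
        rw [binc_of_not_mem h1 h2, zero_mul]
      · rw [hydef]
        simp [hk]
  haveI : Nonempty ↥S := ⟨k0⟩
  apply Matrix.exists_mulVec_eq_zero_iff.mp
  refine ⟨y, fun hcon => by rw [hcon] at hy; simp at hy, ?_⟩
  funext i
  simpa [Matrix.mulVec, dotProduct] using hmv i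


lemma binc_endpoints {N : ℕ} {x a b : Fin N} (h : binc x s(a, b) ≠ 0) : x = a ∨ x = b := by
  by_contra hcon
  push_neg at hcon
  apply h
  apply binc_of_not_mem
  · simp only [Sym2.inf_mk]
    rcases le_total a b with hh | hh
    · rw [min_eq_left hh]; exact hcon.1
    · rw [min_eq_right hh]; exact hcon.2
  · simp only [Sym2.sup_mk]
    rcases le_total a b with hh | hh
    · rw [max_eq_right hh]; exact hcon.2
    · rw [max_eq_left hh]; exact hcon.1

lemma binc_self_sq {N : ℕ} {a b : Fin N} (h : a ≠ b) : (binc a s(a, b))^2 = 1 := by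
  rcases lt_or_gt_of_ne h with hh | hh
  · rw [binc]
    simp only [Sym2.inf_mk, Sym2.sup_mk, min_eq_left hh.le,
      max_eq_right hh.le]
    simp [h]
  · rw [binc]
    simp only [Sym2.inf_mk, Sym2.sup_mk, min_eq_right hh.le,
      max_eq_left hh.le]
    simp [h]

open SimpleGraph in
lemma phiForest_card_det {N : ℕ} {S : Finset (Fin N)} {F : Finset (Sym2 (Fin N))}
    (hF : IsPhiForest S F) :
    S.card = F.card ∧
      ∀ ψ : ↥S ≃ ↥F,
        ((Matrix.of fun i k : ↥S => binc (↑k) (↑(ψ i) : Sym2 (Fin N))).det)^2 = 1 := by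
  obtain ⟨hnd, hacyc, hcomp⟩ := hF
  -- roots
  have hroot0 : ∀ v : Fin N, ∃ r, (SimpleGraph.fromEdgeSet (↑F : Set (Sym2 (Fin N)))).Reachable r v
      ∧ r ∉ S ∧ ∀ r', (SimpleGraph.fromEdgeSet (↑F : Set (Sym2 (Fin N)))).Reachable r' v →
        r' ∉ S → r' = r := by
    intro v
    obtain ⟨r, ⟨hr1, hr2⟩, hr3⟩ :=
      hcomp ((SimpleGraph.fromEdgeSet (↑F : Set (Sym2 (Fin N)))).connectedComponentMk v)
    rw [SimpleGraph.ConnectedComponent.mem_supp_iff, SimpleGraph.ConnectedComponent.eq] at hr1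
    refine ⟨r, hr1, hr2, ?_⟩
    intro r' h1 h2
    exact hr3 r' ⟨by rw [SimpleGraph.ConnectedComponent.mem_supp_iff,
      SimpleGraph.ConnectedComponent.eq]; exact h1, h2⟩
  choose root hrootR hrootS hrootU using hroot0
  have hrcong : ∀ u v : Fin N,
      (SimpleGraph.fromEdgeSet (↑F : Set (Sym2 (Fin N)))).Reachable u v → root u = root v := by
    intro u v h
    exact hrootU v (root u) ((hrootR u).trans h) (hrootS u)
  have hroot_self : ∀ v : Fin N, v ∉ S → root v = v := by
    intro v hv
    exact (hrootU v v (SimpleGraph.Reachable.refl v) hv).symm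
  have hpos : ∀ v ∈ S,
      1 ≤ (SimpleGraph.fromEdgeSet (↑F : Set (Sym2 (Fin N)))).dist (root v) v := by
    intro v hv
    have hne : root v ≠ v := fun h => (hrootS v) (by rw [h]; exact hv)
    exact (hrootR v).pos_dist_of_ne hne
  -- K1 : neighbor distance bound
  have hK1 : ∀ r a b : Fin N,
      (SimpleGraph.fromEdgeSet (↑F : Set (Sym2 (Fin N)))).Reachable r a →
      (SimpleGraph.fromEdgeSet (↑F : Set (Sym2 (Fin N)))).Adj a b →
      (SimpleGraph.fromEdgeSet (↑F : Set (Sym2 (Fin N)))).dist r b ≤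
        (SimpleGraph.fromEdgeSet (↑F : Set (Sym2 (Fin N)))).dist r a + 1 := by
    intro r a b hra hadj
    obtain ⟨p, hp⟩ := hra.exists_walk_length_eq_dist
    have := SimpleGraph.dist_le (p.concat hadj)
    rwa [SimpleGraph.Walk.length_concat, hp] at this
  -- K2 : adjacent vertices have different distances from a common root
  have hK2 : ∀ r a b : Fin N,
      (SimpleGraph.fromEdgeSet (↑F : Set (Sym2 (Fin N)))).Reachable r a →
      (SimpleGraph.fromEdgeSet (↑F : Set (Sym2 (Fin N)))).Reachable r b →
      (SimpleGraph.fromEdgeSet (↑F : Set (Sym2 (Fin N)))).Adj a b →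
      (SimpleGraph.fromEdgeSet (↑F : Set (Sym2 (Fin N)))).dist r a ≠
        (SimpleGraph.fromEdgeSet (↑F : Set (Sym2 (Fin N)))).dist r b := by
    intro r a b hra hrb hadj heq
    obtain ⟨pa, hpa⟩ := hra.exists_walk_length_eq_dist
    obtain ⟨pb, hpb⟩ := hrb.exists_walk_length_eq_dist
    have hpa' : pa.IsPath := pa.isPath_of_length_eq_dist hpa
    have hpb' : pb.IsPath := pb.isPath_of_length_eq_dist hpb
    have hd1 : 1 ≤ (SimpleGraph.fromEdgeSet (↑F : Set (Sym2 (Fin N)))).dist r a := by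
      by_contra h
      push_neg at h
      have h0 := Nat.lt_one_iff.mp h
      have h1 : r = a := hra.dist_eq_zero_iff.mp h0
      have h2 : r = b := hrb.dist_eq_zero_iff.mp (heq ▸ h0)
      exact hadj.ne (h1 ▸ h2)
    have hanb : a ∉ pb.support := by
      intro hmem
      have h1 := SimpleGraph.dist_le (pb.takeUntil a hmem)
      have h2 : (pb.takeUntil a hmem).length + (pb.dropUntil a hmem).length = pb.length := by
        rw [← SimpleGraph.Walk.length_append, SimpleGraph.Walk.take_spec]
      have h3 : 1 ≤ (pb.dropUntil a hmem).length := by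
        by_contra h
        push_neg at h
        exact hadj.ne (SimpleGraph.Walk.eq_of_length_eq_zero (Nat.lt_one_iff.mp h))
      omega
    have hP2path : ((SimpleGraph.Walk.cons hadj pb.reverse).reverse).IsPath := by
      apply SimpleGraph.Walk.IsPath.reverse
      rw [SimpleGraph.Walk.cons_isPath_iff]
      refine ⟨hpb'.reverse, ?_⟩
      rw [SimpleGraph.Walk.support_reverse]
      simpa using hanb
    have huniq := hacyc.path_unique ⟨pa, hpa'⟩ ⟨_, hP2path⟩
    have hlen := congrArg
      (fun p : (SimpleGraph.fromEdgeSet (↑F : Set (Sym2 (Fin N)))).Path r a => p.1.length) huniq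
    simp only [SimpleGraph.Walk.length_reverse, SimpleGraph.Walk.length_cons,
      SimpleGraph.Walk.length_reverse] at hlen
    omega
  -- K3 : uniqueness of the parent
  have hK3 : ∀ r v u1 u2 : Fin N,
      (SimpleGraph.fromEdgeSet (↑F : Set (Sym2 (Fin N)))).Reachable r u1 →
      (SimpleGraph.fromEdgeSet (↑F : Set (Sym2 (Fin N)))).Reachable r u2 →
      (SimpleGraph.fromEdgeSet (↑F : Set (Sym2 (Fin N)))).Adj v u1 →
      (SimpleGraph.fromEdgeSet (↑F : Set (Sym2 (Fin N)))).Adj v u2 →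
      (SimpleGraph.fromEdgeSet (↑F : Set (Sym2 (Fin N)))).dist r u1 + 1 =
        (SimpleGraph.fromEdgeSet (↑F : Set (Sym2 (Fin N)))).dist r v →
      (SimpleGraph.fromEdgeSet (↑F : Set (Sym2 (Fin N)))).dist r u2 + 1 =
        (SimpleGraph.fromEdgeSet (↑F : Set (Sym2 (Fin N)))).dist r v → u1 = u2 := by
    intro r v u1 u2 hr1 hr2 ha1 ha2 hd1 hd2
    obtain ⟨p1, hp1⟩ := hr1.exists_walk_length_eq_dist
    obtain ⟨p2, hp2⟩ := hr2.exists_walk_length_eq_dist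
    have hpath1 := p1.isPath_of_length_eq_dist hp1
    have hpath2 := p2.isPath_of_length_eq_dist hp2
    have hv1 : v ∉ p1.support := by
      intro hmem
      have h1 := SimpleGraph.dist_le (p1.takeUntil v hmem)
      have h2 := SimpleGraph.Walk.length_takeUntil_le p1 hmem
      omega
    have hv2 : v ∉ p2.support := by
      intro hmem
      have h1 := SimpleGraph.dist_le (p2.takeUntil v hmem)
      have h2 := SimpleGraph.Walk.length_takeUntil_le p2 hmem
      omega
    have hQ1 : (SimpleGraph.Walk.cons ha1 p1.reverse).IsPath := by
      rw [SimpleGraph.Walk.cons_isPath_iff]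
      refine ⟨hpath1.reverse, ?_⟩
      rw [SimpleGraph.Walk.support_reverse]
      simpa using hv1
    have hQ2 : (SimpleGraph.Walk.cons ha2 p2.reverse).IsPath := by
      rw [SimpleGraph.Walk.cons_isPath_iff]
      refine ⟨hpath2.reverse, ?_⟩
      rw [SimpleGraph.Walk.support_reverse]
      simpa using hv2
    have huniq := hacyc.path_unique ⟨_, hQ1⟩ ⟨_, hQ2⟩
    have := congrArg
      (fun p : (SimpleGraph.fromEdgeSet (↑F : Set (Sym2 (Fin N)))).Path v r =>
        p.1.getVert 1) huniq
    simpa [SimpleGraph.Walk.getVert_cons_succ, SimpleGraph.Walk.getVert_zero] using this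
  -- K4 : existence of the parent
  have hK4 : ∀ r v : Fin N,
      (SimpleGraph.fromEdgeSet (↑F : Set (Sym2 (Fin N)))).Reachable r v →
      1 ≤ (SimpleGraph.fromEdgeSet (↑F : Set (Sym2 (Fin N)))).dist r v →
      ∃ u, (SimpleGraph.fromEdgeSet (↑F : Set (Sym2 (Fin N)))).Adj v u ∧
        (SimpleGraph.fromEdgeSet (↑F : Set (Sym2 (Fin N)))).dist r u + 1 =
          (SimpleGraph.fromEdgeSet (↑F : Set (Sym2 (Fin N)))).dist r v := by
    intro r v hrv hd
    obtain ⟨p, hp⟩ := hrv.exists_walk_length_eq_dist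
    have hnnil : ¬ p.reverse.Nil := by
      rw [SimpleGraph.Walk.nil_iff_length_eq, SimpleGraph.Walk.length_reverse]
      omega
    rw [SimpleGraph.Walk.not_nil_iff] at hnnil
    obtain ⟨u, hadj, q, hq⟩ := hnnil
    refine ⟨u, hadj, ?_⟩
    have hlq : q.length + 1 = (SimpleGraph.fromEdgeSet (↑F : Set (Sym2 (Fin N)))).dist r v := by
      have h1 := congrArg SimpleGraph.Walk.length hq
      rw [SimpleGraph.Walk.length_reverse, SimpleGraph.Walk.length_cons] at h1
      omega
    have h1 : (SimpleGraph.fromEdgeSet (↑F : Set (Sym2 (Fin N)))).dist r u ≤ q.length := by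
      rw [SimpleGraph.dist_comm]
      exact SimpleGraph.dist_le q
    have h2 := hK1 r u v (hrv.trans hadj.reachable) hadj.symm
    omega
  -- the parent map
  have hparex : ∀ v : ↥S, ∃ u,
      (SimpleGraph.fromEdgeSet (↑F : Set (Sym2 (Fin N)))).Adj ↑v u ∧
      (SimpleGraph.fromEdgeSet (↑F : Set (Sym2 (Fin N)))).dist (root ↑v) u + 1 =
        (SimpleGraph.fromEdgeSet (↑F : Set (Sym2 (Fin N)))).dist (root ↑v) ↑v :=
    fun v => hK4 _ _ (hrootR ↑v) (hpos ↑v v.2)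
  choose par hparAdj hparDist using hparex
  have hparne : ∀ v : ↥S, (↑v : Fin N) ≠ par v := fun v => (hparAdj v).ne
  set parE : ↥S → ↥F := fun v => ⟨s(↑v, par v), by
    have h := hparAdj v
    rw [SimpleGraph.fromEdgeSet_adj] at h
    exact h.1⟩ with hparE
  have hinj : Function.Injective parE := by
    intro v1 v2 h
    have h' : s((v1 : Fin N), par v1) = s((v2 : Fin N), par v2) := congrArg Subtype.val h
    rw [Sym2.eq_iff] at h'
    rcases h' with ⟨h1, _⟩ | ⟨h1, h2⟩
    · exact Subtype.ext h1
    · exfalso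
      have hadj21 : (SimpleGraph.fromEdgeSet (↑F : Set (Sym2 (Fin N)))).Adj ↑v2 ↑v1 := by
        have := hparAdj v2
        rwa [← h1] at this
      have hr12 : root (v1 : Fin N) = root (v2 : Fin N) := hrcong _ _ hadj21.symm.reachable
      have hd1 := hparDist v1
      have hd2 := hparDist v2
      rw [h2] at hd1
      rw [← h1] at hd2
      rw [hr12] at hd1
      omega
  have hsurj : Function.Surjective parE := by
    intro e
    set a := (↑e : Sym2 (Fin N)).inf with ha
    set b := (↑e : Sym2 (Fin N)).sup with hb
    have hab : a ≠ b := ne_inf_sup_of_not_isDiag (hnd _ e.2)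
    have hadjab : (SimpleGraph.fromEdgeSet (↑F : Set (Sym2 (Fin N)))).Adj a b := by
      rw [SimpleGraph.fromEdgeSet_adj]
      exact ⟨by rw [ha, hb, Sym2.mk_inf_sup]; exact e.2, hab⟩
    have hr_ab : root a = root b := hrcong _ _ hadjab.reachable
    have hrb : (SimpleGraph.fromEdgeSet (↑F : Set (Sym2 (Fin N)))).Reachable (root a) b := by
      rw [hr_ab]; exact hrootR b
    have hne := hK2 (root a) a b (hrootR a) hrb hadjab
    rcases lt_or_gt_of_ne hne with hlt | hlt
    · -- dist r a < dist r b : b is the child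
      have hbS : b ∈ S := by
        by_contra hcon
        have : root b = b := hroot_self b hcon
        rw [← hr_ab] at this
        rw [this] at hlt
        simp [SimpleGraph.dist_self] at hlt
      have h1 : (SimpleGraph.fromEdgeSet (↑F : Set (Sym2 (Fin N)))).dist (root a) a + 1 =
          (SimpleGraph.fromEdgeSet (↑F : Set (Sym2 (Fin N)))).dist (root a) b := by
        have := hK1 (root a) a b (hrootR a) hadjab
        omega
      refine ⟨⟨b, hbS⟩, ?_⟩
      have h2 : (SimpleGraph.fromEdgeSet (↑F : Set (Sym2 (Fin N)))).dist (root b) (par ⟨b, hbS⟩)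
          + 1 = (SimpleGraph.fromEdgeSet (↑F : Set (Sym2 (Fin N)))).dist (root b) b :=
        hparDist ⟨b, hbS⟩
      rw [← hr_ab] at h2
      have hreach : (SimpleGraph.fromEdgeSet (↑F : Set (Sym2 (Fin N)))).Reachable (root a)
          (par ⟨b, hbS⟩) :=
        hrb.trans ((hparAdj ⟨b, hbS⟩).reachable :
          (SimpleGraph.fromEdgeSet (↑F : Set (Sym2 (Fin N)))).Reachable b (par ⟨b, hbS⟩))
      have hadjb : (SimpleGraph.fromEdgeSet (↑F : Set (Sym2 (Fin N)))).Adj b (par ⟨b, hbS⟩) :=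
        hparAdj ⟨b, hbS⟩
      have hu : par ⟨b, hbS⟩ = a :=
        hK3 (root a) b (par ⟨b, hbS⟩) a hreach (hrootR a) hadjb hadjab.symm h2 h1
      apply Subtype.ext
      show s((b : Fin N), par ⟨b, hbS⟩) = (e : Sym2 (Fin N))
      rw [hu, Sym2.eq_swap, ha, hb, Sym2.mk_inf_sup]
    · -- dist r b < dist r a : a is the child
      have haS : a ∈ S := by
        by_contra hcon
        have : root a = a := hroot_self a hcon
        rw [this] at hlt
        simp [SimpleGraph.dist_self] at hlt
      have h1 : (SimpleGraph.fromEdgeSet (↑F : Set (Sym2 (Fin N)))).dist (root a) b + 1 =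
          (SimpleGraph.fromEdgeSet (↑F : Set (Sym2 (Fin N)))).dist (root a) a := by
        have := hK1 (root a) b a hrb hadjab.symm
        omega
      refine ⟨⟨a, haS⟩, ?_⟩
      have h2 : (SimpleGraph.fromEdgeSet (↑F : Set (Sym2 (Fin N)))).dist (root a) (par ⟨a, haS⟩)
          + 1 = (SimpleGraph.fromEdgeSet (↑F : Set (Sym2 (Fin N)))).dist (root a) a :=
        hparDist ⟨a, haS⟩
      have hadja : (SimpleGraph.fromEdgeSet (↑F : Set (Sym2 (Fin N)))).Adj a (par ⟨a, haS⟩) :=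
        hparAdj ⟨a, haS⟩
      have hreach : (SimpleGraph.fromEdgeSet (↑F : Set (Sym2 (Fin N)))).Reachable (root a)
          (par ⟨a, haS⟩) := (hrootR a).trans hadja.reachable
      have hu : par ⟨a, haS⟩ = b :=
        hK3 (root a) a (par ⟨a, haS⟩) b hreach hrb hadja hadjab h2 h1
      apply Subtype.ext
      show s((a : Fin N), par ⟨a, haS⟩) = (e : Sym2 (Fin N))
      rw [hu, ha, hb, Sym2.mk_inf_sup]
  have hbij : Function.Bijective parE := ⟨hinj, hsurj⟩
  have hcard : S.card = F.card := by
    have := Fintype.card_of_bijective hbij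
    simpa [Fintype.card_coe] using this
  refine ⟨hcard, ?_⟩
  intro ψ
  set C : Matrix ↥S ↥S ℝ := Matrix.of fun i k : ↥S => binc (↑k) (↑(ψ i) : Sym2 (Fin N)) with hC
  set parEq : ↥S ≃ ↥F := Equiv.ofBijective parE hbij with hparEq
  set ρ : Equiv.Perm ↥S := parEq.trans ψ.symm with hρ
  set M : Matrix ↥S ↥S ℝ := Matrix.of fun v k : ↥S => binc (↑k) (↑(parE v) : Sym2 (Fin N))
    with hM
  have hsub : C.submatrix ρ id = M := by
    ext v k
    show binc (↑k) (↑(ψ (ψ.symm (parEq v))) : Sym2 (Fin N)) = _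
    rw [Equiv.apply_symm_apply]
    rfl
  have hdetCM : (C.det)^2 = (M.det)^2 := by
    have := Matrix.det_permute ρ C
    rw [hsub] at this
    rcases Int.units_eq_one_or (Equiv.Perm.sign ρ) with h | h <;>
      rw [h] at this <;> simp at this <;> rw [this] <;> ring
  rw [hdetCM]
  -- heights and triangularity
  set ht : ↥S → ℕ := fun v =>
    (SimpleGraph.fromEdgeSet (↑F : Set (Sym2 (Fin N)))).dist (root ↑v) ↑v with hht
  have hT1 : ∀ v : ↥S, (M v v)^2 = 1 := by
    intro v
    show (binc ↑v s((v : Fin N), par v))^2 = 1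
    exact binc_self_sq (hparne v)
  have hT2 : ∀ v k : ↥S, M v k ≠ 0 → k = v ∨ ht k < ht v := by
    intro v k hne0
    have h := binc_endpoints (hne0 : binc ↑k s((v : Fin N), par v) ≠ 0)
    rcases h with h | h
    · exact Or.inl (Subtype.ext h)
    · right
      have hrk : root (k : Fin N) = root (v : Fin N) := by
        rw [h]
        exact (hrcong _ _ (hparAdj v).reachable).symm
      have := hparDist v
      rw [hht]
      simp only
      rw [hrk, h]
      omega
  set n := Fintype.card ↥S with hn
  set κ : ↥S ≃ Fin n := Fintype.equivFin ↥S with hκ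
  set f : Fin n → ℕ := fun j => ht (κ.symm j) with hf
  set σ := Tuple.sort f with hσ
  set π : Fin n ≃ ↥S := σ.trans κ.symm with hπ
  have hmono : Monotone (fun j => ht (π j)) := Tuple.monotone_sort f
  have hdet2 : (M.submatrix π π).det = M.det := Matrix.det_submatrix_equiv_self π M
  have htri : (M.submatrix π π).BlockTriangular OrderDual.toDual := by
    intro i j hij
    have hij' : i < j := hij
    by_contra hne0
    rcases hT2 (π i) (π j) hne0 with h | h
    · exact hij'.ne (π.injective h).symm
    · have h2 : ht (π i) ≤ ht (π j) := hmono hij'.le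
      omega
  have hdiag := Matrix.det_of_lowerTriangular (M.submatrix π π) htri
  rw [← hdet2, hdiag, ← Finset.prod_pow]
  apply Finset.prod_eq_one
  intro i _
  exact hT1 (π i)

open SimpleGraph in
lemma det_C_eq_zero_of_not_phiForest {N : ℕ} {S : Finset (Fin N)} {F : Finset (Sym2 (Fin N))}
    (ψ : ↥S ≃ ↥F) (hnF : ¬ IsPhiForest S F) :
    (Matrix.of fun (i k : ↥S) => binc (↑k) (↑(ψ i) : Sym2 (Fin N))).det = 0 := by
  by_cases hnd : ∀ e ∈ F, ¬ e.IsDiag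
  · by_cases hacyc : (SimpleGraph.fromEdgeSet (↑F : Set (Sym2 (Fin N)))).IsAcyclic
    · -- some component fails the ∃! condition
      have hcomp : ∃ c : (SimpleGraph.fromEdgeSet (↑F : Set (Sym2 (Fin N)))).ConnectedComponent,
          ¬ ∃! v : Fin N, v ∈ c.supp ∧ v ∉ S := by
        by_contra h
        push_neg at h
        exact hnF ⟨hnd, hacyc, h⟩
      obtain ⟨c, hc⟩ := hcomp
      by_cases hex : ∃ v : Fin N, v ∈ c.supp ∧ v ∉ S
      · -- at least two such vertices
        obtain ⟨u, hu1, hu2⟩ := hex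
        have h2 : ∃ v : Fin N, (v ∈ c.supp ∧ v ∉ S) ∧ v ≠ u := by
          by_contra h
          push_neg at h
          exact hc ⟨u, ⟨hu1, hu2⟩, fun v hv => h v hv⟩
        obtain ⟨v, ⟨hv1, hv2⟩, hvu⟩ := h2
        have hreach : (SimpleGraph.fromEdgeSet (↑F : Set (Sym2 (Fin N)))).Reachable u v := by
          rw [SimpleGraph.ConnectedComponent.mem_supp_iff] at hu1 hv1
          rw [← SimpleGraph.ConnectedComponent.eq] at *
          rw [hu1, ← hv1]
        obtain ⟨p0⟩ := hreach
        set p := p0.toPath with hp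
        apply det_eq_zero_of_walk ψ (p : (SimpleGraph.fromEdgeSet
          (↑F : Set (Sym2 (Fin N)))).Walk u v) p.2.isTrail.edges_nodup
        · intro hnil
          rw [SimpleGraph.Walk.nil_iff_length_eq] at hnil
          exact hvu.symm (SimpleGraph.Walk.eq_of_length_eq_zero hnil)
        · intro k hk
          rw [if_neg (fun h : k = u => hu2 (by rw [← h]; exact hk)),
            if_neg (fun h : k = v => hv2 (by rw [← h]; exact hk))]
          ring
      · -- component contained in S
        apply det_eq_zero_of_comp_subset ψ hnd c
        intro w hw
        by_contra hcon
        exact hex ⟨w, hw, hcon⟩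
    · -- a cycle exists
      have hex : ∃ (v : Fin N) (c : (SimpleGraph.fromEdgeSet
          (↑F : Set (Sym2 (Fin N)))).Walk v v), c.IsCycle := by
        by_contra h
        push_neg at h
        exact hacyc (by intro v c; exact h v c)
      obtain ⟨v, c0, hcyc⟩ := hex
      apply det_eq_zero_of_walk ψ c0 hcyc.isCircuit.isTrail.edges_nodup
      · intro hnil
        rw [SimpleGraph.Walk.nil_iff_length_eq] at hnil
        have := hcyc.three_le_length
        omega
      · intro k _
        simp
  · -- a diagonal edge : zero row
    push_neg at hnd
    obtain ⟨e, heF, hdiag⟩ := hnd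
    apply Matrix.det_eq_zero_of_row_eq_zero (ψ.symm ⟨e, heF⟩)
    intro k
    show binc (↑k) (↑(ψ (ψ.symm ⟨e, heF⟩)) : Sym2 (Fin N)) = 0
    rw [Equiv.apply_symm_apply]
    exact binc_diag _ hdiag


/-- `J` is stable: negative semidefinite with kernel the span of the all-ones vector. -/
def IsStable {N : ℕ} (J : Matrix (Fin N) (Fin N) ℝ) : Prop :=
  (-J).PosSemidef ∧
  LinearMap.ker J.mulVecLin = Submodule.span ℝ {(fun _ => 1 : Fin N → ℝ)}

/-- The graph on `Fin N` with an edge `{i,j}` whenever `J i j > 0` (for `i ≠ j`). -/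
def posGraph {N : ℕ} (J : Matrix (Fin N) (Fin N) ℝ) : SimpleGraph (Fin N) :=
  SimpleGraph.fromRel fun i j => 0 < J i j

/-- The graph on `Fin N` with an edge `{i,j}` whenever `J i j ≠ 0` (for `i ≠ j`). -/
def supportGraph {N : ℕ} (J : Matrix (Fin N) (Fin N) ℝ) : SimpleGraph (Fin N) :=
  SimpleGraph.fromRel fun i j => J i j ≠ 0

/-- **Topological (forest) expansion of principal minors.**  If `J` is real symmetric with
zero row sums, then for every nonempty proper subset `S` of the index set,
`det J[S] = (-1)^{|S|} · Φ_S`. -/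
theorem det_principal_submatrix_eq_phi (N : ℕ) (J : Matrix (Fin N) (Fin N) ℝ)
    (hsym : J.IsSymm) (hrow : ∀ i, ∑ j, J i j = 0) :
    ∀ S : Finset (Fin N), S.Nonempty → S ≠ Finset.univ →
      (J.submatrix (fun i : ↥S => (i : Fin N)) (fun i : ↥S => (i : Fin N))).det
        = (-1 : ℝ) ^ S.card * Phi J S := by
  intro S _ _
  set A : Matrix ↥S ↥S ℝ := Matrix.of fun i k : ↥S =>
    ∑ e : Sym2 (Fin N), edgeWeight J e * (binc ↑i e * binc ↑k e) with hA
  have h1 : J.submatrix (fun i : ↥S => (i : Fin N)) (fun i : ↥S => (i : Fin N)) = -A := by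
    ext i k
    show J ↑i ↑k = -(A i k)
    rw [hA]
    show J ↑i ↑k = -(∑ e : Sym2 (Fin N), edgeWeight J e * (binc ↑i e * binc ↑k e))
    rw [Lentry J hsym hrow ↑i ↑k]
    ring
  rw [h1, Matrix.det_neg, Fintype.card_coe]
  congr 1
  -- Step 1 : multilinear expansion over rows
  have hstep1 : A.det = ∑ r : ↥S → Sym2 (Fin N),
      (Matrix.of fun i k : ↥S => (edgeWeight J (r i) * binc ↑i (r i)) * binc ↑k (r i)).det := by
    have hrows : (A : ↥S → ↥S → ℝ) = fun i : ↥S => ∑ e : Sym2 (Fin N),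
        (fun k : ↥S => (edgeWeight J e * binc ↑i e) * binc ↑k e) := by
      funext i k
      rw [Finset.sum_apply]
      show (∑ e : Sym2 (Fin N), edgeWeight J e * (binc ↑i e * binc ↑k e)) = _
      exact Finset.sum_congr rfl fun e _ => by ring
    have hms := (Matrix.detRowAlternating.toMultilinearMap :
        MultilinearMap ℝ (fun _ : ↥S => (↥S → ℝ)) ℝ).map_sum
      (g := fun (i : ↥S) (e : Sym2 (Fin N)) =>
        (fun k : ↥S => (edgeWeight J e * binc ↑i e) * binc ↑k e))
    show Matrix.detRowAlternating (A : ↥S → ↥S → ℝ) = _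
    rw [hrows]
    exact hms
  -- Step 2 : extract the row scalars
  have hstep2 : ∀ r : ↥S → Sym2 (Fin N),
      (Matrix.of fun i k : ↥S => (edgeWeight J (r i) * binc ↑i (r i)) * binc ↑k (r i)).det
      = (∏ i : ↥S, edgeWeight J (r i) * binc ↑i (r i)) *
        (Matrix.of fun i k : ↥S => binc ↑k (r i)).det := by
    intro r
    have h := Matrix.det_mul_column (fun i : ↥S => edgeWeight J (r i) * binc ↑i (r i))
      (Matrix.of fun i k : ↥S => binc ↑k (r i))
    exact h
  rw [hstep1, Finset.sum_congr rfl fun r _ => hstep2 r]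
  -- Step 3 : only injective maps contribute
  rw [← Finset.sum_filter_of_ne (p := fun r : ↥S → Sym2 (Fin N) => Function.Injective r)
    (by
      intro r _ hne
      by_contra hinj
      rw [Function.not_injective_iff] at hinj
      obtain ⟨a, b, hab, hne'⟩ := hinj
      apply hne
      have : (Matrix.of fun i k : ↥S => binc ↑k (r i)).det = 0 := by
        apply Matrix.det_zero_of_row_eq hne'
        funext k
        show binc ↑k (r a) = binc ↑k (r b)
        rw [hab]
      rw [this, mul_zero])]
  -- Step 4 : group by image
  rw [← Finset.sum_fiberwise (Finset.univ.filter
      (fun r : ↥S → Sym2 (Fin N) => Function.Injective r))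
    (fun r => Finset.image r Finset.univ)
    (fun r => (∏ i : ↥S, edgeWeight J (r i) * binc ↑i (r i)) *
      (Matrix.of fun i k : ↥S => binc ↑k (r i)).det)]
  -- Step 5 : evaluate each fiber
  have hfiber : ∀ F' : Finset (Sym2 (Fin N)),
      (∑ r ∈ (Finset.univ.filter (fun r : ↥S → Sym2 (Fin N) => Function.Injective r)).filter
          (fun r => Finset.image r Finset.univ = F'),
        (∏ i : ↥S, edgeWeight J (r i) * binc ↑i (r i)) *
          (Matrix.of fun i k : ↥S => binc ↑k (r i)).det)
      = if IsPhiForest S F' then ∏ e ∈ F', edgeWeight J e else 0 := by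
    intro F'
    by_cases hcard : F'.card = S.card
    · have hψcard : Fintype.card ↥S = Fintype.card ↥F' := by
        simp [Fintype.card_coe, hcard]
      set ψ : ↥S ≃ ↥F' := Fintype.equivOfCardEq hψcard with hψ
      have hbijsum : (∑ r ∈ (Finset.univ.filter
            (fun r : ↥S → Sym2 (Fin N) => Function.Injective r)).filter
            (fun r => Finset.image r Finset.univ = F'),
          (∏ i : ↥S, edgeWeight J (r i) * binc ↑i (r i)) *
            (Matrix.of fun i k : ↥S => binc ↑k (r i)).det)
          = ∑ σ : Equiv.Perm ↥S,
            (∏ i : ↥S, edgeWeight J (↑(ψ (σ i))) * binc ↑i (↑(ψ (σ i)) : Sym2 (Fin N))) *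
              (Matrix.of fun i k : ↥S => binc ↑k (↑(ψ (σ i)) : Sym2 (Fin N))).det := by
        symm
        apply Finset.sum_bij (i := fun (σ : Equiv.Perm ↥S) _ =>
          (fun i : ↥S => (↑(ψ (σ i)) : Sym2 (Fin N))))
        · intro σ _
          rw [Finset.mem_filter, Finset.mem_filter]
          have hinj : Function.Injective (fun i : ↥S => (↑(ψ (σ i)) : Sym2 (Fin N))) := by
            intro a b hab
            exact σ.injective (ψ.injective (Subtype.coe_injective hab))
          refine ⟨⟨Finset.mem_univ _, hinj⟩, ?_⟩
          apply Finset.eq_of_subset_of_card_le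
          · intro e he
            rw [Finset.mem_image] at he
            obtain ⟨i, _, rfl⟩ := he
            exact (ψ (σ i)).2
          · rw [Finset.card_image_of_injective _ hinj, Finset.card_univ, Fintype.card_coe,
              hcard]
        · intro σ1 _ σ2 _ h
          apply Equiv.ext
          intro i
          have h2 := congrFun h i
          exact ψ.injective (Subtype.coe_injective h2)
        · intro r hr
          rw [Finset.mem_filter, Finset.mem_filter] at hr
          obtain ⟨⟨_, hinj⟩, him⟩ := hr
          have hmem : ∀ i : ↥S, r i ∈ F' := by
            intro i
            rw [← him, Finset.mem_image]
            exact ⟨i, Finset.mem_univ _, rfl⟩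
          have hτinj : Function.Injective (fun i : ↥S => ψ.symm ⟨r i, hmem i⟩) := by
            intro a b hab
            apply hinj
            have h4 : (⟨r a, hmem a⟩ : ↥F') = (⟨r b, hmem b⟩ : ↥F') := ψ.symm.injective hab
            exact congrArg Subtype.val h4
          have hτbij := Finite.injective_iff_bijective.mp hτinj
          refine ⟨Equiv.ofBijective _ hτbij, Finset.mem_univ _, ?_⟩
          funext i
          show (↑(ψ (ψ.symm ⟨r i, hmem i⟩)) : Sym2 (Fin N)) = r i
          rw [Equiv.apply_symm_apply]
        · intro σ _
          rfl
      rw [hbijsum]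
      set C : Matrix ↥S ↥S ℝ :=
        Matrix.of fun i k : ↥S => binc ↑k (↑(ψ i) : Sym2 (Fin N)) with hC
      have hterm : ∀ σ : Equiv.Perm ↥S,
          (∏ i : ↥S, edgeWeight J (↑(ψ (σ i))) * binc ↑i (↑(ψ (σ i)) : Sym2 (Fin N))) *
            (Matrix.of fun i k : ↥S => binc ↑k (↑(ψ (σ i)) : Sym2 (Fin N))).det
          = (∏ e ∈ F', edgeWeight J e) * C.det *
              (((Equiv.Perm.sign σ : ℤ) : ℝ) * ∏ i : ↥S, C (σ i) i) := by
        intro σ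
        rw [Finset.prod_mul_distrib]
        have e1 : ∏ i : ↥S, edgeWeight J (↑(ψ (σ i)) : Sym2 (Fin N))
            = ∏ e ∈ F', edgeWeight J e := by
          rw [Equiv.prod_comp σ (fun i => edgeWeight J (↑(ψ i) : Sym2 (Fin N))),
            Equiv.prod_comp ψ (fun e : ↥F' => edgeWeight J (↑e : Sym2 (Fin N))),
            Finset.prod_coe_sort]
        have e2 : (Matrix.of fun i k : ↥S => binc ↑k (↑(ψ (σ i)) : Sym2 (Fin N)))
            = C.submatrix σ id := rfl
        have e3 : ∏ i : ↥S, binc ↑i (↑(ψ (σ i)) : Sym2 (Fin N)) = ∏ i : ↥S, C (σ i) i := by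
          apply Finset.prod_congr rfl
          intro i _
          rfl
        rw [e1, e2, e3, Matrix.det_permute]
        push_cast
        ring
      rw [Finset.sum_congr rfl fun σ _ => hterm σ, ← Finset.mul_sum]
      have hdetC : ∑ σ : Equiv.Perm ↥S,
          ((Equiv.Perm.sign σ : ℤ) : ℝ) * ∏ i : ↥S, C (σ i) i = C.det := by
        rw [Matrix.det_apply]
        apply Finset.sum_congr rfl
        intro σ _
        rw [Units.smul_def, zsmul_eq_mul]
      rw [hdetC]
      by_cases hPF : IsPhiForest S F'
      · rw [if_pos hPF]
        have hsq : C.det ^ 2 = 1 := (phiForest_card_det hPF).2 ψ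
        calc (∏ e ∈ F', edgeWeight J e) * C.det * C.det
            = (∏ e ∈ F', edgeWeight J e) * (C.det ^ 2) := by ring
          _ = ∏ e ∈ F', edgeWeight J e := by rw [hsq, mul_one]
      · rw [if_neg hPF]
        have h0 : C.det = 0 := det_C_eq_zero_of_not_phiForest ψ hPF
        rw [h0]
        ring
    · have hempty : ((Finset.univ.filter
          (fun r : ↥S → Sym2 (Fin N) => Function.Injective r)).filter
          (fun r => Finset.image r Finset.univ = F')) = ∅ := by
        rw [Finset.filter_eq_empty_iff]
        intro r hr
        rw [Finset.mem_filter] at hr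
        intro him
        apply hcard
        rw [← him, Finset.card_image_of_injective _ hr.2, Finset.card_univ, Fintype.card_coe]
      rw [hempty, Finset.sum_empty]
      rw [if_neg (fun hPF => hcard ((phiForest_card_det hPF).1.symm))]
  rw [Finset.sum_congr rfl fun F' _ => hfiber F']
  rw [Phi, Finset.sum_filter]
end

section
/- Let J be an N×N real symmetric matrix with zero row sums that is stable, i.e., negative semidefinite with kernel equal to the span of the all-ones vector. Then Φ_S > 0 for every nonempty proper subset S of {1, …, N}. -/
open scoped Classical

set_option linter.unusedSectionVars false
set_option maxHeartbeats 1000000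

namespace PhiProof

open SimpleGraph

section Walks
variable {V : Type*} [DecidableEq V]

lemma path_start_edge {G : SimpleGraph V} {b t : V} {w : G.Walk b t} (hw : w.IsPath)
    {a : V} (he : s(b, a) ∈ w.edges) :
    ∃ (h : G.Adj b a) (q : G.Walk a t), w = SimpleGraph.Walk.cons h q := by
  cases w with
  | nil => simp at he
  | @cons _ c _ h' q' =>
    rw [SimpleGraph.Walk.edges_cons, List.mem_cons] at he
    rcases he with he | he
    · rw [Sym2.eq_iff] at he
      rcases he with ⟨-, rfl⟩ | ⟨hbc, -⟩
      · exact ⟨h', q', rfl⟩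
      · exact absurd hbc h'.ne
    · exfalso
      have hb := SimpleGraph.Walk.fst_mem_support_of_mem_edges q' he
      exact ((SimpleGraph.Walk.cons_isPath_iff h' q').mp hw).2 hb

lemma cycle_start_two_edges {G : SimpleGraph V} {v : V} {c : G.Walk v v} (hc : c.IsCycle) :
    ∃ x y, x ≠ y ∧ s(v, x) ∈ c.edges ∧ s(v, y) ∈ c.edges := by
  cases c with
  | nil => exact absurd rfl ((SimpleGraph.Walk.isCycle_def _).mp hc).2.1
  | @cons _ x _ h q =>
    have hvx : v ≠ x := h.ne
    obtain ⟨y, hy, q2, hq2⟩ := SimpleGraph.Walk.exists_eq_cons_of_ne hvx q.reverse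
    have hyedge : s(v, y) ∈ q.edges := by
      have h1 : s(v, y) ∈ q.reverse.edges := by
        rw [hq2, SimpleGraph.Walk.edges_cons]; exact List.mem_cons_self
      rwa [SimpleGraph.Walk.edges_reverse, List.mem_reverse] at h1
    have hnodup : (SimpleGraph.Walk.cons h q).edges.Nodup :=
      ((SimpleGraph.Walk.isCycle_def _).mp hc).1.edges_nodup
    rw [SimpleGraph.Walk.edges_cons] at hnodup
    have hxy : x ≠ y := by
      rintro rfl
      exact (List.nodup_cons.mp hnodup).1 hyedge
    exact ⟨x, y, hxy, by simp, List.mem_cons_of_mem _ hyedge⟩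

lemma path_interior_two_edges {G : SimpleGraph V} :
    ∀ {a b : V} (p : G.Walk a b), p.IsPath → ∀ v ∈ p.support, v ≠ a → v ≠ b →
      ∃ x y, x ≠ y ∧ s(v, x) ∈ p.edges ∧ s(v, y) ∈ p.edges
  | a, _, SimpleGraph.Walk.nil, hp, v, hv, hva, hvb => by
      simp only [SimpleGraph.Walk.support_nil, List.mem_singleton] at hv
      exact absurd hv hva
  | a, b, @SimpleGraph.Walk.cons _ _ _ c _ h q, hp, v, hv, hva, hvb => by
      rw [SimpleGraph.Walk.support_cons, List.mem_cons] at hv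
      rcases hv with rfl | hv
      · exact absurd rfl hva
      by_cases hvc : v = c
      · subst hvc
        cases q with
        | nil => exact absurd rfl hvb
        | @cons _ d _ h2 q2 =>
          refine ⟨a, d, ?_, ?_, ?_⟩
          · have haq : a ∉ (SimpleGraph.Walk.cons h2 q2).support :=
              ((SimpleGraph.Walk.cons_isPath_iff _ _).mp hp).2
            intro had
            refine haq ?_
            rw [SimpleGraph.Walk.support_cons, had]
            exact List.mem_cons_of_mem _ q2.start_mem_support
          · rw [SimpleGraph.Walk.edges_cons, Sym2.eq_swap]
            exact List.mem_cons_self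
          · rw [SimpleGraph.Walk.edges_cons]
            refine List.mem_cons_of_mem _ ?_
            rw [SimpleGraph.Walk.edges_cons]
            exact List.mem_cons_self
      · obtain ⟨x, y, hxy, hex, hey⟩ :=
          path_interior_two_edges q ((SimpleGraph.Walk.cons_isPath_iff _ _).mp hp).1 v hv hvc hvb
        exact ⟨x, y, hxy, List.mem_cons_of_mem _ hex, List.mem_cons_of_mem _ hey⟩


end Walks

variable {N : ℕ}

/-- Escape property: every vertex leaves `S` after finitely many iterations of `f`. -/
def Esc (S : Finset (Fin N)) (f : Fin N → Fin N) : Prop :=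
  ∀ x : Fin N, ∃ k, f^[k] x ∉ S

noncomputable def ht {S : Finset (Fin N)} {f : Fin N → Fin N} (h : Esc S f) (x : Fin N) : ℕ :=
  Nat.find (h x)

lemma ht_spec {S : Finset (Fin N)} {f : Fin N → Fin N} (h : Esc S f) (x : Fin N) :
    f^[ht h x] x ∉ S := Nat.find_spec (h x)

lemma ht_eq_zero_iff {S : Finset (Fin N)} {f : Fin N → Fin N} (h : Esc S f) (x : Fin N) :
    ht h x = 0 ↔ x ∉ S := by
  constructor
  · intro h0
    have := ht_spec h x
    rw [h0] at this
    simpa using this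
  · intro hx
    exact Nat.find_eq_zero (h x) |>.mpr (by simpa using hx)

lemma ht_succ {S : Finset (Fin N)} {f : Fin N → Fin N} (h : Esc S f) {x : Fin N} (hx : x ∈ S) :
    ht h x = ht h (f x) + 1 := by
  have h1 : f^[ht h (f x)] (f x) ∉ S := ht_spec h (f x)
  have h2 : f^[ht h (f x) + 1] x ∉ S := by
    rw [Function.iterate_succ_apply]; exact h1
  have le1 : ht h x ≤ ht h (f x) + 1 := Nat.find_le h2
  have h3 : ht h x ≠ 0 := by
    rw [Ne, ht_eq_zero_iff h x]; simpa using hx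
  obtain ⟨m, hm⟩ := Nat.exists_eq_succ_of_ne_zero h3
  have h4 : f^[ht h x] x ∉ S := ht_spec h x
  rw [hm, Function.iterate_succ_apply] at h4
  have le2 : ht h (f x) ≤ m := Nat.find_le h4
  omega

lemma exists_cycle_of_not_esc {S : Finset (Fin N)} {f : Fin N → Fin N} (h : ¬ Esc S f) :
    ∃ C : Finset (Fin N), C.Nonempty ∧ C ⊆ S ∧ C.image f = C := by
  unfold Esc at h
  push_neg at h
  obtain ⟨x, hx⟩ := h
  have hx' : ∀ k, f^[k] x ∈ S := hx
  obtain ⟨a, b, hab, heq⟩ : ∃ a b : ℕ, a < b ∧ f^[a] x = f^[b] x := by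
    obtain ⟨a, b, hne, heq⟩ :=
      Finite.exists_ne_map_eq_of_infinite (fun k : ℕ => f^[k] x)
    rcases (Ne.lt_or_gt hne) with hlt | hlt
    · exact ⟨a, b, hlt, heq⟩
    · exact ⟨b, a, hlt, heq.symm⟩
  refine ⟨(Finset.range (b - a)).image (fun k => f^[a + k] x), ?_, ?_, ?_⟩
  · exact ⟨f^[a] x, Finset.mem_image.mpr ⟨0, by simp [hab, Nat.sub_pos_of_lt hab], by simp⟩⟩
  · intro y hy
    obtain ⟨k, -, rfl⟩ := Finset.mem_image.mp hy
    exact hx' _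
  · apply Finset.Subset.antisymm
    · intro y hy
      rw [Finset.image_image] at hy
      obtain ⟨k, hk, rfl⟩ := Finset.mem_image.mp hy
      rw [Finset.mem_range] at hk
      have hcomp : f (f^[a + k] x) = f^[a + k + 1] x := (Function.iterate_succ_apply' f _ x).symm
      simp only [Function.comp_apply]
      rw [hcomp]
      rcases Nat.lt_or_ge (k + 1) (b - a) with hk1 | hk1
      · exact Finset.mem_image.mpr ⟨k + 1, Finset.mem_range.mpr hk1, by ring_nf⟩
      · have hkeq : k + 1 = b - a := by omega
        have : a + k + 1 = b := by omega
        rw [this, ← heq]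
        exact Finset.mem_image.mpr ⟨0, Finset.mem_range.mpr (by omega), by simp⟩
    · intro y hy
      obtain ⟨k, hk, rfl⟩ := Finset.mem_image.mp hy
      rw [Finset.mem_range] at hk
      rw [Finset.image_image]
      rcases Nat.eq_zero_or_pos k with rfl | hkpos
      · refine Finset.mem_image.mpr ⟨b - a - 1, Finset.mem_range.mpr (by omega), ?_⟩
        simp only [Function.comp_apply]
        have h1 : f (f^[a + (b - a - 1)] x) = f^[a + (b - a - 1) + 1] x :=
          (Function.iterate_succ_apply' f _ x).symm
        rw [h1]
        have : a + (b - a - 1) + 1 = b := by omega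
        rw [this, ← heq]
        simp
      · refine Finset.mem_image.mpr ⟨k - 1, Finset.mem_range.mpr (by omega), ?_⟩
        simp only [Function.comp_apply]
        have h1 : f (f^[a + (k - 1)] x) = f^[a + (k - 1) + 1] x :=
          (Function.iterate_succ_apply' f _ x).symm
        rw [h1]
        congr 1
        omega


noncomputable def pm (S : Finset (Fin N)) (r : {x // x ∈ S} → Fin N) : Fin N → Fin N :=
  fun x => if h : x ∈ S then r ⟨x, h⟩ else x

lemma pm_mem {S : Finset (Fin N)} (r : {x // x ∈ S} → Fin N) (i : {x // x ∈ S}) :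
    pm S r ↑i = r i := by
  rw [pm, dif_pos i.2, Subtype.coe_eta]

/-- The forest associated to a parent map. -/
def Fo (S : Finset (Fin N)) (f : Fin N → Fin N) : Finset (Sym2 (Fin N)) :=
  S.image fun v => s(v, f v)

lemma Fo_cases {S : Finset (Fin N)} {f : Fin N → Fin N} {w z : Fin N}
    (h : s(w, z) ∈ Fo S f) : (w ∈ S ∧ z = f w) ∨ (z ∈ S ∧ w = f z) := by
  obtain ⟨v, hv, hve⟩ := Finset.mem_image.mp h
  rw [Sym2.eq_iff] at hve
  rcases hve with ⟨rfl, rfl⟩ | ⟨rfl, rfl⟩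
  · exact Or.inl ⟨hv, rfl⟩
  · exact Or.inr ⟨hv, rfl⟩

lemma adj_Fo {S : Finset (Fin N)} {f : Fin N → Fin N} (hne : ∀ v ∈ S, f v ≠ v)
    {v : Fin N} (hv : v ∈ S) :
    (SimpleGraph.fromEdgeSet (↑(Fo S f) : Set (Sym2 (Fin N)))).Adj v (f v) := by
  rw [SimpleGraph.fromEdgeSet_adj]
  exact ⟨Finset.mem_coe.mpr (Finset.mem_image.mpr ⟨v, hv, rfl⟩), (hne v hv).symm⟩

lemma edge_walk_mem_Fo {S : Finset (Fin N)} {f : Fin N → Fin N} {u w : Fin N}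
    {p : (SimpleGraph.fromEdgeSet (↑(Fo S f) : Set (Sym2 (Fin N)))).Walk u w}
    {e : Sym2 (Fin N)} (he : e ∈ p.edges) : e ∈ Fo S f := by
  have h1 := p.edges_subset_edgeSet he
  rw [SimpleGraph.edgeSet_fromEdgeSet] at h1
  exact Finset.mem_coe.mp h1.1

/-- max-height-kills-edges: an edge at `w` whose other endpoint has height at most that of
`w` must go to the parent of `w`. -/
lemma no_big {S : Finset (Fin N)} {f : Fin N → Fin N} (hesc : Esc S f) {w z : Fin N}
    (hwz : s(w, z) ∈ Fo S f) (hmax : ht hesc z ≤ ht hesc w) : z = f w := by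
  rcases Fo_cases hwz with ⟨-, hz⟩ | ⟨hzS, rfl⟩
  · exact hz
  · have := ht_succ hesc hzS
    omega

lemma acyclic_Fo {S : Finset (Fin N)} {f : Fin N → Fin N} (hesc : Esc S f) :
    (SimpleGraph.fromEdgeSet (↑(Fo S f) : Set (Sym2 (Fin N)))).IsAcyclic := by
  intro v c hc
  obtain ⟨w, hw, hwmax⟩ := Finset.exists_max_image c.support.toFinset (ht hesc)
    ⟨v, List.mem_toFinset.mpr c.start_mem_support⟩
  have hw' : w ∈ c.support := List.mem_toFinset.mp hw
  obtain ⟨x, y, hxy, hex, hey⟩ := cycle_start_two_edges (hc.rotate hw')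
  have hex' : s(w, x) ∈ c.edges := ((c.rotate_edges w hw').mem_iff).mp hex
  have hey' : s(w, y) ∈ c.edges := ((c.rotate_edges w hw').mem_iff).mp hey
  have hxs : x ∈ c.support := c.snd_mem_support_of_mem_edges hex'
  have hys : y ∈ c.support := c.snd_mem_support_of_mem_edges hey'
  have h1 : x = f w := no_big hesc (edge_walk_mem_Fo hex')
    (hwmax x (List.mem_toFinset.mpr hxs))
  have h2 : y = f w := no_big hesc (edge_walk_mem_Fo hey')
    (hwmax y (List.mem_toFinset.mpr hys))
  exact hxy (h1.trans h2.symm)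

lemma reach_root {S : Finset (Fin N)} {f : Fin N → Fin N} (hne : ∀ v ∈ S, f v ≠ v)
    (hesc : Esc S f) (x : Fin N) :
    (SimpleGraph.fromEdgeSet (↑(Fo S f) : Set (Sym2 (Fin N)))).Reachable x (f^[ht hesc x] x) := by
  suffices H : ∀ n x, ht hesc x ≤ n →
      (SimpleGraph.fromEdgeSet (↑(Fo S f) : Set (Sym2 (Fin N)))).Reachable x (f^[ht hesc x] x) by
    exact H (ht hesc x) x le_rfl
  intro n
  induction n with
  | zero =>
    intro x hx
    have h0 : ht hesc x = 0 := Nat.le_zero.mp hx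
    rw [h0]
    exact SimpleGraph.Reachable.refl x
  | succ n ih =>
    intro x hx
    by_cases hxs : x ∈ S
    · have hsucc := ht_succ hesc hxs
      have h1 := (adj_Fo hne hxs).reachable
      have h2 := ih (f x) (by omega)
      have h3 : f^[ht hesc (f x)] (f x) = f^[ht hesc x] x := by
        rw [hsucc, Function.iterate_succ_apply]
      exact h1.trans (h3 ▸ h2)
    · have h0 : ht hesc x = 0 := (ht_eq_zero_iff hesc x).mpr hxs
      rw [h0]
      exact SimpleGraph.Reachable.refl x

/-- Two distinct vertices outside `S` are not reachable from each other. -/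
lemma root_unique {S : Finset (Fin N)} {f : Fin N → Fin N} (hesc : Esc S f)
    {z₁ z₂ : Fin N} (h1 : z₁ ∉ S) (h2 : z₂ ∉ S)
    (hreach : (SimpleGraph.fromEdgeSet (↑(Fo S f) : Set (Sym2 (Fin N)))).Reachable z₁ z₂) :
    z₁ = z₂ := by
  by_contra hne'
  obtain ⟨w⟩ := hreach
  set p := w.bypass with hp_def
  have hp : p.IsPath := w.bypass_isPath
  obtain ⟨m, hm, hmax⟩ := Finset.exists_max_image p.support.toFinset (ht hesc)
    ⟨z₁, List.mem_toFinset.mpr p.start_mem_support⟩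
  have hm' : m ∈ p.support := List.mem_toFinset.mp hm
  by_cases hmS : m ∈ S
  · have hmz₁ : m ≠ z₁ := fun h => h1 (h ▸ hmS)
    have hmz₂ : m ≠ z₂ := fun h => h2 (h ▸ hmS)
    obtain ⟨x, y, hxy, hex, hey⟩ := path_interior_two_edges p hp m hm' hmz₁ hmz₂
    have hxs : x ∈ p.support := p.snd_mem_support_of_mem_edges hex
    have hys : y ∈ p.support := p.snd_mem_support_of_mem_edges hey
    have e1 : x = f m := no_big hesc (edge_walk_mem_Fo hex)
      (hmax x (List.mem_toFinset.mpr hxs))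
    have e2 : y = f m := no_big hesc (edge_walk_mem_Fo hey)
      (hmax y (List.mem_toFinset.mpr hys))
    exact hxy (e1.trans e2.symm)
  · -- all heights are 0; but the first edge has an endpoint in S
    obtain ⟨x₀, h, q, hq⟩ := SimpleGraph.Walk.exists_eq_cons_of_ne hne' p
    have hedge : s(z₁, x₀) ∈ Fo S f := by
      refine edge_walk_mem_Fo (p := p) ?_
      rw [hq, SimpleGraph.Walk.edges_cons]
      exact List.mem_cons_self
    have hm0 : ht hesc m = 0 := (ht_eq_zero_iff hesc m).mpr hmS
    rcases Fo_cases hedge with ⟨hz₁S, -⟩ | ⟨hx₀S, -⟩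
    · exact h1 hz₁S
    · have hx₀sup : x₀ ∈ p.support := by
        rw [hq, SimpleGraph.Walk.support_cons]
        exact List.mem_cons_of_mem _ q.start_mem_support
      have := hmax x₀ (List.mem_toFinset.mpr hx₀sup)
      rw [hm0, Nat.le_zero] at this
      exact (ht_eq_zero_iff hesc x₀).mp this hx₀S

lemma roots_Fo {S : Finset (Fin N)} {f : Fin N → Fin N} (hne : ∀ v ∈ S, f v ≠ v)
    (hesc : Esc S f)
    (c : (SimpleGraph.fromEdgeSet (↑(Fo S f) : Set (Sym2 (Fin N)))).ConnectedComponent) :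
    ∃! v : Fin N, v ∈ c.supp ∧ v ∉ S := by
  obtain ⟨x, rfl⟩ := c.exists_rep
  refine ⟨f^[ht hesc x] x, ⟨?_, ht_spec hesc x⟩, ?_⟩
  · refine (SimpleGraph.ConnectedComponent.mem_supp_iff _ _).mpr ?_
    exact SimpleGraph.ConnectedComponent.sound (reach_root hne hesc x).symm
  · rintro y ⟨hy, hyS⟩
    replace hy := (SimpleGraph.ConnectedComponent.mem_supp_iff _ _).mp hy
    have hreach : (SimpleGraph.fromEdgeSet (↑(Fo S f) : Set (Sym2 (Fin N)))).Reachable y (f^[ht hesc x] x) := by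
      refine (SimpleGraph.ConnectedComponent.exact hy).trans ?_
      exact reach_root hne hesc x
    exact root_unique hesc hyS (ht_spec hesc x) hreach

lemma Fo_map_inj {S : Finset (Fin N)} {f : Fin N → Fin N} (hesc : Esc S f) :
    ∀ v ∈ S, ∀ w ∈ S, s(v, f v) = s(w, f w) → v = w := by
  intro v hv w hw heq
  rw [Sym2.eq_iff] at heq
  rcases heq with ⟨rfl, -⟩ | ⟨h1, h2⟩
  · rfl
  · -- v = f w, f v = w
    have e1 := ht_succ hesc hv
    have e2 := ht_succ hesc hw
    rw [h2] at e1
    rw [← h1] at e2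
    omega


lemma surj_Fo {S : Finset (Fin N)} {F : Finset (Sym2 (Fin N))} (hF : IsPhiForest S F) :
    ∃ r : {x // x ∈ S} → Fin N, (∀ i : {x // x ∈ S}, r i ≠ ↑i) ∧ Esc S (pm S r) ∧
      Fo S (pm S r) = F := by
  classical
  obtain ⟨hnd, hacyc, hroot⟩ := hF
  set G := SimpleGraph.fromEdgeSet (↑F : Set (Sym2 (Fin N))) with hGdef
  have huni : ∀ ⦃u w : Fin N⦄ (p q : G.Path u w), p = q :=
    SimpleGraph.isAcyclic_iff_path_unique.mp hacyc
  -- the root of the component of each vertex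
  set ρ : Fin N → Fin N := fun v => (hroot (G.connectedComponentMk v)).choose with hρdef
  have hρsupp : ∀ v, ρ v ∈ (G.connectedComponentMk v).supp ∧ ρ v ∉ S :=
    fun v => (hroot (G.connectedComponentMk v)).choose_spec.1
  have hρuniq : ∀ v y, y ∈ (G.connectedComponentMk v).supp ∧ y ∉ S → y = ρ v :=
    fun v y hy => (hroot (G.connectedComponentMk v)).choose_spec.2 y hy
  have hρcongr : ∀ {u v}, G.connectedComponentMk u = G.connectedComponentMk v → ρ u = ρ v := by
    intro u v h
    simp only [hρdef, h]
  -- choice of the next vertex on the path to the root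
  have hnext : ∀ v, v ∈ S → ∃ x, ∃ (h : G.Adj v x) (q : G.Walk x (ρ v)),
      (SimpleGraph.Walk.cons h q).IsPath := by
    intro v hv
    have hvρ : v ≠ ρ v := fun h => (hρsupp v).2 (h ▸ hv)
    have hreach : G.Reachable v (ρ v) := by
      have := (hρsupp v).1
      rw [SimpleGraph.ConnectedComponent.mem_supp_iff] at this
      exact (SimpleGraph.ConnectedComponent.exact this).symm
    obtain ⟨w⟩ := hreach
    obtain ⟨x, h, q, hq⟩ := SimpleGraph.Walk.exists_eq_cons_of_ne hvρ w.bypass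
    have hp : w.bypass.IsPath := w.bypass_isPath
    rw [hq] at hp
    exact ⟨x, h, q, hp⟩
  set r : {x // x ∈ S} → Fin N := fun i => (hnext ↑i i.2).choose with hrdef
  have hadj : ∀ i : {x // x ∈ S}, G.Adj ↑i (r i) :=
    fun i => (hnext ↑i i.2).choose_spec.choose
  set q_ : ∀ i : {x // x ∈ S}, G.Walk (r i) (ρ ↑i) :=
    fun i => (hnext ↑i i.2).choose_spec.choose_spec.choose with hqdef
  have hP : ∀ i : {x // x ∈ S}, (SimpleGraph.Walk.cons (hadj i) (q_ i)).IsPath :=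
    fun i => (hnext ↑i i.2).choose_spec.choose_spec.choose_spec
  have hrne : ∀ i : {x // x ∈ S}, r i ≠ ↑i := fun i => (hadj i).ne'
  -- length decreases
  have hdec : ∀ (i : {x // x ∈ S}) (hri : r i ∈ S),
      (q_ ⟨r i, hri⟩).length + 1 < (q_ i).length + 1 := by
    intro i hri
    set j : {x // x ∈ S} := ⟨r i, hri⟩ with hjdef
    have hcomp : G.connectedComponentMk ↑j = G.connectedComponentMk ↑i :=
      SimpleGraph.ConnectedComponent.sound (hadj i).reachable.symm
    have hρeq : ρ ↑j = ρ ↑i := hρcongr hcomp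
    -- the walk `cons (hadj j) (q_ j)`, transported to end at `ρ ↑i`
    set w₂ : G.Walk ↑j (ρ ↑i) :=
      (SimpleGraph.Walk.cons (hadj j) (q_ j)).copy rfl hρeq with hw₂def
    have hw₂path : w₂.IsPath := by
      rw [hw₂def, SimpleGraph.Walk.isPath_copy]
      exact hP j
    have hq_i_path : (q_ i).IsPath := ((SimpleGraph.Walk.cons_isPath_iff _ _).mp (hP i)).1
    have heq2 : (⟨q_ i, hq_i_path⟩ : G.Path ↑j (ρ ↑i)) = ⟨w₂, hw₂path⟩ := huni _ _
    have hlen : (q_ i).length = w₂.length :=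
      congrArg SimpleGraph.Walk.length (Subtype.ext_iff.mp heq2)
    rw [hw₂def, SimpleGraph.Walk.length_copy, SimpleGraph.Walk.length_cons] at hlen
    omega
  have hesc : Esc S (pm S r) := by
    intro x
    by_cases hx : x ∈ S
    · suffices H : ∀ n (i : {x // x ∈ S}), (q_ i).length + 1 ≤ n →
          ∃ k, (pm S r)^[k] ↑i ∉ S by
        obtain ⟨k, hk⟩ := H ((q_ ⟨x, hx⟩).length + 1) ⟨x, hx⟩ le_rfl
        exact ⟨k, hk⟩
      intro n
      induction n with
      | zero => omega
      | succ n ih =>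
        intro i hi
        by_cases hri : r i ∈ S
        · obtain ⟨k, hk⟩ := ih ⟨r i, hri⟩ (by have := hdec i hri; omega)
          refine ⟨k + 1, ?_⟩
          rwa [Function.iterate_succ_apply, pm_mem]
        · exact ⟨1, by rwa [Function.iterate_one, pm_mem]⟩
    · exact ⟨0, by simpa using hx⟩
  refine ⟨r, hrne, hesc, ?_⟩
  -- the helper: for an edge with a ∈ S, the other endpoint is `r ⟨a⟩` or points back
  have helper : ∀ (a b : Fin N) (hadjab : G.Adj a b) (haS : a ∈ S),
      b = r ⟨a, haS⟩ ∨ (∃ hbS : b ∈ S, a = r ⟨b, hbS⟩) := by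
    intro a b hadjab haS
    set i : {x // x ∈ S} := ⟨a, haS⟩ with hidef
    by_cases hbS : b ∈ S
    · set j : {x // x ∈ S} := ⟨b, hbS⟩ with hjdef
      have hcomp : G.connectedComponentMk b = G.connectedComponentMk a :=
        SimpleGraph.ConnectedComponent.sound hadjab.reachable.symm
      have hρeq : ρ b = ρ a := hρcongr hcomp
      set pb : G.Walk b (ρ a) :=
        (SimpleGraph.Walk.cons (hadj j) (q_ j)).copy rfl hρeq with hpbdef
      have hpbpath : pb.IsPath := by
        rw [hpbdef, SimpleGraph.Walk.isPath_copy]; exact hP j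
      have hpbsupp : pb.support = b :: (r j) :: (q_ j).support.tail := by
        rw [hpbdef, SimpleGraph.Walk.support_copy, SimpleGraph.Walk.support_cons]
        exact congrArg (List.cons _) (q_ j).support_eq_cons
      by_cases hmem : a ∈ pb.support
      · by_cases hedge : s(b, a) ∈ pb.edges
        · obtain ⟨h', q', hq'⟩ := path_start_edge hpbpath hedge
          right
          refine ⟨hbS, ?_⟩
          have hsup : pb.support = b :: a :: q'.support.tail := by
            rw [hq', SimpleGraph.Walk.support_cons]
            exact congrArg (List.cons _) q'.support_eq_cons
          rw [hpbsupp] at hsup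
          have h3 : (r j : Fin N) = a := ((List.cons.injEq _ _ _ _).mp
            ((List.cons.injEq _ _ _ _).mp hsup).2).1
          exact h3.symm
        · exfalso
          set w := pb.takeUntil a hmem with hwdef
          have hwpath : w.IsPath := hpbpath.takeUntil hmem
          have hwe : s(a, b) ∉ w.edges := by
            intro hcon
            apply hedge
            rw [Sym2.eq_swap] at hcon
            exact pb.edges_takeUntil_subset hmem hcon
          exact hacyc (SimpleGraph.Walk.cons hadjab w)
            ((SimpleGraph.Walk.cons_isCycle_iff w hadjab).mpr ⟨hwpath, hwe⟩)
      · -- extend pb by the edge a-b to get the unique path from a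
        left
        set pa' : G.Walk a (ρ a) := SimpleGraph.Walk.cons hadjab pb with hpa'def
        have hpa'path : pa'.IsPath :=
          (SimpleGraph.Walk.cons_isPath_iff _ _).mpr ⟨hpbpath, hmem⟩
        have heq : (⟨pa', hpa'path⟩ : G.Path a (ρ a)) =
            ⟨SimpleGraph.Walk.cons (hadj i) (q_ i), hP i⟩ := huni _ _
        have hsup : pa'.support = (SimpleGraph.Walk.cons (hadj i) (q_ i)).support :=
          congrArg SimpleGraph.Walk.support (Subtype.ext_iff.mp heq)
        rw [hpa'def, SimpleGraph.Walk.support_cons, pb.support_eq_cons,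
          SimpleGraph.Walk.support_cons, (q_ i).support_eq_cons] at hsup
        exact ((List.cons.injEq _ _ _ _).mp ((List.cons.injEq _ _ _ _).mp hsup).2).1
    · -- b ∉ S: then b is the root of a's component
      left
      have hbroot : b = ρ a := by
        refine hρuniq a b ⟨?_, hbS⟩
        rw [SimpleGraph.ConnectedComponent.mem_supp_iff]
        exact SimpleGraph.ConnectedComponent.sound hadjab.reachable.symm
      set pa' : G.Walk a (ρ a) :=
        (SimpleGraph.Walk.cons hadjab SimpleGraph.Walk.nil).copy rfl hbroot with hpa'def
      have hpa'path : pa'.IsPath := by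
        rw [hpa'def, SimpleGraph.Walk.isPath_copy]
        rw [SimpleGraph.Walk.cons_isPath_iff]
        exact ⟨SimpleGraph.Walk.IsPath.nil, by simpa using hadjab.ne⟩
      have heq : (⟨pa', hpa'path⟩ : G.Path a (ρ a)) =
          ⟨SimpleGraph.Walk.cons (hadj i) (q_ i), hP i⟩ := huni _ _
      have hsup : pa'.support = (SimpleGraph.Walk.cons (hadj i) (q_ i)).support :=
        congrArg SimpleGraph.Walk.support (Subtype.ext_iff.mp heq)
      rw [hpa'def, SimpleGraph.Walk.support_copy, SimpleGraph.Walk.support_cons,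
        SimpleGraph.Walk.support_nil, SimpleGraph.Walk.support_cons,
        (q_ i).support_eq_cons] at hsup
      exact ((List.cons.injEq _ _ _ _).mp ((List.cons.injEq _ _ _ _).mp hsup).2).1
  -- now prove Fo S (pm S r) = F
  apply Finset.Subset.antisymm
  · intro e he
    obtain ⟨v, hv, rfl⟩ := Finset.mem_image.mp he
    have : G.Adj v (pm S r v) := by
      rw [pm, dif_pos hv]
      exact hadj ⟨v, hv⟩
    rw [hGdef, SimpleGraph.fromEdgeSet_adj] at this
    exact Finset.mem_coe.mp this.1
  · intro e he
    induction e using Sym2.ind with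
    | _ a b =>
      have hab : a ≠ b := fun h => hnd _ he (by rw [h]; exact Sym2.mk_isDiag_iff.mpr rfl)
      have hadjab : G.Adj a b := by
        rw [hGdef, SimpleGraph.fromEdgeSet_adj]
        exact ⟨Finset.mem_coe.mpr he, hab⟩
      by_cases haS : a ∈ S
      · rcases helper a b hadjab haS with hb | ⟨hbS, ha⟩
        · refine Finset.mem_image.mpr ⟨a, haS, ?_⟩
          rw [pm, dif_pos haS, ← hb]
        · refine Finset.mem_image.mpr ⟨b, hbS, ?_⟩
          rw [pm, dif_pos hbS, ← ha, Sym2.eq_swap]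
      · by_cases hbS : b ∈ S
        · rcases helper b a hadjab.symm hbS with ha | ⟨haS', hb⟩
          · refine Finset.mem_image.mpr ⟨b, hbS, ?_⟩
            rw [pm, dif_pos hbS, ← ha, Sym2.eq_swap]
          · exact absurd haS' haS
        · -- both outside S: contradiction with uniqueness of the root
          exfalso
          have h1 : a ∈ (G.connectedComponentMk a).supp ∧ a ∉ S := ⟨by simp, haS⟩
          have h2 : b ∈ (G.connectedComponentMk a).supp ∧ b ∉ S := by
            refine ⟨?_, hbS⟩
            rw [SimpleGraph.ConnectedComponent.mem_supp_iff]
            exact SimpleGraph.ConnectedComponent.sound hadjab.reachable.symm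
          exact hab ((hρuniq a a h1).trans (hρuniq a b h2).symm)


/-- Row vector `e_i - e_w` (restricted to `S`). -/
def uRow (S : Finset (Fin N)) (i : {x // x ∈ S}) (w : Fin N) : {x // x ∈ S} → ℝ :=
  fun j => (if (j : Fin N) = ↑i then (1:ℝ) else 0) - (if (j : Fin N) = w then (1:ℝ) else 0)

noncomputable def Rm (S : Finset (Fin N)) (r : {x // x ∈ S} → Fin N) :
    Matrix {x // x ∈ S} {x // x ∈ S} ℝ :=
  fun i => uRow S i (r i)

lemma row_decomp (J : Matrix (Fin N) (Fin N) ℝ) (hrow : ∀ i, ∑ j, J i j = 0)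
    (S : Finset (Fin N)) (i : {x // x ∈ S}) :
    (fun j : {x // x ∈ S} => - J ↑i ↑j)
      = ∑ w ∈ Finset.univ.erase (↑i : Fin N), J ↑i w • uRow S i w := by
  funext j
  rw [Finset.sum_apply]
  simp only [Pi.smul_apply, smul_eq_mul, uRow, mul_sub]
  rw [Finset.sum_sub_distrib]
  have h1 : ∑ w ∈ Finset.univ.erase (↑i : Fin N),
      J ↑i w * (if (j : Fin N) = ↑i then (1:ℝ) else 0)
      = (if (j : Fin N) = ↑i then (1:ℝ) else 0) * (- J ↑i ↑i) := by
    rw [← Finset.sum_mul]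
    have : ∑ w ∈ Finset.univ.erase (↑i : Fin N), J ↑i w = - J ↑i ↑i := by
      have h2 := Finset.add_sum_erase Finset.univ (fun w => J ↑i w)
        (Finset.mem_univ (↑i : Fin N))
      have h3 := hrow ↑i
      rw [h3] at h2
      linarith
    rw [this]
    ring
  have h2 : ∑ w ∈ Finset.univ.erase (↑i : Fin N),
      J ↑i w * (if (j : Fin N) = w then (1:ℝ) else 0)
      = if (↑j : Fin N) ∈ Finset.univ.erase (↑i : Fin N) then J ↑i ↑j else 0 := by
    rw [← Finset.sum_ite_eq (Finset.univ.erase (↑i : Fin N)) (↑j : Fin N) (fun w => J ↑i w)]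
    apply Finset.sum_congr rfl
    intro w _
    by_cases h : (↑j : Fin N) = w
    · simp [h]
    · simp [h]
  rw [h1, h2]
  by_cases hj : (↑j : Fin N) = ↑i
  · have : j = i := Subtype.ext hj
    subst this
    simp
  · simp [hj, Subtype.ext_iff]

lemma det_expand (J : Matrix (Fin N) (Fin N) ℝ) (hrow : ∀ i, ∑ j, J i j = 0)
    (S : Finset (Fin N)) :
    (Matrix.of fun i j : {x // x ∈ S} => - J ↑i ↑j).det
      = ∑ r ∈ Fintype.piFinset (fun i : {x // x ∈ S} => Finset.univ.erase (↑i : Fin N)),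
          (∏ i : {x // x ∈ S}, J ↑i (r i)) * (Rm S r).det := by
  have h1 : (Matrix.of fun i j : {x // x ∈ S} => - J ↑i ↑j)
      = fun i : {x // x ∈ S} =>
          ∑ w ∈ Finset.univ.erase (↑i : Fin N), J ↑i w • uRow S i w := by
    funext i
    exact row_decomp J hrow S i
  have h2 := MultilinearMap.map_sum_finset
    (Matrix.detRowAlternating (n := {x // x ∈ S}) (R := ℝ)).toMultilinearMap
    (fun (i : {x // x ∈ S}) (w : Fin N) => J ↑i w • uRow S i w)
    (fun (i : {x // x ∈ S}) => Finset.univ.erase (↑i : Fin N))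
  have h3 : ∀ r : {x // x ∈ S} → Fin N,
      (Matrix.detRowAlternating (n := {x // x ∈ S}) (R := ℝ)).toMultilinearMap
        (fun i : {x // x ∈ S} => J ↑i (r i) • uRow S i (r i))
      = (∏ i : {x // x ∈ S}, J ↑i (r i)) * (Rm S r).det := by
    intro r
    have h4 := MultilinearMap.map_smul_univ
      (Matrix.detRowAlternating (n := {x // x ∈ S}) (R := ℝ)).toMultilinearMap
      (fun i : {x // x ∈ S} => J ↑i (r i)) (fun i : {x // x ∈ S} => uRow S i (r i))
    rw [h4, smul_eq_mul]
    rfl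
  calc (Matrix.of fun i j : {x // x ∈ S} => - J ↑i ↑j).det
      = (Matrix.detRowAlternating (n := {x // x ∈ S}) (R := ℝ)).toMultilinearMap
        (fun i : {x // x ∈ S} =>
          ∑ w ∈ Finset.univ.erase (↑i : Fin N), J ↑i w • uRow S i w) := by
        rw [show ((Matrix.detRowAlternating (n := {x // x ∈ S}) (R := ℝ)).toMultilinearMap :
            MultilinearMap ℝ (fun _ : {x // x ∈ S} => {x // x ∈ S} → ℝ) ℝ)
            (fun i : {x // x ∈ S} =>
              ∑ w ∈ Finset.univ.erase (↑i : Fin N), J ↑i w • uRow S i w)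
          = Matrix.detRowAlternating
            (fun i : {x // x ∈ S} =>
              ∑ w ∈ Finset.univ.erase (↑i : Fin N), J ↑i w • uRow S i w) from rfl]
        rw [← h1]
        rfl
    _ = ∑ r ∈ Fintype.piFinset (fun i : {x // x ∈ S} => Finset.univ.erase (↑i : Fin N)),
          (Matrix.detRowAlternating (n := {x // x ∈ S}) (R := ℝ)).toMultilinearMap
            (fun i : {x // x ∈ S} => J ↑i (r i) • uRow S i (r i)) := h2
    _ = ∑ r ∈ Fintype.piFinset (fun i : {x // x ∈ S} => Finset.univ.erase (↑i : Fin N)),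
          (∏ i : {x // x ∈ S}, J ↑i (r i)) * (Rm S r).det :=
        Finset.sum_congr rfl (fun r _ => h3 r)

lemma detR_one (S : Finset (Fin N)) (r : {x // x ∈ S} → Fin N)
    (hne : ∀ i : {x // x ∈ S}, r i ≠ ↑i) (hesc : Esc S (pm S r)) :
    (Rm S r).det = 1 := by
  classical
  set n := Fintype.card {x // x ∈ S} with hn
  set e : {x // x ∈ S} ≃ Fin n := Fintype.equivFin _ with he
  set g : Fin n → ℕ := fun k => ht hesc ↑(e.symm k) with hg
  set σ := Tuple.sort g with hσ
  set ψ : Fin n ≃ {x // x ∈ S} := σ.trans e.symm with hψ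
  have hmono : Monotone (g ∘ σ) := Tuple.monotone_sort g
  have hhtψ : ∀ k, ht hesc ↑(ψ k) = (g ∘ σ) k := fun k => rfl
  rw [← Matrix.det_submatrix_equiv_self ψ (Rm S r)]
  rw [Matrix.det_of_lowerTriangular ((Rm S r).submatrix ψ ψ)]
  · apply Finset.prod_eq_one
    intro k _
    show uRow S (ψ k) (r (ψ k)) (ψ k) = 1
    rw [uRow]
    rw [if_pos rfl, if_neg (fun h => hne (ψ k) h.symm)]
    norm_num
  · intro k l hlt
    have hkl : k < l := hlt
    have h1 : ((ψ l : {x // x ∈ S}) : Fin N) ≠ ↑(ψ k) := by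
      intro hEq
      have : ψ l = ψ k := Subtype.ext hEq
      have : l = k := ψ.injective this
      omega
    have h2 : ((ψ l : {x // x ∈ S}) : Fin N) ≠ r (ψ k) := by
      intro hEq
      have hS : ((ψ k : {x // x ∈ S}) : Fin N) ∈ S := (ψ k).2
      have hsucc : ht hesc ↑(ψ k) = ht hesc (pm S r ↑(ψ k)) + 1 := ht_succ hesc hS
      rw [pm_mem] at hsucc
      have hmono' : ht hesc ↑(ψ k) ≤ ht hesc ↑(ψ l) := by
        rw [hhtψ, hhtψ]
        exact hmono (le_of_lt hkl)
      rw [← hEq] at hsucc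
      omega
    show uRow S (ψ k) (r (ψ k)) (ψ l) = 0
    rw [uRow, if_neg h1, if_neg h2]
    norm_num

lemma detR_zero (S : Finset (Fin N)) (r : {x // x ∈ S} → Fin N)
    (hnesc : ¬ Esc S (pm S r)) : (Rm S r).det = 0 := by
  classical
  obtain ⟨C, hCne, hCS, hCim⟩ := exists_cycle_of_not_esc hnesc
  have hinj : Set.InjOn (pm S r) ↑C := by
    apply Finset.card_image_iff.mp
    rw [hCim]
  rw [← Matrix.det_transpose]
  rw [← Matrix.exists_mulVec_eq_zero_iff]
  refine ⟨(fun i => if (↑i : Fin N) ∈ C then (1:ℝ) else 0), ?_, ?_⟩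
  · obtain ⟨c, hc⟩ := hCne
    intro h0
    have := congrFun h0 ⟨c, hCS hc⟩
    simp only [Pi.zero_apply] at this
    rw [if_pos hc] at this
    exact one_ne_zero this
  · funext j
    simp only [Matrix.mulVec, dotProduct, Matrix.transpose_apply, Pi.zero_apply,
      Rm, uRow]
    simp only [sub_mul]
    rw [Finset.sum_sub_distrib]
    have hA : ∑ i : {x // x ∈ S},
        (if (↑j : Fin N) = ↑i then (1:ℝ) else 0) * (if (↑i : Fin N) ∈ C then (1:ℝ) else 0)
        = if (↑j : Fin N) ∈ C then (1:ℝ) else 0 := by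
      rw [Finset.sum_eq_single j]
      · rw [if_pos rfl, one_mul]
      · intro i _ hij
        rw [if_neg (fun h => hij (Subtype.ext h.symm)), zero_mul]
      · intro h
        exact absurd (Finset.mem_univ j) h
    have hB : ∑ i : {x // x ∈ S},
        (if (↑j : Fin N) = r i then (1:ℝ) else 0) * (if (↑i : Fin N) ∈ C then (1:ℝ) else 0)
        = if (↑j : Fin N) ∈ C then (1:ℝ) else 0 := by
      by_cases hjC : (↑j : Fin N) ∈ C
      · rw [if_pos hjC]
        have : (↑j : Fin N) ∈ C.image (pm S r) := hCim.symm ▸ hjC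
        obtain ⟨a, haC, hfa⟩ := Finset.mem_image.mp this
        have haS : a ∈ S := hCS haC
        rw [Finset.sum_eq_single ⟨a, haS⟩]
        · have : r ⟨a, haS⟩ = (↑j : Fin N) := by
            rw [← pm_mem r ⟨a, haS⟩]; exact hfa
          rw [if_pos this.symm, if_pos haC, one_mul]
        · intro i _ hia
          by_cases hiC : (↑i : Fin N) ∈ C
          · by_cases hji : (↑j : Fin N) = r i
            · exfalso
              have hpmi : pm S r ↑i = r i := pm_mem r i
              have hpma : pm S r a = ↑j := hfa
              have : (↑i : Fin N) = a := by
                apply hinj hiC haC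
                rw [hpmi, hpma, hji]
              exact hia (Subtype.ext this)
            · rw [if_neg hji, zero_mul]
          · rw [if_neg hiC, mul_zero]
        · intro h
          exact absurd (Finset.mem_univ _) h
      · rw [if_neg hjC]
        apply Finset.sum_eq_zero
        intro i _
        by_cases hiC : (↑i : Fin N) ∈ C
        · by_cases hji : (↑j : Fin N) = r i
          · exfalso
            apply hjC
            have : pm S r ↑i ∈ C.image (pm S r) :=
              Finset.mem_image.mpr ⟨↑i, hiC, rfl⟩
            rw [hCim, pm_mem] at this
            rwa [hji]
          · rw [if_neg hji, zero_mul]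
        · rw [if_neg hiC, mul_zero]
    rw [hA, hB, sub_self]



lemma edgeWeight_mk {J : Matrix (Fin N) (Fin N) ℝ} (hsym : J.IsSymm) (i j : Fin N) :
    edgeWeight J s(i, j) = J i j := by
  rcases le_total i j with h | h
  · rw [edgeWeight, Sym2.inf_mk, Sym2.sup_mk, inf_eq_left.mpr h, sup_eq_right.mpr h]
  · rw [edgeWeight, Sym2.inf_mk, Sym2.sup_mk, inf_eq_right.mpr h, sup_eq_left.mpr h]
    exact hsym.apply i j

lemma isPhiForest_Fo {S : Finset (Fin N)} {f : Fin N → Fin N} (hne : ∀ v ∈ S, f v ≠ v)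
    (hesc : Esc S f) : IsPhiForest S (Fo S f) := by
  refine ⟨?_, acyclic_Fo hesc, roots_Fo hne hesc⟩
  intro e he
  obtain ⟨v, hv, rfl⟩ := Finset.mem_image.mp he
  rw [Sym2.mk_isDiag_iff]
  exact fun h => hne v hv h.symm

lemma prod_Fo {S : Finset (Fin N)} (J : Matrix (Fin N) (Fin N) ℝ) (hsym : J.IsSymm)
    (r : {x // x ∈ S} → Fin N) (hesc : Esc S (pm S r)) :
    ∏ i : {x // x ∈ S}, J ↑i (r i) = ∏ e ∈ Fo S (pm S r), edgeWeight J e := by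
  rw [Fo, Finset.prod_image (Fo_map_inj hesc)]
  have h1 : ∀ v ∈ S, edgeWeight J s(v, pm S r v) = J v (pm S r v) :=
    fun v _ => edgeWeight_mk hsym v (pm S r v)
  rw [Finset.prod_congr rfl h1]
  rw [← Finset.prod_attach S (fun v => J v (pm S r v))]
  rw [Finset.univ_eq_attach]
  apply Finset.prod_congr rfl
  intro i _
  rw [pm_mem]

lemma Fo_inj_r {S : Finset (Fin N)} {r r' : {x // x ∈ S} → Fin N}
    (hesc : Esc S (pm S r))
    (heq : Fo S (pm S r) = Fo S (pm S r')) : r = r' := by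
  by_contra hne'
  have hT : (Finset.univ.filter (fun i : {x // x ∈ S} => r i ≠ r' i)).Nonempty := by
    by_contra h
    rw [Finset.not_nonempty_iff_eq_empty, Finset.filter_eq_empty_iff] at h
    apply hne'
    funext i
    exact not_not.mp (h (Finset.mem_univ i))
  obtain ⟨i₀, hi₀, hmin⟩ := Finset.exists_min_image _ (fun i : {x // x ∈ S} => ht hesc ↑i) hT
  have hi₀' : r i₀ ≠ r' i₀ := (Finset.mem_filter.mp hi₀).2
  have h1 : s((↑i₀ : Fin N), pm S r ↑i₀) ∈ Fo S (pm S r') := by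
    rw [← heq]
    exact Finset.mem_image.mpr ⟨↑i₀, i₀.2, rfl⟩
  rcases Fo_cases h1 with ⟨-, h2⟩ | ⟨h2S, h3⟩
  · apply hi₀'
    rw [← pm_mem r i₀, ← pm_mem r' i₀, h2]
  · set u : {x // x ∈ S} := ⟨pm S r ↑i₀, h2S⟩ with hudef
    have hfu' : r' u = ↑i₀ := by
      rw [← pm_mem r' u]
      exact h3.symm
    have hcoe_u : (↑u : Fin N) = pm S r ↑i₀ := rfl
    have e1 : ht hesc ↑i₀ = ht hesc (↑u : Fin N) + 1 := by
      have := ht_succ hesc i₀.2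
      rwa [← hcoe_u] at this
    have hne2 : r u ≠ r' u := by
      intro hEq
      have e2 : ht hesc (↑u : Fin N) = ht hesc (↑i₀ : Fin N) + 1 := by
        have h4 := ht_succ hesc h2S
        rw [← hcoe_u] at h4
        rw [show pm S r (↑u : Fin N) = r u from pm_mem r u, hEq, hfu'] at h4
        exact h4
      omega
    have hu_mem : u ∈ Finset.univ.filter (fun i : {x // x ∈ S} => r i ≠ r' i) :=
      Finset.mem_filter.mpr ⟨Finset.mem_univ u, hne2⟩
    have := hmin u hu_mem
    omega

lemma phi_eq_det (J : Matrix (Fin N) (Fin N) ℝ) (hsym : J.IsSymm)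
    (hrow : ∀ i, ∑ j, J i j = 0) (S : Finset (Fin N)) :
    Phi J S = (Matrix.of fun i j : {x // x ∈ S} => - J ↑i ↑j).det := by
  rw [det_expand J hrow S]
  rw [← Finset.sum_filter_add_sum_filter_not
    (Fintype.piFinset fun i : {x // x ∈ S} => Finset.univ.erase (↑i : Fin N))
    (fun r => Esc S (pm S r))]
  have hbad : ∑ r ∈ (Fintype.piFinset fun i : {x // x ∈ S} =>
        Finset.univ.erase (↑i : Fin N)).filter (fun r => ¬ Esc S (pm S r)),
      (∏ i : {x // x ∈ S}, J ↑i (r i)) * (Rm S r).det = 0 := by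
    apply Finset.sum_eq_zero
    intro r hr
    rw [detR_zero S r (Finset.mem_filter.mp hr).2, mul_zero]
  rw [hbad, add_zero]
  have hgood : ∀ r ∈ (Fintype.piFinset fun i : {x // x ∈ S} =>
        Finset.univ.erase (↑i : Fin N)).filter (fun r => Esc S (pm S r)),
      (∏ i : {x // x ∈ S}, J ↑i (r i)) * (Rm S r).det
        = ∏ i : {x // x ∈ S}, J ↑i (r i) := by
    intro r hr
    obtain ⟨hr1, hr2⟩ := Finset.mem_filter.mp hr
    have hne : ∀ i : {x // x ∈ S}, r i ≠ ↑i :=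
      fun i => (Finset.mem_erase.mp (Fintype.mem_piFinset.mp hr1 i)).1
    rw [detR_one S r hne hr2, mul_one]
  rw [Finset.sum_congr rfl hgood]
  rw [Phi]
  refine (Finset.sum_bij (fun r _ => Fo S (pm S r)) ?_ ?_ ?_ ?_).symm
  · intro r hr
    obtain ⟨hr1, hr2⟩ := Finset.mem_filter.mp hr
    have hne : ∀ v ∈ S, pm S r v ≠ v := by
      intro v hv
      have := (Finset.mem_erase.mp (Fintype.mem_piFinset.mp hr1 ⟨v, hv⟩)).1
      rw [pm, dif_pos hv]
      exact this
    exact Finset.mem_filter.mpr ⟨Finset.mem_univ _, isPhiForest_Fo hne hr2⟩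
  · intro r₁ hr₁ r₂ hr₂ hFo
    exact Fo_inj_r (Finset.mem_filter.mp hr₁).2 hFo
  · intro F hF
    obtain ⟨r, hrne, hresc, hrFo⟩ := surj_Fo (Finset.mem_filter.mp hF).2
    refine ⟨r, ?_, hrFo⟩
    refine Finset.mem_filter.mpr ⟨?_, hresc⟩
    exact Fintype.mem_piFinset.mpr
      (fun i => Finset.mem_erase.mpr ⟨hrne i, Finset.mem_univ _⟩)
  · intro r hr
    exact prod_Fo J hsym r (Finset.mem_filter.mp hr).2


end PhiProof

open Matrix in
/-- **Necessary topological stability conditions.**  If `J` is real symmetric with zero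
row sums and stable (negative semidefinite with kernel the span of the all-ones vector),
then `Φ_S > 0` for every nonempty proper subset `S`. -/
theorem phi_pos_of_stable (N : ℕ) (J : Matrix (Fin N) (Fin N) ℝ)
    (hsym : J.IsSymm) (hrow : ∀ i, ∑ j, J i j = 0) (hstab : IsStable J) :
    ∀ S : Finset (Fin N), S.Nonempty → S ≠ Finset.univ → 0 < Phi J S := by
  intro S hSne hSU
  rw [PhiProof.phi_eq_det J hsym hrow S]
  set M : Matrix {x // x ∈ S} {x // x ∈ S} ℝ :=
    Matrix.of fun i j : {x // x ∈ S} => - J ↑i ↑j with hMdef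
  have hsub : M = (-J).submatrix (fun i : {x // x ∈ S} => ↑i) (fun i : {x // x ∈ S} => ↑i) := by
    ext i j
    simp [hMdef, Matrix.submatrix_apply]
  have hpsd : M.PosSemidef := by
    rw [hsub]
    exact hstab.1.submatrix _
  apply Matrix.PosDef.det_pos
  refine Matrix.PosDef.of_dotProduct_mulVec_pos hpsd.1 ?_
  intro x hx
  set xh : Fin N → ℝ := fun w => if h : w ∈ S then x ⟨w, h⟩ else 0 with hxh
  have hxh_coe : ∀ i : {x // x ∈ S}, xh ↑i = x i := by
    intro i
    rw [hxh]
    simp only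
    rw [dif_pos i.2, Subtype.coe_eta]
  have inner : ∀ w : Fin N, ((-J) *ᵥ xh) w = ∑ j : {x // x ∈ S}, (-J) w ↑j * x j := by
    intro w
    show ∑ u, (-J) w u * xh u = _
    rw [show (∑ j : {x // x ∈ S}, (-J) w ↑j * x j)
        = ∑ j ∈ S.attach, (-J) w ↑j * xh ↑j by
      rw [Finset.univ_eq_attach]
      exact Finset.sum_congr rfl (fun j _ => by rw [hxh_coe])]
    rw [Finset.sum_attach S (fun u => (-J) w u * xh u)]
    symm
    apply Finset.sum_subset (Finset.subset_univ S)
    intro u _ huS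
    rw [hxh]
    simp only
    rw [dif_neg huS, mul_zero]
  have hdot : dotProduct (star x) (M *ᵥ x)
      = dotProduct (star xh) ((-J) *ᵥ xh) := by
    simp only [dotProduct, Pi.star_apply, star_trivial]
    rw [show (∑ i : {x // x ∈ S}, x i * (M *ᵥ x) i)
        = ∑ i ∈ S.attach, xh ↑i * ((-J) *ᵥ xh) ↑i by
      rw [Finset.univ_eq_attach]
      refine Finset.sum_congr rfl (fun i _ => ?_)
      rw [hxh_coe, inner]
      rfl]
    rw [Finset.sum_attach S (fun w => xh w * ((-J) *ᵥ xh) w)]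
    apply Finset.sum_subset (Finset.subset_univ S)
    intro u _ huS
    rw [hxh]
    simp only
    rw [dif_neg huS, zero_mul]
  rw [hdot]
  have hge : 0 ≤ dotProduct (star xh) ((-J) *ᵥ xh) := hstab.1.dotProduct_mulVec_nonneg xh
  refine lt_of_le_of_ne hge (fun h0 => ?_)
  have h1 : (-J) *ᵥ xh = 0 := (hstab.1.dotProduct_mulVec_zero_iff xh).mp h0.symm
  have h2 : J *ᵥ xh = 0 := by
    rw [Matrix.neg_mulVec, neg_eq_zero] at h1
    exact h1
  have h3 : xh ∈ LinearMap.ker J.mulVecLin := by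
    rw [LinearMap.mem_ker, Matrix.mulVecLin_apply]
    exact h2
  rw [hstab.2] at h3
  obtain ⟨c, hc⟩ := Submodule.mem_span_singleton.mp h3
  obtain ⟨w, hw⟩ : ∃ w, w ∉ S := by
    by_contra h
    push_neg at h
    exact hSU (Finset.eq_univ_iff_forall.mpr h)
  have hcw : c = 0 := by
    have := congrFun hc w
    rw [hxh] at this
    simp only [Pi.smul_apply, smul_eq_mul, mul_one] at this
    rw [dif_neg hw] at this
    exact this
  have hxh0 : xh = 0 := by
    rw [← hc, hcw, zero_smul]
  apply hx
  funext i
  have := congrFun hxh0 ↑i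
  rw [hxh_coe] at this
  exact this
end

section
/- Let J be an N×N real symmetric matrix with zero row sums. Suppose {1, …, N} can be partitioned into two nonempty disjoint sets I₁ and I₂ such that J_ij ≤ 0 for every i ∈ I₁ and every j ∈ I₂. Then J is not stable: J fails to be negative semidefinite with kernel equal to the span of the all-ones vector. -/
open scoped Classical

open Matrix in
/-- **Instability across a nonpositive cut.**  If the index set can be partitioned into two
nonempty sets `I₁`, `I₂` with `J i j ≤ 0` for all `i ∈ I₁`, `j ∈ I₂`, then the real
symmetric zero-row-sum matrix `J` is not stable. -/
theorem not_stable_of_nonpositive_cut (N : ℕ) (J : Matrix (Fin N) (Fin N) ℝ)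
    (hsym : J.IsSymm) (hrow : ∀ i, ∑ j, J i j = 0)
    (I₁ I₂ : Finset (Fin N)) (h1 : I₁.Nonempty) (h2 : I₂.Nonempty)
    (hdisj : Disjoint I₁ I₂) (hcover : I₁ ∪ I₂ = Finset.univ)
    (hcut : ∀ i ∈ I₁, ∀ j ∈ I₂, J i j ≤ 0) :
    ¬ IsStable J := by
  rintro ⟨hpsd, hker⟩
  set v : Fin N → ℝ := fun i => if i ∈ I₁ then 1 else 0 with hv
  -- quadratic form of J at v
  have hquad : star v ⬝ᵥ J *ᵥ v = ∑ i ∈ I₁, ∑ j ∈ I₁, J i j := by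
    simp [hv, dotProduct, Matrix.mulVec, mul_ite, ite_mul, mul_one, mul_zero,
      one_mul, zero_mul, Finset.sum_ite_mem]
  -- each row sum over I₁ is nonnegative for i ∈ I₁
  have hnn : 0 ≤ ∑ i ∈ I₁, ∑ j ∈ I₁, J i j := by
    apply Finset.sum_nonneg
    intro i hi
    have hsplit : ∑ j ∈ I₁, J i j + ∑ j ∈ I₂, J i j = 0 := by
      rw [← Finset.sum_union hdisj, hcover]; exact hrow i
    have h2' : ∑ j ∈ I₂, J i j ≤ 0 :=
      Finset.sum_nonpos fun j hj => hcut i hi j hj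
    linarith
  -- by PSD of -J, the quadratic form is ≤ 0, hence = 0
  have hle : star v ⬝ᵥ (-J) *ᵥ v = -(star v ⬝ᵥ J *ᵥ v) := by
    simp [Matrix.neg_mulVec, dotProduct_neg]
  have hge := hpsd.dotProduct_mulVec_nonneg v
  rw [hle, hquad] at hge
  have heq : star v ⬝ᵥ (-J) *ᵥ v = 0 := by
    rw [hle, hquad]
    have : (0:ℝ) ≤ -(∑ i ∈ I₁, ∑ j ∈ I₁, J i j) := by
      simpa using hge
    linarith
  have hkerv : (-J) *ᵥ v = 0 := (hpsd.dotProduct_mulVec_zero_iff v).mp heq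
  have hJv : J *ᵥ v = 0 := by
    have := congrArg Neg.neg hkerv
    simpa [Matrix.neg_mulVec] using this
  have hvmem : v ∈ LinearMap.ker J.mulVecLin := by
    simpa [Matrix.mulVecLin] using hJv
  rw [hker, Submodule.mem_span_singleton] at hvmem
  obtain ⟨c, hc⟩ := hvmem
  obtain ⟨i₁, hi₁⟩ := h1
  obtain ⟨i₂, hi₂⟩ := h2
  have hni₂ : i₂ ∉ I₁ := fun h => (Finset.disjoint_left.mp hdisj h) hi₂
  have e1 : v i₁ = c := by rw [← hc]; simp
  have e2 : v i₂ = c := by rw [← hc]; simp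
  rw [hv] at e1 e2
  simp [hi₁] at e1
  simp [hni₂] at e2
  rw [← e1] at e2
  exact one_ne_zero e2.symm
end

section
/- Forest expansion across a cut: with J, I₁, I₂, X, σ and τ as in the context, for every subset C of X one has Φ_{I₁∖C} = ∑_{B ⊆ X∖C} σ_B · τ_{B∪C}. -/
open scoped Classical

/-- `σ_B = ∏_{i ∈ B} σ_i` where `σ_i = ∑_{j ∈ I₂} J i j` (and `σ_∅ = 1`). -/
noncomputable def sigmaProd {N : ℕ} (J : Matrix (Fin N) (Fin N) ℝ)
    (I₂ B : Finset (Fin N)) : ℝ :=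
  ∏ i ∈ B, ∑ j ∈ I₂, J i j

/-- `F` is a forest whose edges join vertices of `I₁`, with vertex set `I₁` (isolated
vertices allowed), such that each of its connected components (within `I₁`) contains
exactly one element of `Y`. -/
def IsTauForest {N : ℕ} (I₁ Y : Finset (Fin N)) (F : Finset (Sym2 (Fin N))) : Prop :=
  (∀ e ∈ F, ¬ e.IsDiag ∧ ∀ v ∈ e, v ∈ I₁) ∧
  (SimpleGraph.fromEdgeSet (↑F : Set (Sym2 (Fin N)))).IsAcyclic ∧
  ∀ c : (SimpleGraph.fromEdgeSet (↑F : Set (Sym2 (Fin N)))).ConnectedComponent,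
    (∃ v ∈ c.supp, v ∈ I₁) → ∃! y : Fin N, y ∈ c.supp ∧ y ∈ Y

/-- `τ_Y`: the sum over all forests spanning `I₁` with exactly `|Y|` trees, each tree
containing exactly one element of `Y`, of the products of the edge weights. -/
noncomputable def tau {N : ℕ} (J : Matrix (Fin N) (Fin N) ℝ)
    (I₁ Y : Finset (Fin N)) : ℝ :=
  ∑ F ∈ Finset.univ.filter (fun F : Finset (Sym2 (Fin N)) => IsTauForest I₁ Y F),
    ∏ e ∈ F, edgeWeight J e

/-! ### Auxiliary material for the proof -/

section Aux
open SimpleGraph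
variable {N : ℕ}

/-- The graph of an edge finset. -/
noncomputable abbrev eGraph (F : Finset (Sym2 (Fin N))) : SimpleGraph (Fin N) :=
  SimpleGraph.fromEdgeSet (↑F : Set (Sym2 (Fin N)))

lemma eGraph_adj {F : Finset (Sym2 (Fin N))} {a b : Fin N} :
    (eGraph F).Adj a b ↔ s(a,b) ∈ F ∧ a ≠ b := by
  simp [eGraph]

lemma eGraph_mono {F₁ F₂ : Finset (Sym2 (Fin N))} (h : F₁ ⊆ F₂) :
    eGraph F₁ ≤ eGraph F₂ := by
  apply SimpleGraph.fromEdgeSet_mono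
  exact_mod_cast h

lemma acyclic_anti {F₁ F₂ : Finset (Sym2 (Fin N))} (h : F₁ ⊆ F₂)
    (hac : (eGraph F₂).IsAcyclic) : (eGraph F₁).IsAcyclic := by
  intro v c hc
  have hsub : ∀ e ∈ c.edges, e ∈ (eGraph F₂).edgeSet := fun e he =>
    SimpleGraph.edgeSet_mono (eGraph_mono h) (c.edges_subset_edgeSet he)
  exact hac (c.transfer _ hsub) (hc.transfer hsub)

/-- In a graph with all edges inside `I₁`, vertices outside `I₁` are isolated. -/
lemma isolated_of_internal {I₁ : Finset (Fin N)} {F₁ : Finset (Sym2 (Fin N))}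
    (hint : ∀ e ∈ F₁, ∀ v ∈ e, v ∈ I₁) {v w : Fin N} (hv : v ∉ I₁)
    (hr : (eGraph F₁).Reachable v w) : w = v := by
  obtain ⟨p⟩ := hr
  cases p with
  | nil => rfl
  | cons hadj p =>
    rw [eGraph_adj] at hadj
    exact absurd (hint _ hadj.1 v (by simp)) hv

/-- In a graph with all edges inside `I₁`, reachability preserves membership in `I₁`. -/
lemma reach_mem_of_internal {I₁ : Finset (Fin N)} {F₁ : Finset (Sym2 (Fin N))}
    (hint : ∀ e ∈ F₁, ∀ v ∈ e, v ∈ I₁) {v w : Fin N} (hv : v ∈ I₁)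
    (hr : (eGraph F₁).Reachable v w) : w ∈ I₁ := by
  obtain ⟨p⟩ := hr
  induction p with
  | nil => exact hv
  | cons hadj p ih =>
    rw [eGraph_adj] at hadj
    exact ih (hint _ hadj.1 _ (by simp))

lemma walk_support_internal {I₁ : Finset (Fin N)} {F₁ : Finset (Sym2 (Fin N))}
    (hint : ∀ e ∈ F₁, ∀ v ∈ e, v ∈ I₁) {u v : Fin N} (hu : u ∈ I₁)
    (p : (eGraph F₁).Walk u v) : ∀ w ∈ p.support, w ∈ I₁ := by
  induction p with
  | nil => intro w hw; rw [Walk.support_nil, List.mem_singleton] at hw; exact hw ▸ hu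
  | @cons a x c hadj p ih =>
    intro w hw
    rw [Walk.support_cons] at hw
    rcases List.mem_cons.1 hw with h | h
    · exact h ▸ hu
    · exact ih (hint _ (eGraph_adj.1 hadj).1 x (by simp)) w h

lemma acyclic_insert {F : Finset (Sym2 (Fin N))} {a b : Fin N} (hab : a ≠ b)
    (hnr : ¬ (eGraph F).Reachable a b) (hac : (eGraph F).IsAcyclic) :
    (eGraph (insert s(a,b) F)).IsAcyclic := by
  have hbridge : (eGraph (insert s(a,b) F)).IsBridge s(a,b) := by
    rw [SimpleGraph.isBridge_iff]
    · intro hr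
      apply hnr
      refine hr.mono (fun x y hxy => ?_)
      rcases hxy with ⟨hxy1, hxy2⟩
      rw [eGraph_adj]
      rw [SimpleGraph.fromEdgeSet_adj] at hxy2
      have : s(x,y) ∈ (insert s(a,b) F) := by
        rw [SimpleGraph.fromEdgeSet_adj] at hxy1; exact_mod_cast hxy1.1
      rcases Finset.mem_insert.1 this with h | h
      · exact absurd ⟨by simpa using h, hxy1.ne⟩ hxy2
      · exact ⟨h, hxy1.ne⟩
  intro v c hc
  by_cases hmem : s(a,b) ∈ c.edges
  · exact (SimpleGraph.isBridge_iff_forall_cycle_notMem (c.edges_subset_edgeSet hmem)).1 hbridge c hc hmem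
  · have hsub : ∀ e ∈ c.edges, e ∈ (eGraph F).edgeSet := by
      intro e he
      have h1 := c.edges_subset_edgeSet he
      rw [SimpleGraph.edgeSet_fromEdgeSet] at h1 ⊢
      refine ⟨?_, h1.2⟩
      rcases Finset.mem_insert.1 (by exact_mod_cast h1.1) with h | h
      · exact absurd (h ▸ he) hmem
      · exact_mod_cast h
    exact hac (c.transfer _ hsub) (hc.transfer hsub)

section union
variable {I₁ I₂ C : Finset (Fin N)} {F₁ : Finset (Sym2 (Fin N))}
  {B : Finset (Fin N)} {f : Fin N → Fin N}

/-- Characterization of reachability in the union of an internal forest and cross edges. -/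
lemma reach_union_iff
    (hdisj : Disjoint I₁ I₂)
    (hint : ∀ e ∈ F₁, ∀ v ∈ e, v ∈ I₁)
    (hB : B ⊆ I₁) (hf : ∀ b ∈ B, f b ∈ I₂)
    (H5 : ∀ b ∈ B, ∀ b' ∈ B, (eGraph F₁).Reachable b b' → b = b')
    {u v : Fin N} :
    (eGraph (F₁ ∪ B.image fun b => s(b, f b))).Reachable u v ↔
      ((eGraph F₁).Reachable u v
      ∨ (∃ b ∈ B, (eGraph F₁).Reachable u b ∧ v = f b)
      ∨ (∃ b ∈ B, u = f b ∧ (eGraph F₁).Reachable b v)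
      ∨ (∃ b ∈ B, ∃ b' ∈ B, f b = f b' ∧ (eGraph F₁).Reachable u b
          ∧ (eGraph F₁).Reachable b' v)) := by
  have hI₁ : ∀ a, a ∈ I₁ → a ∉ I₂ := fun a ha => Finset.disjoint_left.1 hdisj ha
  have hne : ∀ b ∈ B, b ≠ f b := fun b hb h =>
    hI₁ b (hB hb) (h ▸ hf b hb)
  set F : Finset (Sym2 (Fin N)) := F₁ ∪ B.image fun b => s(b, f b) with hF
  have hle : eGraph F₁ ≤ eGraph F := eGraph_mono Finset.subset_union_left
  have hcross : ∀ b ∈ B, (eGraph F).Adj b (f b) := fun b hb =>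
    eGraph_adj.2 ⟨Finset.mem_union_right _ (Finset.mem_image_of_mem _ hb), hne b hb⟩
  constructor
  · rintro ⟨p⟩
    induction p with
    | nil => exact Or.inl (Reachable.refl _)
    | @cons u x v hadj p ih =>
      rcases Finset.mem_union.1 (eGraph_adj.1 hadj).1 with hmem | hmem
      · have r1 : (eGraph F₁).Reachable u x := Adj.reachable (eGraph_adj.2 ⟨hmem, hadj.ne⟩)
        have hxI : x ∈ I₁ := hint _ hmem x (by simp)
        rcases ih with h | ⟨b, hb, hxb, hv⟩ | ⟨b, hb, hx, hbv⟩ | ⟨b, hb, b', hb', heq, hxb, hbv⟩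
        · exact Or.inl (r1.trans h)
        · exact Or.inr (Or.inl ⟨b, hb, r1.trans hxb, hv⟩)
        · exact absurd (hx ▸ hxI) (fun h => hI₁ _ h (hf b hb))
        · exact Or.inr (Or.inr (Or.inr ⟨b, hb, b', hb', heq, r1.trans hxb, hbv⟩))
      · obtain ⟨b₀, hb₀, he⟩ := Finset.mem_image.1 hmem
        rcases Sym2.eq_iff.1 he with ⟨hu, hx⟩ | ⟨hu, hx⟩
        · subst hu; subst hx
          have hxI2 : f b₀ ∈ I₂ := hf b₀ hb₀
          rcases ih with h | ⟨b, hb, hxb, hv⟩ | ⟨b, hb, hx, hbv⟩ | ⟨b, hb, b', hb', heq, hxb, hbv⟩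
          · have : v = f b₀ := isolated_of_internal hint (fun h' => hI₁ _ h' hxI2) h
            exact Or.inr (Or.inl ⟨b₀, hb₀, Reachable.refl _, this⟩)
          · have : b = f b₀ := isolated_of_internal hint (fun h' => hI₁ _ h' hxI2) hxb
            exact absurd (this ▸ hB hb) (fun h' => hI₁ _ h' hxI2)
          · exact Or.inr (Or.inr (Or.inr ⟨b₀, hb₀, b, hb, hx.symm ▸ rfl, Reachable.refl _, hbv⟩))
          · have : b = f b₀ := isolated_of_internal hint (fun h' => hI₁ _ h' hxI2) hxb
            exact absurd (this ▸ hB hb) (fun h' => hI₁ _ h' hxI2)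
        · subst hu; subst hx
          rcases ih with h | ⟨b, hb, hxb, hv⟩ | ⟨b, hb, hx, hbv⟩ | ⟨b, hb, b', hb', heq, hxb, hbv⟩
          · exact Or.inr (Or.inr (Or.inl ⟨b₀, hb₀, rfl, h⟩))
          · have hbb : b₀ = b := H5 _ hb₀ _ hb hxb
            subst hbb
            rw [hv]
            exact Or.inl (Reachable.refl _)
          · exact absurd (hx ▸ hB hb₀) (fun h' => hI₁ _ h' (hf b hb))
          · have hbb : b₀ = b := H5 _ hb₀ _ hb hxb
            subst hbb
            exact Or.inr (Or.inr (Or.inl ⟨b', hb', heq, hbv⟩))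
  · rintro (h | ⟨b, hb, hub, hv⟩ | ⟨b, hb, hu, hbv⟩ | ⟨b, hb, b', hb', heq, hub, hbv⟩)
    · exact h.mono hle
    · exact (hub.mono hle).trans (hv ▸ (hcross b hb).reachable)
    · exact (hu ▸ (hcross b hb).reachable.symm).trans (hbv.mono hle)
    · exact ((hub.mono hle).trans (hcross b hb).reachable).trans
        ((heq ▸ (hcross b' hb').reachable.symm).trans (hbv.mono hle))

lemma acyclic_union
    (hdisj : Disjoint I₁ I₂)
    (hint : ∀ e ∈ F₁, ∀ v ∈ e, v ∈ I₁)
    (hac : (eGraph F₁).IsAcyclic)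
    (hB : B ⊆ I₁) (hf : ∀ b ∈ B, f b ∈ I₂)
    (H5 : ∀ b ∈ B, ∀ b' ∈ B, (eGraph F₁).Reachable b b' → b = b') :
    (eGraph (F₁ ∪ B.image fun b => s(b, f b))).IsAcyclic := by
  have hI₁ : ∀ a, a ∈ I₁ → a ∉ I₂ := fun a ha => Finset.disjoint_left.1 hdisj ha
  induction B using Finset.induction_on with
  | empty => simpa using hac
  | @insert a s has ih =>
    have hB' : s ⊆ I₁ := fun x hx => hB (Finset.mem_insert_of_mem hx)
    have hf' : ∀ b ∈ s, f b ∈ I₂ := fun b hb => hf b (Finset.mem_insert_of_mem hb)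
    have H5' : ∀ b ∈ s, ∀ b' ∈ s, (eGraph F₁).Reachable b b' → b = b' :=
      fun b hb b' hb' h => H5 b (Finset.mem_insert_of_mem hb) b' (Finset.mem_insert_of_mem hb') h
    have haI : a ∈ I₁ := hB (Finset.mem_insert_self a s)
    have hane : a ≠ f a := fun h => hI₁ a haI (h ▸ hf a (Finset.mem_insert_self a s))
    rw [Finset.image_insert, Finset.union_insert]
    apply acyclic_insert hane _ (ih hB' hf' H5')
    rw [reach_union_iff hdisj hint hB' hf' H5']
    rintro (h | ⟨b, hb, hrb, hv⟩ | ⟨b, hb, hu, hbv⟩ | ⟨b, hb, b', hb', heq, hrb, hbv⟩)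
    · exact hane (isolated_of_internal hint
        (fun h' => hI₁ _ h' (hf a (Finset.mem_insert_self a s))) h.symm)
    · exact has ((H5 a (Finset.mem_insert_self a s) b (Finset.mem_insert_of_mem hb) hrb) ▸ hb)
    · exact hI₁ a haI (hu ▸ hf b (Finset.mem_insert_of_mem hb))
    · exact has ((H5 a (Finset.mem_insert_self a s) b (Finset.mem_insert_of_mem hb) hrb) ▸ hb)

lemma not_mem_sdiff_iff (hdisj : Disjoint I₁ I₂) (hcover : I₁ ∪ I₂ = Finset.univ)
    (w : Fin N) : w ∉ I₁ \ C ↔ (w ∈ I₂ ∨ w ∈ C) := by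
  have hw : w ∈ I₁ ∪ I₂ := hcover ▸ Finset.mem_univ w
  rw [Finset.mem_sdiff]
  constructor
  · intro h
    rcases Finset.mem_union.1 hw with h1 | h1
    · by_cases hc : w ∈ C
      · exact Or.inr hc
      · exact absurd ⟨h1, hc⟩ h
    · exact Or.inl h1
  · rintro (h1 | h1) ⟨h2, h3⟩
    · exact Finset.disjoint_left.1 hdisj h2 h1
    · exact h3 h1

lemma unique_root_union
    (hdisj : Disjoint I₁ I₂) (hcover : I₁ ∪ I₂ = Finset.univ)
    (hint : ∀ e ∈ F₁, ∀ v ∈ e, v ∈ I₁)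
    (hB : B ⊆ I₁) (hBC : Disjoint B C) (hf : ∀ b ∈ B, f b ∈ I₂)
    (H3 : ∀ v ∈ I₁, ∃! y, (eGraph F₁).Reachable v y ∧ y ∈ B ∪ C) (v : Fin N) :
    ∃! w, (eGraph (F₁ ∪ B.image fun b => s(b, f b))).Reachable v w ∧ w ∉ I₁ \ C := by
  have hI₁ : ∀ a, a ∈ I₁ → a ∉ I₂ := fun a ha => Finset.disjoint_left.1 hdisj ha
  have H5 : ∀ b ∈ B, ∀ b' ∈ B, (eGraph F₁).Reachable b b' → b = b' := by
    intro b hb b' hb' h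
    obtain ⟨y, _, hyu⟩ := H3 b (hB hb)
    rw [hyu b ⟨Reachable.refl _, Finset.mem_union_left _ hb⟩,
        hyu b' ⟨h, Finset.mem_union_left _ hb'⟩]
  have hRi := fun u v => reach_union_iff (I₂ := I₂) hdisj hint hB hf H5 (u := u) (v := v)
  have hout := not_mem_sdiff_iff (C := C) hdisj hcover
  by_cases hv : v ∈ I₁
  · obtain ⟨y, ⟨hry, hyBC⟩, hyuniq⟩ := H3 v hv
    rcases Finset.mem_union.1 hyBC with hyB | hyC
    · refine ⟨f y, ⟨(hRi v (f y)).2 (Or.inr (Or.inl ⟨y, hyB, hry, rfl⟩)),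
        (hout _).2 (Or.inl (hf y hyB))⟩, ?_⟩
      rintro w' ⟨hrw', hw'⟩
      rcases (hRi v w').1 hrw' with h | ⟨b, hb, hrb, hweq⟩ | ⟨b, hb, hveq, hbv⟩
        | ⟨b, hb, b', hb', heq, hrb, hbv⟩
      · rcases (hout _).1 hw' with h2 | h2
        · exact absurd (isolated_of_internal hint (fun h' => hI₁ _ h' h2) h.symm).symm
            (fun he => hI₁ v hv (he ▸ h2))
        · have := hyuniq w' ⟨h, Finset.mem_union_right _ h2⟩
          exact absurd (this ▸ h2) (fun hc => Finset.disjoint_left.1 hBC hyB (this ▸ hc))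
      · rw [hweq, hyuniq b ⟨hrb, Finset.mem_union_left _ hb⟩]
      · exact absurd hveq (fun he => hI₁ v hv (he ▸ hf b hb))
      · have hw'I₁ : w' ∈ I₁ := reach_mem_of_internal hint (hB hb') hbv
        rcases (hout _).1 hw' with h2 | h2
        · exact absurd hw'I₁ (fun h' => hI₁ _ h' h2)
        · obtain ⟨z, _, hzu⟩ := H3 b' (hB hb')
          have h3 := (hzu b' ⟨Reachable.refl _, Finset.mem_union_left _ hb'⟩).trans
            (hzu w' ⟨hbv, Finset.mem_union_right _ h2⟩).symm
          exact absurd (by rwa [h3] : b' ∈ C) (Finset.disjoint_left.1 hBC hb')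
    · refine ⟨y, ⟨(hRi v y).2 (Or.inl hry), (hout _).2 (Or.inr hyC)⟩, ?_⟩
      rintro w' ⟨hrw', hw'⟩
      rcases (hRi v w').1 hrw' with h | ⟨b, hb, hrb, hweq⟩ | ⟨b, hb, hveq, hbv⟩
        | ⟨b, hb, b', hb', heq, hrb, hbv⟩
      · rcases (hout _).1 hw' with h2 | h2
        · exact absurd (isolated_of_internal hint (fun h' => hI₁ _ h' h2) h.symm).symm
            (fun he => hI₁ v hv (he ▸ h2))
        · exact hyuniq w' ⟨h, Finset.mem_union_right _ h2⟩
      · have := hyuniq b ⟨hrb, Finset.mem_union_left _ hb⟩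
        exact absurd (this ▸ hb) (fun hc => Finset.disjoint_left.1 hBC hc hyC)
      · exact absurd hveq (fun he => hI₁ v hv (he ▸ hf b hb))
      · have := hyuniq b ⟨hrb, Finset.mem_union_left _ hb⟩
        exact absurd (this ▸ hb) (fun hc => Finset.disjoint_left.1 hBC hc hyC)
  · refine ⟨v, ⟨Reachable.refl _, (hout _).2 (Or.inl ?_)⟩, ?_⟩
    · rcases Finset.mem_union.1 (hcover ▸ Finset.mem_univ v) with h | h
      · exact absurd h hv
      · exact h
    · rintro w' ⟨hrw', hw'⟩
      rcases (hRi v w').1 hrw' with h | ⟨b, hb, hrb, hweq⟩ | ⟨b, hb, hveq, hbv⟩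
        | ⟨b, hb, b', hb', heq, hrb, hbv⟩
      · exact isolated_of_internal hint hv h
      · exact absurd ((isolated_of_internal hint hv hrb) ▸ hb) (fun h' => hv (hB h'))
      · have hw'I₁ : w' ∈ I₁ := reach_mem_of_internal hint (hB hb) hbv
        rcases (hout _).1 hw' with h2 | h2
        · exact absurd hw'I₁ (fun h' => hI₁ _ h' h2)
        · obtain ⟨z, _, hzu⟩ := H3 b (hB hb)
          have h3 := (hzu b ⟨Reachable.refl _, Finset.mem_union_left _ hb⟩).trans
            (hzu w' ⟨hbv, Finset.mem_union_right _ h2⟩).symm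
          exact absurd (by rwa [h3] : b ∈ C) (Finset.disjoint_left.1 hBC hb)
      · exact absurd ((isolated_of_internal hint hv hrb) ▸ hb) (fun h' => hv (hB h'))
end union

lemma exun_comp_iff {F : Finset (Sym2 (Fin N))} {P : Fin N → Prop} :
    (∀ c : (eGraph F).ConnectedComponent, ∃! v : Fin N, v ∈ c.supp ∧ P v) ↔
    (∀ v : Fin N, ∃! w, (eGraph F).Reachable v w ∧ P w) := by
  constructor
  · intro h v
    obtain ⟨w, ⟨hw1, hw2⟩, hu⟩ := h ((eGraph F).connectedComponentMk v)
    rw [ConnectedComponent.mem_supp_iff, ConnectedComponent.eq] at hw1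
    refine ⟨w, ⟨hw1.symm, hw2⟩, fun w' ⟨h1, h2⟩ => ?_⟩
    exact hu w' ⟨by rw [ConnectedComponent.mem_supp_iff, ConnectedComponent.eq]; exact h1.symm, h2⟩
  · intro h c
    refine ConnectedComponent.ind (fun v => ?_) c
    obtain ⟨w, ⟨hw1, hw2⟩, hu⟩ := h v
    refine ⟨w, ⟨by rw [ConnectedComponent.mem_supp_iff, ConnectedComponent.eq]; exact hw1.symm, hw2⟩,
      fun w' ⟨h1, h2⟩ => ?_⟩
    rw [ConnectedComponent.mem_supp_iff, ConnectedComponent.eq] at h1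
    exact hu w' ⟨h1.symm, h2⟩

lemma phiForest_iff {S : Finset (Fin N)} {F : Finset (Sym2 (Fin N))} :
    IsPhiForest S F ↔ ((∀ e ∈ F, ¬ e.IsDiag) ∧ (eGraph F).IsAcyclic ∧
      ∀ v : Fin N, ∃! w, (eGraph F).Reachable v w ∧ w ∉ S) := by
  unfold IsPhiForest
  rw [exun_comp_iff]

lemma tauForest_iff {I₁ Y : Finset (Fin N)} {F : Finset (Sym2 (Fin N))} :
    IsTauForest I₁ Y F ↔ ((∀ e ∈ F, ¬ e.IsDiag ∧ ∀ v ∈ e, v ∈ I₁) ∧ (eGraph F).IsAcyclic ∧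
      ∀ v ∈ I₁, ∃! y, (eGraph F).Reachable v y ∧ y ∈ Y) := by
  unfold IsTauForest
  refine and_congr Iff.rfl (and_congr Iff.rfl ⟨fun h v hv => ?_, fun h c hc => ?_⟩)
  · obtain ⟨w, ⟨hw1, hw2⟩, hu⟩ := h ((eGraph F).connectedComponentMk v)
      ⟨v, by rw [ConnectedComponent.mem_supp_iff], hv⟩
    rw [ConnectedComponent.mem_supp_iff, ConnectedComponent.eq] at hw1
    refine ⟨w, ⟨hw1.symm, hw2⟩, fun w' ⟨h1, h2⟩ => ?_⟩
    exact hu w' ⟨by rw [ConnectedComponent.mem_supp_iff, ConnectedComponent.eq]; exact h1.symm, h2⟩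
  · obtain ⟨v, hvc, hvI⟩ := hc
    rw [ConnectedComponent.mem_supp_iff] at hvc
    subst hvc
    obtain ⟨w, ⟨hw1, hw2⟩, hu⟩ := h v hvI
    refine ⟨w, ⟨by rw [ConnectedComponent.mem_supp_iff, ConnectedComponent.eq]; exact hw1.symm, hw2⟩,
      fun w' ⟨h1, h2⟩ => ?_⟩
    rw [ConnectedComponent.mem_supp_iff, ConnectedComponent.eq] at h1
    exact hu w' ⟨h1.symm, h2⟩

/-- The set of attachment vertices of `F` in `I₁`. -/
noncomputable def Bof (I₁ I₂ : Finset (Fin N)) (F : Finset (Sym2 (Fin N))) : Finset (Fin N) :=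
  I₁.filter (fun a => ∃ j, j ∈ I₂ ∧ s(a,j) ∈ F)
/-- The internal part of `F`. -/
noncomputable def F1of (I₁ : Finset (Fin N)) (F : Finset (Sym2 (Fin N))) :
    Finset (Sym2 (Fin N)) :=
  F.filter (fun e => ∀ v ∈ e, v ∈ I₁)
/-- The attachment map of `F`. -/
noncomputable def fof (I₂ : Finset (Fin N)) (F : Finset (Sym2 (Fin N))) : Fin N → Fin N :=
  fun a => if h : ∃ j, j ∈ I₂ ∧ s(a,j) ∈ F then h.choose else a

lemma fof_mem {I₁ I₂ : Finset (Fin N)} {F : Finset (Sym2 (Fin N))} (a : Fin N)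
    (ha : a ∈ Bof I₁ I₂ F) : fof I₂ F a ∈ I₂ ∧ s(a, fof I₂ F a) ∈ F := by
  obtain ⟨hbI₁, j, hj, hmem⟩ := Finset.mem_filter.1 ha
  rw [fof, dif_pos ⟨j, hj, hmem⟩]
  exact ⟨(Exists.choose_spec (⟨j, hj, hmem⟩ : ∃ j, j ∈ I₂ ∧ s(a,j) ∈ F)).1,
    (Exists.choose_spec (⟨j, hj, hmem⟩ : ∃ j, j ∈ I₂ ∧ s(a,j) ∈ F)).2⟩

lemma fof_eq_self {I₁ I₂ : Finset (Fin N)} {F : Finset (Sym2 (Fin N))}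
    (hcover : I₁ ∪ I₂ = Finset.univ) (a : Fin N)
    (hnF : ∀ u v : Fin N, u ∈ I₂ → v ∈ I₂ → s(u,v) ∉ F)
    (ha : a ∉ Bof I₁ I₂ F) : fof I₂ F a = a := by
  rw [fof]
  split_ifs with h
  · obtain ⟨j, hj, hmem⟩ := h
    exfalso
    rcases Finset.mem_union.1 (hcover ▸ Finset.mem_univ a) with h1 | h1
    · exact ha (Finset.mem_filter.2 ⟨h1, j, hj, hmem⟩)
    · exact hnF a j h1 hj hmem
  · rfl

section backward
variable {I₁ I₂ C : Finset (Fin N)} {F : Finset (Sym2 (Fin N))}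
  (hdisj : Disjoint I₁ I₂) (hcover : I₁ ∪ I₂ = Finset.univ) (hC : C ⊆ I₁)
  (hdiag : ∀ e ∈ F, ¬ e.IsDiag) (hac : (eGraph F).IsAcyclic)
  (hroot : ∀ v : Fin N, ∃! w, (eGraph F).Reachable v w ∧ w ∉ I₁ \ C)

include hdisj hcover hdiag hroot

lemma no_I₂_edge : ∀ u v : Fin N, u ∈ I₂ → v ∈ I₂ → s(u,v) ∉ F := by
  intro u v hu hv hmem
  have hne : u ≠ v := by
    intro h; exact hdiag _ hmem (by rw [h]; exact Sym2.mk_isDiag_iff.2 rfl)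
  obtain ⟨w, _, hu'⟩ := hroot u
  have h1 := hu' u ⟨Reachable.refl _, (not_mem_sdiff_iff hdisj hcover u).2 (Or.inl hu)⟩
  have h2 := hu' v ⟨(eGraph_adj.2 ⟨hmem, hne⟩).reachable,
    (not_mem_sdiff_iff hdisj hcover v).2 (Or.inl hv)⟩
  exact hne (h1.trans h2.symm)

lemma cross_unique : ∀ u j j' : Fin N, j ∈ I₂ → j' ∈ I₂ → s(u,j) ∈ F → s(u,j') ∈ F →
    j = j' := by
  intro u j j' hj hj' hm hm'
  have hne : u ≠ j := fun h =>
    hdiag _ hm (by rw [h]; exact Sym2.mk_isDiag_iff.2 rfl)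
  have hne' : u ≠ j' := fun h =>
    hdiag _ hm' (by rw [h]; exact Sym2.mk_isDiag_iff.2 rfl)
  obtain ⟨w, _, hu'⟩ := hroot u
  have h1 := hu' j ⟨(eGraph_adj.2 ⟨hm, hne⟩).reachable,
    (not_mem_sdiff_iff hdisj hcover j).2 (Or.inl hj)⟩
  have h2 := hu' j' ⟨(eGraph_adj.2 ⟨hm', hne'⟩).reachable,
    (not_mem_sdiff_iff hdisj hcover j').2 (Or.inl hj')⟩
  exact h1.trans h2.symm

omit hdiag in
lemma bof_not_in_C : ∀ b ∈ Bof I₁ I₂ F, b ∉ C := by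
  intro b hb hbC
  obtain ⟨hbI₁, j, hj, hmem⟩ := Finset.mem_filter.1 hb
  have hne : b ≠ j := fun h => Finset.disjoint_left.1 hdisj hbI₁ (h ▸ hj)
  obtain ⟨w, _, hu'⟩ := hroot b
  have h1 := hu' b ⟨Reachable.refl _, (not_mem_sdiff_iff hdisj hcover b).2 (Or.inr hbC)⟩
  have h2 := hu' j ⟨(eGraph_adj.2 ⟨hmem, hne⟩).reachable,
    (not_mem_sdiff_iff hdisj hcover j).2 (Or.inl hj)⟩
  exact Finset.disjoint_left.1 hdisj hbI₁ ((h1.trans h2.symm) ▸ hj)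

/-- The decomposition of a Φ-forest. -/
lemma phi_decomp :
    F = F1of I₁ F ∪ (Bof I₁ I₂ F).image (fun b => s(b, fof I₂ F b)) := by
  apply Finset.Subset.antisymm
  · intro e he
    induction e with
    | _ x y =>
      have hxy : x ≠ y := fun h =>
        hdiag _ he (by rw [h]; exact Sym2.mk_isDiag_iff.2 rfl)
      rcases Finset.mem_union.1 (hcover ▸ Finset.mem_univ x) with hx | hx
      · rcases Finset.mem_union.1 (hcover ▸ Finset.mem_univ y) with hy | hy
        · exact Finset.mem_union_left _ (Finset.mem_filter.2 ⟨he, by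
            intro v hv; rcases Sym2.mem_iff.1 hv with h | h <;> subst h <;> assumption⟩)
        · have hxB : x ∈ Bof I₁ I₂ F := Finset.mem_filter.2 ⟨hx, y, hy, he⟩
          have := fof_mem x hxB
          have heq : fof I₂ F x = y :=
            cross_unique hdisj hcover hdiag hroot x _ y this.1 hy this.2 he
          exact Finset.mem_union_right _ (Finset.mem_image.2 ⟨x, hxB, by rw [heq]⟩)
      · rcases Finset.mem_union.1 (hcover ▸ Finset.mem_univ y) with hy | hy
        · have he' : s(y, x) ∈ F := by rwa [Sym2.eq_swap]
          have hyB : y ∈ Bof I₁ I₂ F := Finset.mem_filter.2 ⟨hy, x, hx, he'⟩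
          have := fof_mem y hyB
          have heq : fof I₂ F y = x :=
            cross_unique hdisj hcover hdiag hroot y _ x this.1 hx this.2 he'
          exact Finset.mem_union_right _ (Finset.mem_image.2 ⟨y, hyB, by
            rw [heq, Sym2.eq_swap]⟩)
        · exact absurd he (no_I₂_edge hdisj hcover hdiag hroot x y hx hy)
  · intro e he
    rcases Finset.mem_union.1 he with h | h
    · exact Finset.filter_subset _ _ h
    · obtain ⟨b, hb, rfl⟩ := Finset.mem_image.1 h
      exact (fof_mem b hb).2

include hac in
lemma H5_of_phi : ∀ b ∈ Bof I₁ I₂ F, ∀ b' ∈ Bof I₁ I₂ F,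
    (eGraph (F1of I₁ F)).Reachable b b' → b = b' := by
  intro b hb b' hb' hr
  by_contra hne
  have hint₀ : ∀ e ∈ F1of I₁ F, ∀ v ∈ e, v ∈ I₁ := fun e he =>
    (Finset.mem_filter.1 he).2
  have hbI₁ : b ∈ I₁ := (Finset.mem_filter.1 hb).1
  have hb'I₁ : b' ∈ I₁ := (Finset.mem_filter.1 hb').1
  obtain ⟨hjI₂, hjm⟩ := fof_mem (I₁ := I₁) b hb
  obtain ⟨hj'I₂, hj'm⟩ := fof_mem (I₁ := I₁) b' hb'
  set j := fof I₂ F b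
  set j' := fof I₂ F b'
  have hbj : b ≠ j := fun h => Finset.disjoint_left.1 hdisj hbI₁ (h ▸ hjI₂)
  have hb'j' : b' ≠ j' := fun h => Finset.disjoint_left.1 hdisj hb'I₁ (h ▸ hj'I₂)
  have hrF : (eGraph F).Reachable b b' := hr.mono (eGraph_mono (Finset.filter_subset _ _))
  by_cases hjj : j = j'
  · obtain ⟨p⟩ := hr
    have hsub : ∀ e ∈ p.bypass.edges, e ∈ (eGraph F).edgeSet := fun e he =>
      SimpleGraph.edgeSet_mono (eGraph_mono (Finset.filter_subset _ _))
        (p.bypass.edges_subset_edgeSet he)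
    let P : (eGraph F).Walk b b' := p.bypass.transfer _ hsub
    have hP : P.IsPath := (Walk.bypass_isPath p).transfer hsub
    have hPsupp : ∀ w ∈ P.support, w ∈ I₁ := by
      intro w hw
      rw [Walk.support_transfer] at hw
      exact walk_support_internal hint₀ hbI₁ p w (p.support_bypass_subset hw)
    have hadj1 : (eGraph F).Adj b j := eGraph_adj.2 ⟨hjm, hbj⟩
    have hadj2 : (eGraph F).Adj j b' := by
      rw [hjj]
      exact (eGraph_adj.2 ⟨hj'm, hb'j'⟩).symm
    let Q : (eGraph F).Walk b b' := Walk.cons hadj1 (Walk.cons hadj2 Walk.nil)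
    have hQ : Q.IsPath := by
      rw [Walk.isPath_def]
      simp only [Q, Walk.support_cons, Walk.support_nil]
      refine List.nodup_cons.2 ⟨?_, List.nodup_cons.2 ⟨?_, List.nodup_singleton _⟩⟩
      · intro h
        rcases List.mem_cons.1 h with h1 | h1
        · exact hbj h1
        · exact hne (by simpa using h1)
      · intro h
        have : j = b' := by simpa using h
        exact Finset.disjoint_left.1 hdisj hb'I₁ (this ▸ hjI₂)
    have hPQ : (⟨P, hP⟩ : (eGraph F).Path b b') = ⟨Q, hQ⟩ :=
      isAcyclic_iff_path_unique.1 hac _ _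
    have hsupp : P.support = Q.support := by
      rw [Subtype.ext_iff] at hPQ
      exact congrArg Walk.support hPQ
    have hjP : j ∈ P.support := by
      rw [hsupp]
      simp [Q, Walk.support_cons]
    exact Finset.disjoint_left.1 hdisj (hPsupp j hjP) hjI₂
  · obtain ⟨w, _, hu'⟩ := hroot b
    have h1 := hu' j ⟨(eGraph_adj.2 ⟨hjm, hbj⟩).reachable,
      (not_mem_sdiff_iff hdisj hcover j).2 (Or.inl hjI₂)⟩
    have h2 := hu' j' ⟨hrF.trans (eGraph_adj.2 ⟨hj'm, hb'j'⟩).reachable,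
      (not_mem_sdiff_iff hdisj hcover j').2 (Or.inl hj'I₂)⟩
    exact hjj (h1.trans h2.symm)

include hC hac in
lemma H3_of_phi : ∀ v ∈ I₁, ∃! y, (eGraph (F1of I₁ F)).Reachable v y ∧
    y ∈ Bof I₁ I₂ F ∪ C := by
  have hint₀ : ∀ e ∈ F1of I₁ F, ∀ v ∈ e, v ∈ I₁ := fun e he =>
    (Finset.mem_filter.1 he).2
  have hB₀ : Bof I₁ I₂ F ⊆ I₁ := Finset.filter_subset _ _
  have hf₀ : ∀ b ∈ Bof I₁ I₂ F, fof I₂ F b ∈ I₂ := fun b hb =>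
    (fof_mem (I₁ := I₁) b hb).1
  have H5 := H5_of_phi hdisj hcover hdiag hac hroot
  have hdecomp := phi_decomp hdisj hcover hdiag hroot
  have hRi : ∀ u w : Fin N, (eGraph F).Reachable u w ↔
      ((eGraph (F1of I₁ F)).Reachable u w
      ∨ (∃ b ∈ Bof I₁ I₂ F, (eGraph (F1of I₁ F)).Reachable u b ∧ w = fof I₂ F b)
      ∨ (∃ b ∈ Bof I₁ I₂ F, u = fof I₂ F b ∧ (eGraph (F1of I₁ F)).Reachable b w)
      ∨ (∃ b ∈ Bof I₁ I₂ F, ∃ b' ∈ Bof I₁ I₂ F, fof I₂ F b = fof I₂ F b'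
          ∧ (eGraph (F1of I₁ F)).Reachable u b ∧ (eGraph (F1of I₁ F)).Reachable b' w)) := by
    intro u w
    conv_lhs => rw [hdecomp]
    exact reach_union_iff hdisj hint₀ hB₀ hf₀ H5
  have hcrossR : ∀ b ∈ Bof I₁ I₂ F, (eGraph F).Reachable b (fof I₂ F b) := by
    intro b hb
    have hbj : b ≠ fof I₂ F b := fun h =>
      Finset.disjoint_left.1 hdisj (hB₀ hb) (h ▸ hf₀ b hb)
    exact ((eGraph_adj.2 ⟨(fof_mem (I₁ := I₁) b hb).2, hbj⟩)).reachable
  intro v hv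
  obtain ⟨w, ⟨hrw, hwS⟩, hwu⟩ := hroot v
  rcases (not_mem_sdiff_iff hdisj hcover w).1 hwS with hwI₂ | hwC
  · rcases (hRi v w).1 hrw with h | ⟨b, hb, hrb, hweq⟩ | ⟨b, hb, hveq, hbw⟩
      | ⟨b, hb, b', hb', heq, hrb, hbw⟩
    · exact absurd (reach_mem_of_internal hint₀ hv h)
        (fun h' => Finset.disjoint_left.1 hdisj h' hwI₂)
    · refine ⟨b, ⟨hrb, Finset.mem_union_left _ hb⟩, ?_⟩
      rintro y' ⟨hry', hy'⟩
      rcases Finset.mem_union.1 hy' with hy'B | hy'C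
      · exact H5 y' hy'B b hb (hry'.symm.trans hrb)
      · have : y' = w := hwu y' ⟨hry'.mono (eGraph_mono (Finset.filter_subset _ _)),
          (not_mem_sdiff_iff hdisj hcover _).2 (Or.inr hy'C)⟩
        exact absurd (this ▸ hC hy'C) (fun h' => Finset.disjoint_left.1 hdisj h' hwI₂)
    · exact absurd hveq (fun h => Finset.disjoint_left.1 hdisj hv (h ▸ hf₀ b hb))
    · exact absurd (reach_mem_of_internal hint₀ (hB₀ hb') hbw)
        (fun h' => Finset.disjoint_left.1 hdisj h' hwI₂)
  · have hrv1 : (eGraph (F1of I₁ F)).Reachable v w := by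
      rcases (hRi v w).1 hrw with h | ⟨b, hb, hrb, hweq⟩ | ⟨b, hb, hveq, hbw⟩
        | ⟨b, hb, b', hb', heq, hrb, hbw⟩
      · exact h
      · exact absurd (hweq ▸ hC hwC) (fun h' =>
          Finset.disjoint_left.1 hdisj (hC hwC) (hweq ▸ hf₀ b hb))
      · exact absurd hveq (fun h => Finset.disjoint_left.1 hdisj hv (h ▸ hf₀ b hb))
      · exfalso
        obtain ⟨z, _, hzu⟩ := hroot b'
        have h1 := hzu w ⟨hbw.mono (eGraph_mono (Finset.filter_subset _ _)),
          (not_mem_sdiff_iff hdisj hcover _).2 (Or.inr hwC)⟩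
        have h2 := hzu (fof I₂ F b') ⟨hcrossR b' hb',
          (not_mem_sdiff_iff hdisj hcover _).2 (Or.inl (hf₀ b' hb'))⟩
        exact Finset.disjoint_left.1 hdisj (hC hwC) ((h1.trans h2.symm) ▸ hf₀ b' hb')
    refine ⟨w, ⟨hrv1, Finset.mem_union_right _ hwC⟩, ?_⟩
    rintro y' ⟨hry', hy'⟩
    rcases Finset.mem_union.1 hy' with hy'B | hy'C
    · have : fof I₂ F y' = w := hwu (fof I₂ F y')
        ⟨(hry'.mono (eGraph_mono (Finset.filter_subset _ _))).trans (hcrossR y' hy'B),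
          (not_mem_sdiff_iff hdisj hcover _).2 (Or.inl (hf₀ y' hy'B))⟩
      exact absurd (this ▸ hf₀ y' hy'B) (fun h' =>
        Finset.disjoint_left.1 hdisj (hC hwC) h')
    · exact hwu y' ⟨hry'.mono (eGraph_mono (Finset.filter_subset _ _)),
        (not_mem_sdiff_iff hdisj hcover _).2 (Or.inr hy'C)⟩
end backward

lemma edgeWeight_pair {J : Matrix (Fin N) (Fin N) ℝ} (hsym : J.IsSymm) (i j : Fin N) :
    edgeWeight J s(i,j) = J i j := by
  rw [edgeWeight, Sym2.inf_mk, Sym2.sup_mk]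
  rcases le_total i j with h | h
  · rw [inf_eq_left.2 h, sup_eq_right.2 h]
  · rw [inf_eq_right.2 h, sup_eq_left.2 h]
    exact hsym.apply i j

/-- Attachment maps `B → I₂`, normalized to the identity off `B`. -/
noncomputable def funSet (I₂ B : Finset (Fin N)) : Finset (Fin N → Fin N) :=
  Finset.univ.filter (fun f => (∀ b ∈ B, f b ∈ I₂) ∧ ∀ a, a ∉ B → f a = a)

lemma mem_funSet {I₂ B : Finset (Fin N)} {f : Fin N → Fin N} :
    f ∈ funSet I₂ B ↔ (∀ b ∈ B, f b ∈ I₂) ∧ ∀ a, a ∉ B → f a = a := by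
  simp [funSet]

lemma sigma_expand (J : Matrix (Fin N) (Fin N) ℝ) (I₂ B : Finset (Fin N)) :
    ∏ i ∈ B, ∑ j ∈ I₂, J i j = ∑ f ∈ funSet I₂ B, ∏ b ∈ B, J b (f b) := by
  induction B using Finset.induction_on with
  | empty =>
    have : funSet I₂ (∅ : Finset (Fin N)) = {fun a => a} := by
      ext f
      simp only [funSet, Finset.mem_filter, Finset.mem_univ, true_and,
        Finset.notMem_empty, Finset.mem_singleton]
      constructor
      · rintro ⟨-, h⟩
        exact funext (fun a => h a (by simp))
      · rintro rfl
        exact ⟨fun b hb => hb.elim, fun a _ => rfl⟩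
    simp [this]
  | @insert a s has ih =>
    rw [Finset.prod_insert has, ih, Finset.sum_mul_sum]
    rw [← Finset.sum_product']
    refine Finset.sum_nbij' (fun p => Function.update p.2 a p.1)
      (fun g => (g a, Function.update g a a)) ?_ ?_ ?_ ?_ ?_
    · rintro ⟨j, f⟩ hp
      rw [Finset.mem_product] at hp
      obtain ⟨hj, hf⟩ := hp
      dsimp only
      rw [mem_funSet] at hf ⊢
      refine ⟨fun b hb => ?_, fun c hc => ?_⟩
      · rcases Finset.mem_insert.1 hb with rfl | hb
        · simpa using hj
        · rw [Function.update_of_ne (fun h : b = a => has (h ▸ hb))]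
          exact hf.1 b hb
      · rw [Finset.mem_insert, not_or] at hc
        rw [Function.update_of_ne hc.1]
        exact hf.2 c hc.2
    · intro g hg
      rw [mem_funSet] at hg
      rw [Finset.mem_product]
      dsimp only
      refine ⟨hg.1 a (Finset.mem_insert_self a s), ?_⟩
      rw [mem_funSet]
      refine ⟨fun b hb => ?_, fun c hc => ?_⟩
      · rw [Function.update_of_ne (fun h : b = a => has (h ▸ hb))]
        exact hg.1 b (Finset.mem_insert_of_mem hb)
      · by_cases hca : c = a
        · subst hca; simp
        · rw [Function.update_of_ne hca]
          exact hg.2 c (by rw [Finset.mem_insert, not_or]; exact ⟨hca, hc⟩)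
    · rintro ⟨j, f⟩ hp
      rw [Finset.mem_product] at hp
      obtain ⟨-, hf⟩ := hp
      rw [mem_funSet] at hf
      dsimp only
      refine Prod.ext (by simp) ?_
      dsimp only
      funext x
      by_cases hxa : x = a
      · subst hxa
        rw [Function.update_self]
        exact (hf.2 x has).symm
      · rw [Function.update_of_ne hxa, Function.update_of_ne hxa]
    · intro g hg
      dsimp only
      funext x
      by_cases hxa : x = a
      · subst hxa; simp
      · rw [Function.update_of_ne hxa, Function.update_of_ne hxa]
    · rintro ⟨j, f⟩ hp
      rw [Finset.mem_product] at hp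
      obtain ⟨-, hf⟩ := hp
      rw [mem_funSet] at hf
      dsimp only
      rw [Finset.prod_insert has]
      simp only [Function.update_self]
      congr 1
      exact Finset.prod_congr rfl (fun b hb => by
        rw [Function.update_of_ne (fun h : b = a => has (h ▸ hb))])

lemma cross_disjoint {I₁ I₂ : Finset (Fin N)} {F₁ : Finset (Sym2 (Fin N))}
    {B : Finset (Fin N)} {f : Fin N → Fin N} (hdisj : Disjoint I₁ I₂)
    (hint : ∀ e ∈ F₁, ∀ v ∈ e, v ∈ I₁) (hf : ∀ b ∈ B, f b ∈ I₂) :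
    Disjoint F₁ (B.image fun b => s(b, f b)) := by
  rw [Finset.disjoint_right]
  intro e he heF₁
  obtain ⟨b, hb, rfl⟩ := Finset.mem_image.1 he
  exact Finset.disjoint_left.1 hdisj (hint _ heF₁ (f b) (by simp)) (hf b hb)

lemma prod_cross {J : Matrix (Fin N) (Fin N) ℝ} (hsym : J.IsSymm)
    {I₁ I₂ : Finset (Fin N)} {B : Finset (Fin N)} {f : Fin N → Fin N}
    (hdisj : Disjoint I₁ I₂) (hB : B ⊆ I₁) (hf : ∀ b ∈ B, f b ∈ I₂) :
    ∏ e ∈ B.image (fun b => s(b, f b)), edgeWeight J e = ∏ b ∈ B, J b (f b) := by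
  rw [Finset.prod_image]
  · exact Finset.prod_congr rfl (fun b _ => edgeWeight_pair hsym b (f b))
  · intro b hb b' hb' h
    rcases Sym2.eq_iff.1 h with ⟨h1, -⟩ | ⟨h1, h2⟩
    · exact h1
    · exact absurd (hB hb) (fun h' => Finset.disjoint_left.1 hdisj h' (h1 ▸ hf b' hb'))

end Aux

/-- **Forest expansion of `Φ` across a cut.**  With `V = I₁ ⊔ I₂`, `X` the set of boundary
vertices of `I₁`, for every `C ⊆ X` one has `Φ_{I₁ ∖ C} = ∑_{B ⊆ X ∖ C} σ_B · τ_{B ∪ C}`. -/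
theorem phi_expansion_across_cut (N : ℕ) (J : Matrix (Fin N) (Fin N) ℝ)
    (hsym : J.IsSymm)
    (I₁ I₂ : Finset (Fin N)) (h1 : I₁.Nonempty) (h2 : I₂.Nonempty)
    (hdisj : Disjoint I₁ I₂) (hcover : I₁ ∪ I₂ = Finset.univ)
    (X : Finset (Fin N)) (hX : X = I₁.filter fun i => ∃ j ∈ I₂, J i j ≠ 0) :
    ∀ C ⊆ X, Phi J (I₁ \ C)
      = ∑ B ∈ (X \ C).powerset, sigmaProd J I₂ B * tau J I₁ (B ∪ C) := by
  intro C hCX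
  have hXI₁ : X ⊆ I₁ := by rw [hX]; exact Finset.filter_subset _ _
  have hC : C ⊆ I₁ := hCX.trans hXI₁
  -- Step A: extend the sum from subsets of `X \ C` to subsets of `I₁ \ C`.
  have hstep1 : ∑ B ∈ (X \ C).powerset, sigmaProd J I₂ B * tau J I₁ (B ∪ C)
      = ∑ B ∈ (I₁ \ C).powerset, sigmaProd J I₂ B * tau J I₁ (B ∪ C) := by
    apply Finset.sum_subset
      (Finset.powerset_mono.2 (Finset.sdiff_subset_sdiff hXI₁ (le_refl C)))
    intro B hB hnB
    rw [Finset.mem_powerset] at hB hnB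
    obtain ⟨i, hiB, hiX⟩ := Finset.not_subset.1 hnB
    have hiI₁C := hB hiB
    rw [Finset.mem_sdiff] at hiI₁C
    have hiX' : i ∉ X := fun h => hiX (Finset.mem_sdiff.2 ⟨h, hiI₁C.2⟩)
    have hσ : ∑ j ∈ I₂, J i j = 0 := by
      apply Finset.sum_eq_zero
      intro j hj
      by_contra hne
      exact hiX' (hX ▸ Finset.mem_filter.2 ⟨hiI₁C.1, j, hj, hne⟩)
    rw [sigmaProd, Finset.prod_eq_zero hiB hσ, zero_mul]
  rw [hstep1]
  -- Step B: expand each summand.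
  have hstep2 : ∀ B : Finset (Fin N),
      sigmaProd J I₂ B * tau J I₁ (B ∪ C)
      = ∑ F₁ ∈ Finset.univ.filter (fun F₁ : Finset (Sym2 (Fin N)) =>
          IsTauForest I₁ (B ∪ C) F₁), ∑ f ∈ funSet I₂ B,
          (∏ b ∈ B, J b (f b)) * ∏ e ∈ F₁, edgeWeight J e := by
    intro B
    rw [sigmaProd, sigma_expand, tau, Finset.sum_mul_sum, Finset.sum_comm]
  rw [Finset.sum_congr rfl (fun B _ => hstep2 B)]
  rw [Finset.sum_sigma', Finset.sum_sigma']
  -- Step C: the main bijection.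
  rw [Phi]
  refine (Finset.sum_nbij'
    (fun y : Σ _ : (Σ _ : Finset (Fin N), Finset (Sym2 (Fin N))), (Fin N → Fin N) =>
      y.1.2 ∪ y.1.1.image (fun b => s(b, y.2 b)))
    (fun F => ⟨⟨Bof I₁ I₂ F, F1of I₁ F⟩, fof I₂ F⟩) ?_ ?_ ?_ ?_ ?_).symm
  · -- forward membership
    rintro ⟨⟨B, F₁⟩, f⟩ hy
    rw [Finset.mem_sigma, Finset.mem_sigma] at hy
    obtain ⟨⟨hBmem, hF₁mem⟩, hfmem⟩ := hy
    have hBsub : B ⊆ I₁ \ C := Finset.mem_powerset.1 hBmem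
    have hB : B ⊆ I₁ := hBsub.trans (Finset.sdiff_subset)
    have hBC : Disjoint B C := Finset.disjoint_left.2
      (fun b hb => (Finset.mem_sdiff.1 (hBsub hb)).2)
    have hf : ∀ b ∈ B, f b ∈ I₂ := (mem_funSet.1 hfmem).1
    obtain ⟨hedge, hac₁, H3⟩ := tauForest_iff.1 (Finset.mem_filter.1 hF₁mem).2
    have hint : ∀ e ∈ F₁, ∀ v ∈ e, v ∈ I₁ := fun e he => (hedge e he).2
    have H5 : ∀ b ∈ B, ∀ b' ∈ B, (eGraph F₁).Reachable b b' → b = b' := by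
      intro b hb b' hb' h
      obtain ⟨z, _, hzu⟩ := H3 b (hB hb)
      rw [hzu b ⟨SimpleGraph.Reachable.refl _, Finset.mem_union_left _ hb⟩,
          hzu b' ⟨h, Finset.mem_union_left _ hb'⟩]
    rw [Finset.mem_filter]
    refine ⟨Finset.mem_univ _, phiForest_iff.2 ⟨?_, ?_, ?_⟩⟩
    · intro e he
      rcases Finset.mem_union.1 he with h | h
      · exact (hedge e h).1
      · obtain ⟨b, hb, rfl⟩ := Finset.mem_image.1 h
        rw [Sym2.mk_isDiag_iff]
        exact fun h' => Finset.disjoint_left.1 hdisj (hB hb) (h' ▸ hf b hb)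
    · exact acyclic_union hdisj hint hac₁ hB hf H5
    · exact unique_root_union hdisj hcover hint hB hBC hf H3
  · -- backward membership
    intro F hF
    obtain ⟨hdiag, hac, hroot⟩ := phiForest_iff.1 (Finset.mem_filter.1 hF).2
    rw [Finset.mem_sigma, Finset.mem_sigma]
    refine ⟨⟨?_, ?_⟩, ?_⟩
    · rw [Finset.mem_powerset]
      intro b hb
      rw [Finset.mem_sdiff]
      exact ⟨(Finset.mem_filter.1 hb).1, bof_not_in_C hdisj hcover hroot b hb⟩
    · rw [Finset.mem_filter]
      refine ⟨Finset.mem_univ _, tauForest_iff.2 ⟨?_, ?_, ?_⟩⟩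
      · exact fun e he => ⟨hdiag e (Finset.filter_subset _ _ he), (Finset.mem_filter.1 he).2⟩
      · exact acyclic_anti (Finset.filter_subset _ _) hac
      · exact H3_of_phi hdisj hcover hC hdiag hac hroot
    · rw [mem_funSet]
      exact ⟨fun b hb => (fof_mem b hb).1,
        fun a ha => fof_eq_self hcover a (no_I₂_edge hdisj hcover hdiag hroot) ha⟩
  · -- left inverse
    rintro ⟨⟨B, F₁⟩, f⟩ hy
    rw [Finset.mem_sigma, Finset.mem_sigma] at hy
    obtain ⟨⟨hBmem, hF₁mem⟩, hfmem⟩ := hy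
    have hBsub : B ⊆ I₁ \ C := Finset.mem_powerset.1 hBmem
    have hB : B ⊆ I₁ := hBsub.trans (Finset.sdiff_subset)
    have hf : ∀ b ∈ B, f b ∈ I₂ := (mem_funSet.1 hfmem).1
    obtain ⟨hedge, hac₁, H3⟩ := tauForest_iff.1 (Finset.mem_filter.1 hF₁mem).2
    have hint : ∀ e ∈ F₁, ∀ v ∈ e, v ∈ I₁ := fun e he => (hedge e he).2
    set F : Finset (Sym2 (Fin N)) := F₁ ∪ B.image (fun b => s(b, f b)) with hFdef
    -- Bof F = B
    have e1 : Bof I₁ I₂ F = B := by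
      ext v
      rw [Bof, Finset.mem_filter]
      constructor
      · rintro ⟨hvI₁, j, hj, hmem⟩
        rcases Finset.mem_union.1 hmem with h | h
        · exact absurd (hint _ h j (by simp)) (fun h' => Finset.disjoint_left.1 hdisj h' hj)
        · obtain ⟨b, hb, he⟩ := Finset.mem_image.1 h
          rcases Sym2.eq_iff.1 he with ⟨h1, -⟩ | ⟨h1, h2⟩
          · exact h1 ▸ hb
          · exact absurd hvI₁ (fun h' => Finset.disjoint_left.1 hdisj h' (h2.symm ▸ hf b hb))
      · intro hv
        exact ⟨hB hv, f v, hf v hv,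
          Finset.mem_union_right _ (Finset.mem_image_of_mem _ hv)⟩
    -- F1of F = F₁
    have e2 : F1of I₁ F = F₁ := by
      ext e
      rw [F1of, Finset.mem_filter]
      constructor
      · rintro ⟨hmem, hin⟩
        rcases Finset.mem_union.1 hmem with h | h
        · exact h
        · obtain ⟨b, hb, rfl⟩ := Finset.mem_image.1 h
          exact absurd (hin (f b) (by simp)) (fun h' =>
            Finset.disjoint_left.1 hdisj h' (hf b hb))
      · intro he
        exact ⟨Finset.mem_union_left _ he, hint e he⟩
    -- fof F = f
    have hΦ : IsPhiForest (I₁ \ C) F := by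
      have hBC : Disjoint B C := Finset.disjoint_left.2
        (fun b hb => (Finset.mem_sdiff.1 (hBsub hb)).2)
      have H5 : ∀ b ∈ B, ∀ b' ∈ B, (eGraph F₁).Reachable b b' → b = b' := by
        intro b hb b' hb' h
        obtain ⟨z, _, hzu⟩ := H3 b (hB hb)
        rw [hzu b ⟨SimpleGraph.Reachable.refl _, Finset.mem_union_left _ hb⟩,
            hzu b' ⟨h, Finset.mem_union_left _ hb'⟩]
      refine phiForest_iff.2 ⟨?_, ?_, ?_⟩
      · intro e he
        rcases Finset.mem_union.1 he with h | h
        · exact (hedge e h).1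
        · obtain ⟨b, hb, rfl⟩ := Finset.mem_image.1 h
          rw [Sym2.mk_isDiag_iff]
          exact fun h' => Finset.disjoint_left.1 hdisj (hB hb) (h' ▸ hf b hb)
      · exact acyclic_union hdisj hint hac₁ hB hf H5
      · exact unique_root_union hdisj hcover hint hB hBC hf H3
    obtain ⟨hdiagF, hacF, hrootF⟩ := phiForest_iff.1 hΦ
    have e3 : fof I₂ F = f := by
      funext a
      by_cases ha : a ∈ B
      · have haB : a ∈ Bof I₁ I₂ F := e1.symm ▸ ha
        obtain ⟨hfo1, hfo2⟩ := fof_mem a haB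
        exact cross_unique hdisj hcover hdiagF hrootF a _ (f a) hfo1 (hf a ha) hfo2
          (Finset.mem_union_right _ (Finset.mem_image_of_mem _ ha))
      · rw [fof_eq_self hcover a (no_I₂_edge hdisj hcover hdiagF hrootF) (e1.symm ▸ ha)]
        exact ((mem_funSet.1 hfmem).2 a ha).symm
    exact Sigma.ext (Sigma.ext e1 (heq_of_eq e2)) (heq_of_eq e3)
  · -- right inverse
    intro F hF
    obtain ⟨hdiag, hac, hroot⟩ := phiForest_iff.1 (Finset.mem_filter.1 hF).2
    exact (phi_decomp hdisj hcover hdiag hroot).symm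
  · -- weights
    rintro ⟨⟨B, F₁⟩, f⟩ hy
    rw [Finset.mem_sigma, Finset.mem_sigma] at hy
    obtain ⟨⟨hBmem, hF₁mem⟩, hfmem⟩ := hy
    have hBsub : B ⊆ I₁ \ C := Finset.mem_powerset.1 hBmem
    have hB : B ⊆ I₁ := hBsub.trans (Finset.sdiff_subset)
    have hf : ∀ b ∈ B, f b ∈ I₂ := (mem_funSet.1 hfmem).1
    obtain ⟨hedge, -, -⟩ := tauForest_iff.1 (Finset.mem_filter.1 hF₁mem).2
    have hint : ∀ e ∈ F₁, ∀ v ∈ e, v ∈ I₁ := fun e he => (hedge e he).2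
    dsimp only
    rw [Finset.prod_union (cross_disjoint hdisj hint hf),
      prod_cross hsym hdisj hB hf, mul_comm]
end

section
/- Bridge criterion: let J be an N×N real symmetric matrix with zero row sums that is stable, and let G be the support graph of J. If {p,q} is an edge of G that lies on no cycle of G (equivalently, removing {p,q} disconnects p from q in G), then J_pq > 0. -/
open scoped Classical

/-- **Bridge criterion.**  Let `J` be real symmetric with zero row sums and stable, and let
`{p,q}` be an edge of the support graph of `J` lying on no cycle (i.e. deleting it
disconnects `p` from `q`).  Then `J p q > 0`. -/
theorem bridge_entry_pos_of_stable (N : ℕ) (J : Matrix (Fin N) (Fin N) ℝ)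
    (hsym : J.IsSymm) (hrow : ∀ i, ∑ j, J i j = 0) (hstab : IsStable J)
    (p q : Fin N) (hedge : (supportGraph J).Adj p q)
    (hbridge : ¬ ((supportGraph J).deleteEdges {s(p, q)}).Reachable p q) :
    0 < J p q := by
  classical
  set G' := (supportGraph J).deleteEdges {s(p, q)} with hG'
  set P : Fin N → Prop := fun v => G'.Reachable p v with hP
  have hJpq_ne : J p q ≠ 0 := by
    rcases hedge with ⟨hne, h | h⟩
    · exact h
    · rw [hsym.apply q p]; exact h
  have hPp : P p := SimpleGraph.Reachable.refl p
  have hPq : ¬ P q := hbridge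
  have key : ∀ i j, P i → ¬ P j → ¬(i = p ∧ j = q) → J i j = 0 := by
    intro i j hi hj hnot
    by_contra hJ
    have hij : i ≠ j := by rintro rfl; exact hj hi
    have hadj : (supportGraph J).Adj i j := ⟨hij, Or.inl hJ⟩
    have hne_edge : s(i, j) ≠ s(p, q) := by
      intro h
      rw [Sym2.eq_iff] at h
      rcases h with ⟨rfl, rfl⟩ | ⟨rfl, rfl⟩
      · exact hnot ⟨rfl, rfl⟩
      · exact hPq hi
    have hadj' : G'.Adj i j := by
      rw [hG', SimpleGraph.deleteEdges_adj]
      exact ⟨hadj, by simpa using hne_edge⟩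
    exact hj (hi.trans hadj'.reachable)
  set x : Fin N → ℝ := fun v => if P v then 1 else 0 with hx
  have hrowval : ∀ i, x i * (J.mulVec x) i = if i = p then -(J p q) else 0 := by
    intro i
    by_cases hi : P i
    · have h1 : (J.mulVec x) i = ∑ j, (if P j then J i j else 0) := by
        simp only [Matrix.mulVec, dotProduct, hx]
        exact Finset.sum_congr rfl fun j _ => by split_ifs <;> simp
      have h2 : (∑ j, (if P j then J i j else 0))
          = ∑ j, J i j - ∑ j, (if P j then 0 else J i j) := by
        rw [← Finset.sum_sub_distrib]
        exact Finset.sum_congr rfl fun j _ => by split_ifs <;> ring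
      have h3 : (∑ j, (if P j then (0:ℝ) else J i j))
          = if i = p then J p q else 0 := by
        by_cases hip : i = p
        · subst hip
          rw [if_pos rfl]
          rw [Finset.sum_eq_single q]
          · rw [if_neg hPq]
          · intro j _ hjq
            by_cases hPj : P j
            · rw [if_pos hPj]
            · rw [if_neg hPj]
              exact key i j hi hPj (fun h => hjq h.2)
          · simp
        · rw [if_neg hip]
          apply Finset.sum_eq_zero
          intro j _
          by_cases hPj : P j
          · rw [if_pos hPj]
          · rw [if_neg hPj]
            exact key i j hi hPj (fun h => hip h.1)
      have hxi : x i = 1 := if_pos hi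
      rw [hxi, one_mul, h1, h2, h3, hrow i]
      by_cases hip : i = p <;> simp [hip]
    · have hxi : x i = 0 := if_neg hi
      have hip : i ≠ p := fun h => hi (h ▸ hPp)
      rw [hxi, zero_mul, if_neg hip]
  have hquad : dotProduct x (J.mulVec x) = -(J p q) := by
    have h0 : dotProduct x (J.mulVec x) = ∑ i, x i * (J.mulVec x) i := rfl
    rw [h0, Finset.sum_congr rfl (fun i _ => hrowval i)]
    simp
  obtain ⟨-, hpsd'⟩ := Matrix.posSemidef_iff_dotProduct_mulVec.mp hstab.1
  have hpsd := hpsd' x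
  have hstar : star x = x := by funext v; simp
  rw [hstar, Matrix.neg_mulVec, dotProduct_neg, hquad, neg_neg] at hpsd
  exact lt_of_le_of_ne hpsd (Ne.symm hJpq_ne)
end
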